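/- arXiv:0712.1883 — 8 statements merged into one kernel-verified Lean document; each statement's English description precedes it below -/
import Mathlib

section
/- Let N ≥ 1, let g be a real symmetric N×N matrix, let u be a real N×N matrix with entries u^a{}_μ, and set G₀ := uᵀ g u. Let F : Matrix N N ℝ → ℝ be differentiable at G₀ with symmetric gradient there, i.e. writing T_{μν} := (∂F/∂G_{μν})(G₀) one has T_{μν} = T_{νμ}. Define L̃ : Matrix N N ℝ → ℝ by L̃(w) := F(wᵀ g w). Then for all indices μ, ν: Σ_a (∂L̃/∂u^a{}_μ)(u) · u^a{}_ν = 2 Σ_ρ T_{μρ} (G₀)_{ρν}. -/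
open Matrix BigOperators

/-- Norm on matrices (sup norm coming from the Pi structure); used to do calculus
on matrix-valued variables. -/
noncomputable instance matrixNormedAddCommGroup {α β : Type*} [Fintype α] [Fintype β] :
    NormedAddCommGroup (Matrix α β ℝ) :=
  inferInstanceAs (NormedAddCommGroup (α → β → ℝ))

noncomputable instance matrixNormedSpace {α β : Type*} [Fintype α] [Fintype β] :
    NormedSpace ℝ (Matrix α β ℝ) :=
  inferInstanceAs (NormedSpace ℝ (α → β → ℝ))

/-- Partial derivative `∂_μ f (x)` of a scalar function on `ℝ^N`. -/
noncomputable def pd {N : ℕ} (f : (Fin N → ℝ) → ℝ) (μ : Fin N) (x : Fin N → ℝ) : ℝ :=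
  fderiv ℝ f x (Pi.single μ 1)

/-- Jacobian matrix `(Df(x))^a{}_μ = ∂_μ f^a (x)` of a map `ℝ^N → ℝ^M`. -/
noncomputable def jac {N M : ℕ} (f : (Fin N → ℝ) → (Fin M → ℝ)) (x : Fin N → ℝ) :
    Matrix (Fin M) (Fin N) ℝ :=
  Matrix.of fun a μ => fderiv ℝ f x (Pi.single μ 1) a

/-!
Contracting `∂L̃/∂u^a{}_μ` with `u^a{}_ν` is the derivative of `L̃` at `u` in the direction
`u E_{νμ}`, where `E_{νμ}` is a matrix unit. By the chain rule this is
`DF(G₀)(G₀ E_{νμ} + (G₀ E_{νμ})ᵀ)`, as `G₀` is symmetric. A symmetric gradient makes `DF(G₀)` invariant under transposition, so the contraction equals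
`2 DF(G₀)(G₀ E_{νμ}) = 2 Σ_ρ T_{μρ} G₀_{ρν}`.
-/

theorem ContinuousLinearMap.hasFDerivAt_apply_self {𝕜 E F : Type*} [NontriviallyNormedField 𝕜]
    [NormedAddCommGroup E] [NormedSpace 𝕜 E] [NormedAddCommGroup F] [NormedSpace 𝕜 F]
    (B : E →L[𝕜] E →L[𝕜] F) (x : E) :
    HasFDerivAt (fun y => B y y) (B x + B.flip x) x :=
  B.hasFDerivAt_of_bilinear (hasFDerivAt_id x) (hasFDerivAt_id x)

namespace Matrix

variable {l m n R M Φ : Type*}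

theorem isBilinearMap_transpose_mul_mul [Fintype m] [CommSemiring R] (g : Matrix m m R) :
    IsBilinearMap R (fun x y : Matrix m n R => xᵀ * g * y) where
  add_left _ _ _ := by rw [transpose_add, Matrix.add_mul, Matrix.add_mul]
  smul_left _ _ _ := by rw [transpose_smul, Matrix.smul_mul, Matrix.smul_mul]
  add_right _ _ _ := Matrix.mul_add _ _ _
  smul_right _ _ _ := Matrix.mul_smul _ _ _

section Calculus

variable [Fintype m] [Fintype n]

theorem hasFDerivAt_transpose_mul_mul (g : Matrix m m ℝ) (u : Matrix m n ℝ) :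
    HasFDerivAt (fun w : Matrix m n ℝ => wᵀ * g * w)
      ((isBilinearMap_transpose_mul_mul g).toContinuousBilinearMap u
        + (isBilinearMap_transpose_mul_mul g).toContinuousBilinearMap.flip u) u :=
  (isBilinearMap_transpose_mul_mul g).toContinuousBilinearMap.hasFDerivAt_apply_self u

theorem fderiv_comp_transpose_mul_mul_apply {V : Type*} [NormedAddCommGroup V] [NormedSpace ℝ V]
    {F : Matrix n n ℝ → V} (g : Matrix m m ℝ) (u E : Matrix m n ℝ)
    (hF : DifferentiableAt ℝ F (uᵀ * g * u)) :
    fderiv ℝ (fun w => F (wᵀ * g * w)) u E =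
      fderiv ℝ F (uᵀ * g * u) (uᵀ * g * E + Eᵀ * g * u) := by
  have h : HasFDerivAt (fun w => F (wᵀ * g * w)) _ u :=
    hF.hasFDerivAt.comp (f := fun w : Matrix m n ℝ => wᵀ * g * w) u
      (hasFDerivAt_transpose_mul_mul g u)
  rw [h.fderiv]
  rfl

end Calculus

section LinearFunctionals

variable [AddCommMonoid M] [Fintype m] [Fintype n] [DecidableEq m] [DecidableEq n]

theorem map_eq_sum_smul_map_single [Semiring R] [Module R M] [FunLike Φ (Matrix m n R) M]
    [LinearMapClass Φ R (Matrix m n R) M] (φ : Φ) (A : Matrix m n R) :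
    φ A = ∑ i, ∑ j, A i j • φ (single i j 1) := by
  conv_lhs => rw [matrix_eq_sum_single A]
  simp only [map_sum, ← map_smul, smul_single, smul_eq_mul, mul_one]

omit [Fintype n] in
theorem mul_single_one_eq_sum [Fintype l] [DecidableEq l] [Semiring R] (A : Matrix l m R)
    (j : m) (k : n) :
    A * single j k (1 : R) = ∑ i, A i j • single i k 1 := by
  ext a b
  simp [mul_apply, single_apply, Matrix.sum_apply, ite_and]

omit [Fintype n] in
theorem map_mul_single_one [Fintype l] [DecidableEq l] [Semiring R] [Module R M]
    [FunLike Φ (Matrix l n R) M] [LinearMapClass Φ R (Matrix l n R) M] (φ : Φ)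
    (A : Matrix l m R) (j : m) (k : n) :
    φ (A * single j k (1 : R)) = ∑ i, A i j • φ (single i k 1) := by
  simp only [mul_single_one_eq_sum, map_sum, map_smul]

omit [Fintype m] [DecidableEq m] in
theorem map_transpose_eq_of_map_single [CommSemiring R] [Module R M]
    [FunLike Φ (Matrix n n R) M] [LinearMapClass Φ R (Matrix n n R) M] {φ : Φ}
    (hφ : ∀ i j, φ (single i j 1) = φ (single j i 1)) (A : Matrix n n R) :
    φ Aᵀ = φ A := by
  rw [map_eq_sum_smul_map_single φ Aᵀ, map_eq_sum_smul_map_single φ A, Finset.sum_comm]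
  simp only [transpose_apply, hφ]

end LinearFunctionals

end Matrix

theorem covariance_field_contraction_general
    {N : ℕ}
    (g u : Matrix (Fin N) (Fin N) ℝ) (hg : g.IsSymm)
    (F : Matrix (Fin N) (Fin N) ℝ → ℝ)
    (G₀ : Matrix (Fin N) (Fin N) ℝ) (hG₀ : G₀ = uᵀ * g * u)
    (hF : DifferentiableAt ℝ F G₀)
    (T : Fin N → Fin N → ℝ)
    (hT : ∀ μ ν, T μ ν = fderiv ℝ F G₀ (Matrix.single μ ν 1))
    (hTsymm : ∀ μ ν, T μ ν = T ν μ)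
    (Ltil : Matrix (Fin N) (Fin N) ℝ → ℝ)
    (hLtil : ∀ w, Ltil w = F (wᵀ * g * w)) :
    ∀ μ ν, ∑ a, fderiv ℝ Ltil u (Matrix.single a μ 1) * u a ν
      = 2 * ∑ ρ, T μ ρ * G₀ ρ ν := by
  intro μ ν
  set φ := fderiv ℝ F G₀
  set E : Matrix (Fin N) (Fin N) ℝ := single ν μ 1
  have hG₀_symm : G₀ᵀ = G₀ := by
    rw [hG₀, transpose_mul, transpose_mul, transpose_transpose, hg.eq, Matrix.mul_assoc]
  have hφ_symm (A : Matrix (Fin N) (Fin N) ℝ) : φ Aᵀ = φ A :=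
    map_transpose_eq_of_map_single (fun i j => by rw [← hT, ← hT, hTsymm]) A
  have hLtil_deriv : fderiv ℝ Ltil u = fderiv ℝ (fun w => F (wᵀ * g * w)) u := by
    rw [funext hLtil]
  calc ∑ a, fderiv ℝ Ltil u (single a μ 1) * u a ν
      = fderiv ℝ Ltil u (u * E) := by
        rw [map_mul_single_one]
        exact Finset.sum_congr rfl fun a _ => by rw [smul_eq_mul, mul_comm]
    _ = φ (G₀ * E + (G₀ * E)ᵀ) := by
        rw [hLtil_deriv, fderiv_comp_transpose_mul_mul_apply g u _ (hG₀ ▸ hF), ← hG₀]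
        congr 2
        · rw [hG₀]; simp only [Matrix.mul_assoc]
        · rw [transpose_mul, transpose_mul, hG₀_symm, hG₀]; simp only [Matrix.mul_assoc]
    _ = 2 * φ (G₀ * E) := by rw [map_add, hφ_symm, two_mul]
    _ = 2 * ∑ ρ, T μ ρ * G₀ ρ ν := by
        rw [map_mul_single_one]
        refine congrArg _ (Finset.sum_congr rfl fun ρ _ => ?_)
        rw [smul_eq_mul, ← hT, hTsymm, mul_comm]

/-- contraction identity for the covariance-field multimomenta.
If `G₀ = uᵀ g u`, `F` is differentiable at `G₀` with symmetric gradient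
`T μ ν := ∂F/∂G_{μν}(G₀)`, and `L̃(w) := F(wᵀ g w)`, then
`Σ_a ∂L̃/∂u^a{}_μ (u) · u^a{}_ν = 2 Σ_ρ T_{μρ} (G₀)_{ρν}`. -/
theorem covariance_field_contraction
    {N : ℕ} (hN : 1 ≤ N)
    (g u : Matrix (Fin N) (Fin N) ℝ) (hg : g.IsSymm)
    (F : Matrix (Fin N) (Fin N) ℝ → ℝ)
    (G₀ : Matrix (Fin N) (Fin N) ℝ) (hG₀ : G₀ = uᵀ * g * u)
    (hF : DifferentiableAt ℝ F G₀)
    (T : Fin N → Fin N → ℝ)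
    (hT : ∀ μ ν, T μ ν = fderiv ℝ F G₀ (Matrix.single μ ν 1))
    (hTsymm : ∀ μ ν, T μ ν = T ν μ)
    (Ltil : Matrix (Fin N) (Fin N) ℝ → ℝ)
    (hLtil : ∀ w, Ltil w = F (wᵀ * g * w)) :
    ∀ μ ν, ∑ a, fderiv ℝ Ltil u (Matrix.single a μ 1) * u a ν
      = 2 * ∑ ρ, T μ ρ * G₀ ρ ν :=
  covariance_field_contraction_general g u hg F G₀ hG₀ hF T hT hTsymm Ltil hLtil
end

section
/- Fix integers N ≥ 1 and m ≥ 1. Let L : ℝ^N × ℝ^m × Matrix m N ℝ × Matrix N N ℝ → ℝ be a function, written L(x, y, v, G). Let σ : ℝ^N → ℝ^N be a C^∞ diffeomorphism and let ψ : ℝ^N × ℝ^m → ℝ^m be smooth; define the lifted action on fields by (σ_Y φ)(x') := ψ(σ⁻¹(x'), φ(σ⁻¹(x'))) for smooth φ : ℝ^N → ℝ^m, and the push-forward of a matrix field G : ℝ^N → Matrix N N ℝ by (σ_* G)(x') := (Dσ⁻¹(x'))ᵀ G(σ⁻¹(x')) (Dσ⁻¹(x')). Assume the covariance property: for every smooth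 φ : ℝ^N → ℝ^m, every smooth G : ℝ^N → Matrix N N ℝ with symmetric values, and every x ∈ ℝ^N, L(σ(x), (σ_Y φ)(σ(x)), D(σ_Y φ)(σ(x)), (σ_* G)(σ(x))) · det Dσ(x) = L(x, φ(x), Dφ(x), G(x)). Fix a smooth map g : ℝ^N → Matrix N N ℝ with symmetric invertible values, and for a C^∞ diffeomorphism η : ℝ^N → ℝ^N define the parametrized Lagrangian L̃[φ, η](x) := L(x, φ(x), Dφ(x), Dη(x)ᵀ g(η(x)) Dη(x)). Then for every smooth φ, every C^∞ diffeomorphism η, and every x ∈ ℝ^N: L̃[σ_Y φ, η ∘ σ⁻¹](σ(x)) · det Dσ(x) = L̃[φ, η](x). -/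
open Matrix BigOperators

lemma aux_entry {N : ℕ} {α β : Type*} [Fintype α] [Fintype β]
    {f : (Fin N → ℝ) → Matrix α β ℝ} (hf : ContDiff ℝ (⊤ : ℕ∞) f) (i : α) (j : β) :
    ContDiff ℝ (⊤ : ℕ∞) (fun x => f x i j) :=
  contDiff_pi.mp (contDiff_pi.mp hf i) j

lemma aux_mul {N : ℕ} {α β γ : Type*} [Fintype α] [Fintype β] [Fintype γ]
    {f : (Fin N → ℝ) → Matrix α β ℝ} {h : (Fin N → ℝ) → Matrix β γ ℝ}
    (hf : ContDiff ℝ (⊤ : ℕ∞) f) (hh : ContDiff ℝ (⊤ : ℕ∞) h) :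
    ContDiff ℝ (⊤ : ℕ∞) (fun x => f x * h x) := by
  refine contDiff_pi.mpr fun i => contDiff_pi.mpr fun j => ?_
  simp only [Matrix.mul_apply]
  exact ContDiff.sum fun k _ => (aux_entry hf i k).mul (aux_entry hh k j)

lemma aux_transpose {N : ℕ} {α β : Type*} [Fintype α] [Fintype β]
    {f : (Fin N → ℝ) → Matrix α β ℝ} (hf : ContDiff ℝ (⊤ : ℕ∞) f) :
    ContDiff ℝ (⊤ : ℕ∞) (fun x => (f x)ᵀ) := by
  refine contDiff_pi.mpr fun j => contDiff_pi.mpr fun i => ?_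
  exact aux_entry hf i j

lemma aux_jac_smooth {N M : ℕ} {f : (Fin N → ℝ) → (Fin M → ℝ)} (hf : ContDiff ℝ (⊤ : ℕ∞) f) :
    ContDiff ℝ (⊤ : ℕ∞) (jac f) := by
  refine contDiff_pi.mpr fun a => contDiff_pi.mpr fun μ => ?_
  have h1 : ContDiff ℝ (⊤ : ℕ∞) (fderiv ℝ f) := hf.fderiv_right (by simp)
  have h2 : ContDiff ℝ (⊤ : ℕ∞) (fun x => fderiv ℝ f x (Pi.single μ 1)) :=
    h1.clm_apply contDiff_const
  exact (ContinuousLinearMap.proj (R := ℝ) (φ := fun _ : Fin M => ℝ) a).contDiff.comp h2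

lemma aux_jac_comp {N M : ℕ} {f : (Fin N → ℝ) → (Fin M → ℝ)} {s : (Fin N → ℝ) → (Fin N → ℝ)}
    (x : Fin N → ℝ) (hf : DifferentiableAt ℝ f (s x)) (hs : DifferentiableAt ℝ s x) :
    jac (f ∘ s) x = jac f (s x) * jac s x := by
  ext a μ
  have hcomp := fderiv_comp x hf hs
  simp only [jac, Matrix.of_apply, Matrix.mul_apply, hcomp, ContinuousLinearMap.coe_comp',
    Function.comp_apply]
  set v : Fin N → ℝ := fderiv ℝ s x (Pi.single μ 1) with hv
  have hvsum : v = ∑ k, v k • (Pi.single k 1 : Fin N → ℝ) := by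
    funext j
    simp [Pi.single_apply, Finset.sum_apply]
  calc fderiv ℝ f (s x) v a
      = fderiv ℝ f (s x) (∑ k, v k • (Pi.single k 1 : Fin N → ℝ)) a := by rw [← hvsum]
    _ = ∑ k, fderiv ℝ f (s x) (Pi.single k 1) a * v k := by
        rw [map_sum]
        simp only [ContinuousLinearMap.map_smul, Finset.sum_apply, Pi.smul_apply, smul_eq_mul]
        exact Finset.sum_congr rfl fun k _ => mul_comm _ _

/-- Theorem 1 of the paper: general covariance of the parametrized theory.
If the Lagrangian `L(x, y, v, G)` satisfies the covariance property with respect to a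
diffeomorphism `σ` (with lift `σ_Y` determined by `ψ` and push-forward of metrics), then the
parametrized Lagrangian `L̃[φ, η](x) := L(x, φ(x), Dφ(x), Dη(x)ᵀ g(η(x)) Dη(x))` satisfies
`L̃[σ_Y φ, η ∘ σ⁻¹](σ(x)) · det Dσ(x) = L̃[φ, η](x)`. -/
theorem parametrized_lagrangian_equivariance
    {N m : ℕ} (hN : 1 ≤ N) (hm : 1 ≤ m)
    (L : (Fin N → ℝ) × (Fin m → ℝ) × Matrix (Fin m) (Fin N) ℝ × Matrix (Fin N) (Fin N) ℝ → ℝ)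
    -- a C^∞ diffeomorphism σ of ℝ^N, with inverse σinv
    (σ σinv : (Fin N → ℝ) → (Fin N → ℝ))
    (hσ : ContDiff ℝ (⊤ : ℕ∞) σ) (hσinv : ContDiff ℝ (⊤ : ℕ∞) σinv)
    (hσl : ∀ x, σinv (σ x) = x) (hσr : ∀ x', σ (σinv x') = x')
    -- a smooth fiber action ψ, giving the lift σ_Y
    (ψ : (Fin N → ℝ) × (Fin m → ℝ) → (Fin m → ℝ)) (hψ : ContDiff ℝ (⊤ : ℕ∞) ψ)
    -- the lifted action on fields: (σ_Y φ)(x') := ψ(σ⁻¹(x'), φ(σ⁻¹(x')))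
    (sY : ((Fin N → ℝ) → (Fin m → ℝ)) → ((Fin N → ℝ) → (Fin m → ℝ)))
    (hsY : ∀ φ x', sY φ x' = ψ (σinv x', φ (σinv x')))
    -- the push-forward of matrix fields: (σ_* G)(x') := (Dσ⁻¹(x'))ᵀ G(σ⁻¹(x')) (Dσ⁻¹(x'))
    (push : ((Fin N → ℝ) → Matrix (Fin N) (Fin N) ℝ) → ((Fin N → ℝ) → Matrix (Fin N) (Fin N) ℝ))
    (hpush : ∀ G x', push G x' = (jac σinv x')ᵀ * G (σinv x') * jac σinv x')
    -- covariance property of L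
    (hcov : ∀ φ : (Fin N → ℝ) → (Fin m → ℝ), ContDiff ℝ (⊤ : ℕ∞) φ →
      ∀ G : (Fin N → ℝ) → Matrix (Fin N) (Fin N) ℝ, ContDiff ℝ (⊤ : ℕ∞) G → (∀ x, (G x).IsSymm) →
      ∀ x, L (σ x, sY φ (σ x), jac (sY φ) (σ x), push G (σ x)) * (jac σ x).det
            = L (x, φ x, jac φ x, G x))
    -- a fixed smooth fiber metric g with symmetric invertible values
    (g : (Fin N → ℝ) → Matrix (Fin N) (Fin N) ℝ) (hgsmooth : ContDiff ℝ (⊤ : ℕ∞) g)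
    (hgsymm : ∀ u, (g u).IsSymm) (hginv : ∀ u, IsUnit (g u).det)
    -- the parametrized Lagrangian L̃[φ, η](x) := L(x, φ(x), Dφ(x), Dη(x)ᵀ g(η(x)) Dη(x))
    (Ltil : ((Fin N → ℝ) → (Fin m → ℝ)) → ((Fin N → ℝ) → (Fin N → ℝ)) →
      (Fin N → ℝ) → ℝ)
    (hLtil : ∀ φ η x, Ltil φ η x = L (x, φ x, jac φ x, (jac η x)ᵀ * g (η x) * jac η x)) :
    ∀ φ : (Fin N → ℝ) → (Fin m → ℝ), ContDiff ℝ (⊤ : ℕ∞) φ →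
    ∀ η ηinv : (Fin N → ℝ) → (Fin N → ℝ), ContDiff ℝ (⊤ : ℕ∞) η → ContDiff ℝ (⊤ : ℕ∞) ηinv →
      (∀ x, ηinv (η x) = x) → (∀ u, η (ηinv u) = u) →
    ∀ x, Ltil (sY φ) (η ∘ σinv) (σ x) * (jac σ x).det = Ltil φ η x := by
  intro φ hφ η ηinv hη hηinv hl hr x
  have hjs : ContDiff ℝ (⊤ : ℕ∞) (jac η) := aux_jac_smooth hη
  have hG : ContDiff ℝ (⊤ : ℕ∞) (fun u => (jac η u)ᵀ * g (η u) * jac η u) :=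
    aux_mul (aux_mul (aux_transpose hjs) (hgsmooth.comp hη)) hjs
  have hGsymm : ∀ u, ((jac η u)ᵀ * g (η u) * jac η u).IsSymm := fun u => by
    show _ᵀ = _
    rw [Matrix.transpose_mul, Matrix.transpose_mul, Matrix.transpose_transpose,
      (hgsymm (η u)).eq, Matrix.mul_assoc]
  have key := hcov φ hφ _ hG hGsymm x
  have hjc : jac (η ∘ σinv) (σ x) = jac η x * jac σinv (σ x) := by
    rw [aux_jac_comp (σ x) ((hη.differentiable (by simp)) _) ((hσinv.differentiable (by simp)) _),
      hσl x]
  have hpt : (η ∘ σinv) (σ x) = η x := by simp [Function.comp, hσl x]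
  have hp : push (fun u => (jac η u)ᵀ * g (η u) * jac η u) (σ x)
      = (jac (η ∘ σinv) (σ x))ᵀ * g ((η ∘ σinv) (σ x)) * jac (η ∘ σinv) (σ x) := by
    rw [hpush, hσl x, hjc, hpt]
    simp [Matrix.transpose_mul, Matrix.mul_assoc]
  rw [hLtil, hLtil, ← key, hp]
end

section
/- Fix integers N ≥ 1 and m ≥ 1 and an open set U ⊆ ℝ^N. Let g : ℝ^N → Matrix N N ℝ be smooth with symmetric invertible values (entries g_{ab}), let η : U → ℝ^N be smooth with Dη(x) invertible for every x ∈ U, and let G(x) := Dη(x)ᵀ g(η(x)) Dη(x) be the pulled-back metric. Let L : ℝ^N × ℝ^m × Matrix m N ℝ × Matrix N N ℝ → ℝ be smooth, written L(x, y, v, G), with ∂L/∂G_{μν} = ∂L/∂G_{νμ} everywhere, and let φ : U → ℝ^m be smooth. Define 𝔗^{μν}(x) := 2 (∂L/∂G_{μν})(x, φ(x), Dφ(x), G(x)), Γ^ρ_{μν}(x) := ½ Σ_λ (G(x)⁻¹)^{ρλ} (∂_μ G_{λν} + ∂_ν G_{λμ} − ∂_λ G_{μν})(x), Λ(x, y,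 v, u, w) := L(x, y, v, wᵀ g(u) w), and E_a(x) := (∂Λ/∂u^a)(x, φ(x), Dφ(x), η(x), Dη(x)) − Σ_μ ∂_μ[ x ↦ (∂Λ/∂w^a{}_μ)(x, φ(x), Dφ(x), η(x), Dη(x)) ]. Assume the conservation identity: for every x ∈ U and every index ρ, Σ_μ ∂_μ 𝔗^{μρ}(x) + Σ_{μ,ν} Γ^ρ_{μν}(x) 𝔗^{μν}(x) = 0. Then E_a(x) = 0 for every x ∈ U and every index a; that is, the Euler–Lagrange equations for the covariance field η are vacuously satisfied. -/
open Matrix BigOperators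

-- AUX A : fderiv along a line
lemma gm_fderiv_line {E : Type*} [NormedAddCommGroup E] [NormedSpace ℝ E]
    {f : E → ℝ} {p v : E} {d : ℝ} (hf : DifferentiableAt ℝ f p)
    (h : HasDerivAt (fun t : ℝ => f (p + t • v)) d 0) : fderiv ℝ f p v = d := by
  have hline : HasDerivAt (fun t : ℝ => p + t • v) v 0 := by
    simpa using ((hasDerivAt_id (0 : ℝ)).smul_const v).const_add p
  have h2 : HasDerivAt (fun t : ℝ => f (p + t • v)) (fderiv ℝ f p v) 0 := by
    have h3 : HasFDerivAt f (fderiv ℝ f p) ((fun t : ℝ => p + t • v) 0) := by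
      simpa using hf.hasFDerivAt
    exact h3.comp_hasDerivAt 0 hline
  exact h2.unique h

-- AUX A' : hasDerivAt for a composition with a line (vector-valued)
lemma gm_line_hasDerivAt {E F : Type*} [NormedAddCommGroup E] [NormedSpace ℝ E]
    [NormedAddCommGroup F] [NormedSpace ℝ F]
    {f : E → F} {p v : E} (hf : DifferentiableAt ℝ f p) :
    HasDerivAt (fun t : ℝ => f (p + t • v)) (fderiv ℝ f p v) 0 := by
  have hline : HasDerivAt (fun t : ℝ => p + t • v) v 0 := by
    simpa using ((hasDerivAt_id (0 : ℝ)).smul_const v).const_add p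
  have h3 : HasFDerivAt f (fderiv ℝ f p) ((fun t : ℝ => p + t • v) 0) := by
    simpa using hf.hasFDerivAt
  exact h3.comp_hasDerivAt 0 hline

-- AUX B : expansion of a CLM on the fourth (matrix) slot
lemma gm_clm_expand {N m : ℕ}
    (ℓ : ((Fin N → ℝ) × (Fin m → ℝ) × Matrix (Fin m) (Fin N) ℝ
        × Matrix (Fin N) (Fin N) ℝ) →L[ℝ] ℝ)
    (M : Matrix (Fin N) (Fin N) ℝ) :
    ℓ (0, 0, 0, M) = ∑ μ, ∑ ν, M μ ν * ℓ (0, 0, 0, Matrix.single μ ν 1) := by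
  have hM : ((0, 0, 0, M) : (Fin N → ℝ) × (Fin m → ℝ) × Matrix (Fin m) (Fin N) ℝ
        × Matrix (Fin N) (Fin N) ℝ)
      = ∑ μ, ∑ ν, M μ ν • ((0, 0, 0, Matrix.single μ ν 1) : (Fin N → ℝ) × (Fin m → ℝ)
          × Matrix (Fin m) (Fin N) ℝ × Matrix (Fin N) (Fin N) ℝ) := by
    have h4 : M = ∑ μ, ∑ ν, M μ ν • Matrix.single μ ν (1:ℝ) := by
      conv_lhs => rw [Matrix.matrix_eq_sum_single M]
      refine Finset.sum_congr rfl fun μ _ => Finset.sum_congr rfl fun ν _ => ?_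
      rw [Matrix.smul_single, smul_eq_mul, mul_one]
    simp only [Prod.smul_mk, smul_zero]
    rw [Prod.ext_iff]; constructor
    · simp [Prod.fst_sum]
    rw [Prod.ext_iff]; constructor
    · simp [Prod.fst_sum, Prod.snd_sum]
    rw [Prod.ext_iff]; constructor
    · simp [Prod.fst_sum, Prod.snd_sum]
    · simp only [Prod.snd_sum]
      exact h4
  rw [hM, map_sum]
  refine Finset.sum_congr rfl fun μ _ => ?_
  rw [map_sum]
  refine Finset.sum_congr rfl fun ν _ => ?_
  rw [ℓ.map_smul, smul_eq_mul]

-- AUX C : pd rules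
lemma gm_pd_mul {N : ℕ} {f g : (Fin N → ℝ) → ℝ} {x : Fin N → ℝ} (μ : Fin N)
    (hf : DifferentiableAt ℝ f x) (hg : DifferentiableAt ℝ g x) :
    pd (fun y => f y * g y) μ x = pd f μ x * g x + f x * pd g μ x := by
  unfold pd
  rw [fderiv_fun_mul hf hg]
  simp only [ContinuousLinearMap.add_apply, ContinuousLinearMap.smul_apply, smul_eq_mul]
  ring

lemma gm_pd_sum {N : ℕ} {ι : Type*} (s : Finset ι) {f : ι → (Fin N → ℝ) → ℝ} {x : Fin N → ℝ}
    (μ : Fin N) (hf : ∀ i ∈ s, DifferentiableAt ℝ (f i) x) :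
    pd (fun y => ∑ i ∈ s, f i y) μ x = ∑ i ∈ s, pd (f i) μ x := by
  unfold pd
  rw [fderiv_fun_sum hf]
  simp [ContinuousLinearMap.sum_apply]

-- AUX : vector decomposition
lemma gm_vec_decomp {N : ℕ} (v : Fin N → ℝ) :
    v = ∑ d, v d • (Pi.single d (1:ℝ) : Fin N → ℝ) := by
  funext j
  rw [Finset.sum_apply]
  simp [Pi.single_apply]

-- AUX D : entry of an fderiv of a matrix-valued map
lemma gm_fderiv_entry {E : Type*} [NormedAddCommGroup E] [NormedSpace ℝ E]
    {α β : Type*} [Fintype α] [Fintype β] {f : E → Matrix α β ℝ} {x : E}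
    (hf : DifferentiableAt ℝ f x) (i : α) (j : β) (v : E) :
    fderiv ℝ (fun y => f y i j) x v = fderiv ℝ f x v i j := by
  have h1 := hf.hasFDerivAt
  have h2 := (hasFDerivAt_pi'.mp h1) i
  have h3 := (hasFDerivAt_pi'.mp h2) j
  rw [h3.fderiv]
  rfl

-- AUX D2 : matrix-valued HasDerivAt from entries
lemma gm_hasDerivAt_matrix {α β : Type*} [Fintype α] [Fintype β]
    {f : ℝ → Matrix α β ℝ} {f' : Matrix α β ℝ} {t : ℝ}
    (h : ∀ i j, HasDerivAt (fun s => f s i j) (f' i j) t) : HasDerivAt f f' t := by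
  rw [show f = fun s i => f s i from rfl]
  exact hasDerivAt_pi.mpr fun i => hasDerivAt_pi.mpr fun j => h i j

-- AUX E : triple product entry formula
lemma gm_tmul {N : ℕ} (A B C : Matrix (Fin N) (Fin N) ℝ) (i j : Fin N) :
    (Aᵀ * B * C) i j = ∑ b, ∑ c, A b i * B b c * C c j := by
  rw [Matrix.mul_apply]
  rw [show (∑ c, (Aᵀ * B) i c * C c j) = ∑ c, ∑ b, A b i * B b c * C c j from ?_]
  · exact Finset.sum_comm
  refine Finset.sum_congr rfl fun c _ => ?_
  rw [Matrix.mul_apply, Finset.sum_mul]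
  refine Finset.sum_congr rfl fun b _ => ?_
  rw [Matrix.transpose_apply]

-- AUX : differentiability from ContDiffOn on an open set
lemma gm_dAt {N : ℕ} {U : Set (Fin N → ℝ)} (hU : IsOpen U) {F' : Type*} [NormedAddCommGroup F']
    [NormedSpace ℝ F'] {f : (Fin N → ℝ) → F'} (hf : ContDiffOn ℝ (⊤ : ℕ∞) f U) {x : Fin N → ℝ}
    (hx : x ∈ U) : DifferentiableAt ℝ f x :=
  (hf.contDiffAt (hU.mem_nhds hx)).differentiableAt (by simp)

-- AUX : smoothness of the Jacobian on an open set
lemma gm_jac_smooth {N M : ℕ} {U : Set (Fin N → ℝ)} (hU : IsOpen U)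
    {f : (Fin N → ℝ) → (Fin M → ℝ)} (hf : ContDiffOn ℝ (⊤ : ℕ∞) f U) :
    ContDiffOn ℝ (⊤ : ℕ∞) (fun x' => jac f x') U ∧ ContDiffOn ℝ (⊤ : ℕ∞) (fun x' => fderiv ℝ f x') U := by
  have h1 : ContDiffOn ℝ (⊤ : ℕ∞) (fun x' => fderivWithin ℝ f U x') U :=
    hf.fderivWithin hU.uniqueDiffOn (by simp)
  have h2 : ContDiffOn ℝ (⊤ : ℕ∞) (fun x' => fderiv ℝ f x') U :=
    h1.congr fun x' hx' => (fderivWithin_of_isOpen hU hx').symm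
  refine ⟨?_, h2⟩
  refine contDiffOn_pi.mpr fun b => contDiffOn_pi.mpr fun ρ => ?_
  exact ((ContinuousLinearMap.proj b).comp
    (ContinuousLinearMap.apply ℝ (Fin M → ℝ) (Pi.single ρ (1:ℝ)))).contDiff.comp_contDiffOn h2

-- AUX : a sum-swap identity
lemma gm_swap {N : ℕ} (c X : Fin N → ℝ) (Q : Fin N → Fin N → ℝ) :
    (∑ σ, c σ * ((1/2:ℝ) * ∑ lam, Q σ lam * X lam))
      = (1/2:ℝ) * ∑ lam, (∑ σ, c σ * Q σ lam) * X lam := by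
  have e1 : ∀ σ, c σ * ((1/2:ℝ) * ∑ lam, Q σ lam * X lam)
      = ∑ lam, c σ * ((1/2:ℝ) * (Q σ lam * X lam)) := by
    intro σ
    rw [Finset.mul_sum, Finset.mul_sum]
  rw [Finset.sum_congr rfl fun σ _ => e1 σ, Finset.sum_comm, Finset.mul_sum]
  refine Finset.sum_congr rfl fun lam _ => ?_
  rw [Finset.sum_mul, Finset.mul_sum]
  exact Finset.sum_congr rfl fun σ _ => by ring


lemma gm_algebra {N : ℕ} (a : Fin N)
    (w wi h Tm : Matrix (Fin N) (Fin N) ℝ)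
    (S k : Fin N → Fin N → Fin N → ℝ)
    (D3 : Fin N → Fin N → Fin N → ℝ)
    (hh : ∀ b c, h b c = h c b)
    (hk : ∀ b ρ μ, k b ρ μ = k b μ ρ)
    (hTm : ∀ μ ν, Tm μ ν = Tm ν μ)
    (hw : ∀ b c, (∑ lam, w b lam * wi lam c) = if b = c then (1:ℝ) else 0)
    (hD3 : ∀ μ lam ν, D3 μ lam ν = ∑ b, ∑ c,
      (k b lam μ * h b c * w c ν + w b lam * (∑ d, S b c d * w d μ) * w c ν
        + w b lam * h b c * k c ν μ)) :
    (∑ μ, ∑ ν, (1/2 * Tm μ ν) * (∑ b, ∑ c, w b μ * S b c a * w c ν))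
    - (∑ μ, ∑ σ, (∑ b, ((∑ d, S a b d * w d μ) * w b σ + h a b * k b σ μ)) * Tm σ μ)
    + (∑ μ, ∑ ν, Tm μ ν * ((1/2) * ∑ lam, wi lam a *
        (D3 μ lam ν + D3 ν lam μ - D3 lam μ ν))) = 0 := by
  classical
  -- delta contraction helper
  have hb : ∀ X : Fin N → ℝ, (∑ b, (∑ lam, wi lam a * w b lam) * X b) = X a := by
    intro X
    rw [Finset.sum_eq_single a]
    · have h1 : (∑ lam, wi lam a * w a lam) = 1 := by
        have h2 := hw a a
        rw [if_pos rfl] at h2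
        rw [← h2]
        exact Finset.sum_congr rfl fun lam _ => mul_comm _ _
      rw [h1, one_mul]
    · intro b _ hba
      have h0 : (∑ lam, wi lam a * w b lam) = 0 := by
        have := hw b a
        rw [if_neg hba] at this
        rw [← this]
        exact Finset.sum_congr rfl fun lam _ => mul_comm _ _
      rw [h0, zero_mul]
    · intro habs
      exact absurd (Finset.mem_univ a) habs
  -- abbreviations
  set K : Fin N → Fin N → ℝ := fun b μ => ∑ lam, wi lam a * k b lam μ with hK
  set T1 : Fin N → Fin N → ℝ := fun μ ν => ∑ b, ∑ c, K b μ * (h b c * w c ν) with hT1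
  set T2 : Fin N → Fin N → ℝ := fun μ ν => ∑ c, (∑ d, S a c d * w d μ) * w c ν with hT2
  set T3 : Fin N → Fin N → ℝ := fun μ ν => ∑ c, h a c * k c ν μ with hT3
  set T4 : Fin N → Fin N → ℝ := fun μ ν => ∑ b, ∑ c, w b μ * S b c a * w c ν with hT4
  -- P1 : ∑_lam wi lam a * D3 μ lam ν = T1 + T2 + T3
  have P1 : ∀ μ ν, (∑ lam, wi lam a * D3 μ lam ν) = T1 μ ν + T2 μ ν + T3 μ ν := by
    intro μ ν
    have step : (∑ lam, wi lam a * D3 μ lam ν)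
        = ∑ b, ∑ c, (K b μ * (h b c * w c ν)
            + (∑ lam, wi lam a * w b lam) * ((∑ d, S b c d * w d μ) * w c ν)
            + (∑ lam, wi lam a * w b lam) * (h b c * k c ν μ)) := by
      simp only [hD3, Finset.mul_sum]
      rw [Finset.sum_comm]
      refine Finset.sum_congr rfl fun b _ => ?_
      rw [Finset.sum_comm]
      refine Finset.sum_congr rfl fun c _ => ?_
      simp only [hK, Finset.sum_mul, mul_add, Finset.sum_add_distrib]
      refine congrArg₂ _ (congrArg₂ _ ?_ ?_) ?_
      · exact Finset.sum_congr rfl fun lam _ => by ring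
      · refine Finset.sum_congr rfl fun lam _ => ?_
        simp only [Finset.mul_sum, Finset.sum_mul]
        exact Finset.sum_congr rfl fun d _ => by ring
      · exact Finset.sum_congr rfl fun lam _ => by ring
    rw [step]
    simp only [Finset.sum_add_distrib]
    congr 1
    · congr 1
      have : ∀ b : Fin N, (∑ c, (∑ lam, wi lam a * w b lam) * ((∑ d, S b c d * w d μ) * w c ν))
          = (∑ lam, wi lam a * w b lam) * (∑ c, (∑ d, S b c d * w d μ) * w c ν) := by
        intro b; rw [Finset.mul_sum]
      rw [Finset.sum_congr rfl fun b _ => this b, hb (fun b => ∑ c, (∑ d, S b c d * w d μ) * w c ν)]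
    · have : ∀ b : Fin N, (∑ c, (∑ lam, wi lam a * w b lam) * (h b c * k c ν μ))
          = (∑ lam, wi lam a * w b lam) * (∑ c, h b c * k c ν μ) := by
        intro b; rw [Finset.mul_sum]
      rw [Finset.sum_congr rfl fun b _ => this b, hb (fun b => ∑ c, h b c * k c ν μ)]
  -- P2 : ∑_lam wi lam a * D3 lam μ ν = T1 + T4 + T5', with T5' as below
  have P2 : ∀ μ ν, (∑ lam, wi lam a * D3 lam μ ν)
      = T1 μ ν + T4 μ ν + (∑ b, ∑ c, w b μ * h b c * K c ν) := by
    intro μ ν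
    have step : (∑ lam, wi lam a * D3 lam μ ν)
        = ∑ b, ∑ c, ((∑ lam, wi lam a * k b μ lam) * (h b c * w c ν)
            + (∑ d, S b c d * (∑ lam, wi lam a * w d lam)) * (w b μ * w c ν)
            + w b μ * h b c * (∑ lam, wi lam a * k c ν lam)) := by
      simp only [hD3, Finset.mul_sum]
      rw [Finset.sum_comm]
      refine Finset.sum_congr rfl fun b _ => ?_
      rw [Finset.sum_comm]
      refine Finset.sum_congr rfl fun c _ => ?_
      simp only [Finset.sum_mul, Finset.mul_sum, mul_add, Finset.sum_add_distrib]
      refine congrArg₂ _ (congrArg₂ _ ?_ ?_) ?_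
      · exact Finset.sum_congr rfl fun lam _ => by ring
      · rw [Finset.sum_comm]
        refine Finset.sum_congr rfl fun lam _ => Finset.sum_congr rfl fun d _ => by ring
      · exact Finset.sum_congr rfl fun lam _ => by ring
    rw [step]
    simp only [Finset.sum_add_distrib]
    congr 1
    · congr 1
      · -- first piece equals T1 via k-symmetry
        refine Finset.sum_congr rfl fun b _ => Finset.sum_congr rfl fun c _ => ?_
        have hkk : (∑ lam, wi lam a * k b μ lam) = K b μ :=
          Finset.sum_congr rfl fun lam _ => by rw [hk b μ lam]
        rw [hkk]
      · -- middle piece equals T4 via delta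
        refine Finset.sum_congr rfl fun b _ => Finset.sum_congr rfl fun c _ => ?_
        have hdel : ∀ d : Fin N, (∑ lam, wi lam a * w d lam) = if d = a then (1:ℝ) else 0 := by
          intro d
          rw [← hw d a]
          exact Finset.sum_congr rfl fun lam _ => mul_comm _ _
        simp only [hdel, mul_ite, mul_one, mul_zero]
        rw [Finset.sum_ite_eq' Finset.univ a (fun d => S b c d)]
        simp only [Finset.mem_univ, if_pos]
        ring
    · -- third piece equals T5'
      refine Finset.sum_congr rfl fun b _ => Finset.sum_congr rfl fun c _ => ?_
      have hkk : (∑ lam, wi lam a * k c ν lam) = K c ν :=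
        Finset.sum_congr rfl fun lam _ => by rw [hk c ν lam]
      rw [hkk]
  -- swapping lemma using symmetry of Tm
  have W : ∀ F : Fin N → Fin N → ℝ,
      (∑ μ, ∑ ν, Tm μ ν * F ν μ) = ∑ μ, ∑ ν, Tm μ ν * F μ ν := by
    intro F
    rw [Finset.sum_comm]
    exact Finset.sum_congr rfl fun μ _ => Finset.sum_congr rfl fun ν _ => by rw [hTm ν μ]
  -- T5 sum equals T1 sum
  have hT5T1 : (∑ μ, ∑ ν, Tm μ ν * (∑ b, ∑ c, w b μ * h b c * K c ν))
      = ∑ μ, ∑ ν, Tm μ ν * T1 μ ν := by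
    rw [W (fun μ ν => ∑ b, ∑ c, w b ν * h b c * K c μ)]
    · refine Finset.sum_congr rfl fun μ _ => Finset.sum_congr rfl fun ν _ => ?_
      congr 1
      rw [hT1, Finset.sum_comm]
      exact Finset.sum_congr rfl fun c _ => Finset.sum_congr rfl fun b _ => by
        rw [hh c b]; ring
  -- expand the Γ-term C
  have hC : (∑ μ, ∑ ν, Tm μ ν * ((1/2) * ∑ lam, wi lam a *
        (D3 μ lam ν + D3 ν lam μ - D3 lam μ ν)))
      = (∑ μ, ∑ ν, Tm μ ν * T2 μ ν) + (∑ μ, ∑ ν, Tm μ ν * T3 μ ν)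
        - (1/2) * ∑ μ, ∑ ν, Tm μ ν * T4 μ ν := by
    have expand : ∀ μ ν, Tm μ ν * ((1/2) * ∑ lam, wi lam a *
          (D3 μ lam ν + D3 ν lam μ - D3 lam μ ν))
        = (1/2) * (Tm μ ν * (T1 μ ν + T2 μ ν + T3 μ ν))
          + (1/2) * (Tm μ ν * (T1 ν μ + T2 ν μ + T3 ν μ))
          - (1/2) * (Tm μ ν * (T1 μ ν + T4 μ ν + (∑ b, ∑ c, w b μ * h b c * K c ν))) := by
      intro μ ν
      have : (∑ lam, wi lam a * (D3 μ lam ν + D3 ν lam μ - D3 lam μ ν))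
          = (∑ lam, wi lam a * D3 μ lam ν) + (∑ lam, wi lam a * D3 ν lam μ)
            - (∑ lam, wi lam a * D3 lam μ ν) := by
        simp only [mul_add, mul_sub, Finset.sum_add_distrib, Finset.sum_sub_distrib]
      rw [this, P1 μ ν, P1 ν μ, P2 μ ν]
      ring
    rw [Finset.sum_congr rfl fun μ _ => Finset.sum_congr rfl fun ν _ => expand μ ν]
    simp only [Finset.sum_add_distrib, Finset.sum_sub_distrib, ← Finset.mul_sum]
    have e1 : (∑ μ, ∑ ν, Tm μ ν * (T1 ν μ + T2 ν μ + T3 ν μ))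
        = ∑ μ, ∑ ν, Tm μ ν * (T1 μ ν + T2 μ ν + T3 μ ν) :=
      W (fun μ ν => T1 μ ν + T2 μ ν + T3 μ ν)
    rw [e1]
    have e2 : (∑ μ, ∑ ν, Tm μ ν * (T1 μ ν + T2 μ ν + T3 μ ν))
        = (∑ μ, ∑ ν, Tm μ ν * T1 μ ν) + (∑ μ, ∑ ν, Tm μ ν * T2 μ ν)
          + (∑ μ, ∑ ν, Tm μ ν * T3 μ ν) := by
      simp only [mul_add, Finset.sum_add_distrib]
    have e3 : (∑ μ, ∑ ν, Tm μ ν * (T1 μ ν + T4 μ ν + (∑ b, ∑ c, w b μ * h b c * K c ν)))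
        = (∑ μ, ∑ ν, Tm μ ν * T1 μ ν) + (∑ μ, ∑ ν, Tm μ ν * T4 μ ν)
          + (∑ μ, ∑ ν, Tm μ ν * (∑ b, ∑ c, w b μ * h b c * K c ν)) := by
      simp only [mul_add, Finset.sum_add_distrib]
    rw [e2, e3, hT5T1]
    ring
  -- expand the B-term
  have hB : (∑ μ, ∑ σ, (∑ b, ((∑ d, S a b d * w d μ) * w b σ + h a b * k b σ μ)) * Tm σ μ)
      = (∑ μ, ∑ ν, Tm μ ν * T2 μ ν) + (∑ μ, ∑ ν, Tm μ ν * T3 μ ν) := by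
    have : ∀ μ σ, (∑ b, ((∑ d, S a b d * w d μ) * w b σ + h a b * k b σ μ)) * Tm σ μ
        = Tm μ σ * T2 μ σ + Tm μ σ * T3 μ σ := by
      intro μ σ
      rw [hTm σ μ, hT2, hT3, Finset.sum_add_distrib]
      ring
    rw [Finset.sum_congr rfl fun μ _ => Finset.sum_congr rfl fun σ _ => this μ σ]
    simp only [Finset.sum_add_distrib]
  -- expand the A-term
  have hA : (∑ μ, ∑ ν, (1/2 * Tm μ ν) * (∑ b, ∑ c, w b μ * S b c a * w c ν))
      = (1/2) * ∑ μ, ∑ ν, Tm μ ν * T4 μ ν := by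
    have e : ∀ μ ν : Fin N, (1/2 * Tm μ ν) * (∑ b, ∑ c, w b μ * S b c a * w c ν)
        = (1/2:ℝ) * (Tm μ ν * T4 μ ν) := by
      intro μ ν
      show (1/2 * Tm μ ν) * (∑ b, ∑ c, w b μ * S b c a * w c ν)
        = (1/2:ℝ) * (Tm μ ν * (∑ b, ∑ c, w b μ * S b c a * w c ν))
      ring
    rw [Finset.sum_congr rfl fun μ _ => Finset.sum_congr rfl fun ν _ => e μ ν]
    simp only [← Finset.mul_sum]
  rw [hA, hB, hC]
  ring

/-- Corollary: if the covariant divergence of the SEM tensor density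
vanishes identically on `U` (the conservation identity), then the Euler–Lagrange
equations of the covariance field `η` are vacuously satisfied. -/
theorem covariance_field_EL_vacuous
    {N m : ℕ} (hN : 1 ≤ N) (hm : 1 ≤ m)
    (U : Set (Fin N → ℝ)) (hU : IsOpen U)
    -- the fiber metric g, smooth with symmetric invertible values
    (g : (Fin N → ℝ) → Matrix (Fin N) (Fin N) ℝ) (hgsmooth : ContDiff ℝ (⊤ : ℕ∞) g)
    (hgsymm : ∀ u, (g u).IsSymm) (hginv : ∀ u, IsUnit (g u).det)
    -- the covariance field η, smooth on U with invertible Jacobian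
    (η : (Fin N → ℝ) → (Fin N → ℝ)) (hη : ContDiffOn ℝ (⊤ : ℕ∞) η U)
    (hηjac : ∀ x ∈ U, IsUnit (jac η x).det)
    -- the pulled-back metric G = η*g
    (G : (Fin N → ℝ) → Matrix (Fin N) (Fin N) ℝ)
    (hG : ∀ x, G x = (jac η x)ᵀ * g (η x) * jac η x)
    -- the Lagrangian L(x, y, v, G), smooth with symmetric gradient in G
    (L : (Fin N → ℝ) × (Fin m → ℝ) × Matrix (Fin m) (Fin N) ℝ × Matrix (Fin N) (Fin N) ℝ → ℝ)
    (hL : ContDiff ℝ (⊤ : ℕ∞) L)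
    (hLsymm : ∀ p μ ν, fderiv ℝ L p (0, 0, 0, Matrix.single μ ν 1)
      = fderiv ℝ L p (0, 0, 0, Matrix.single ν μ 1))
    -- the matter fields φ, smooth on U
    (φ : (Fin N → ℝ) → (Fin m → ℝ)) (hφ : ContDiffOn ℝ (⊤ : ℕ∞) φ U)
    -- the Hilbert SEM tensor density 𝔗^{μν}(x) = 2 ∂L/∂G_{μν}(x, φ(x), Dφ(x), G(x))
    (T : Fin N → Fin N → (Fin N → ℝ) → ℝ)
    (hT : ∀ μ ν x, T μ ν x
      = 2 * fderiv ℝ L (x, φ x, jac φ x, G x) (0, 0, 0, Matrix.single μ ν 1))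
    -- the Christoffel symbols Γ^ρ_{μν} of the pulled-back metric G
    (Γ : Fin N → Fin N → Fin N → (Fin N → ℝ) → ℝ)
    (hΓ : ∀ ρ μ ν x, Γ ρ μ ν x = (1/2) * ∑ lam, (G x)⁻¹ ρ lam *
      (pd (fun x' => G x' lam ν) μ x + pd (fun x' => G x' lam μ) ν x
        - pd (fun x' => G x' μ ν) lam x))
    -- the parametrized Lagrangian Λ(x, y, v, u, w) := L(x, y, v, wᵀ g(u) w)
    (Λ : (Fin N → ℝ) × (Fin m → ℝ) × Matrix (Fin m) (Fin N) ℝ × (Fin N → ℝ)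
      × Matrix (Fin N) (Fin N) ℝ → ℝ)
    (hΛ : ∀ x y v u w, Λ (x, y, v, u, w) = L (x, y, v, wᵀ * g u * w))
    -- the Euler–Lagrange expression E_a of the covariance field η
    (E : Fin N → (Fin N → ℝ) → ℝ)
    (hE : ∀ a x, E a x
      = fderiv ℝ Λ (x, φ x, jac φ x, η x, jac η x) (0, 0, 0, Pi.single a 1, 0)
        - ∑ μ, pd (fun x' => fderiv ℝ Λ (x', φ x', jac φ x', η x', jac η x')
            (0, 0, 0, 0, Matrix.single a μ 1)) μ x)
    -- the conservation identity ∇_μ 𝔗^{μρ} = 0 on U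
    (hcons : ∀ x ∈ U, ∀ ρ,
      (∑ μ, pd (fun x' => T μ ρ x') μ x) + ∑ μ, ∑ ν, Γ ρ μ ν x * T μ ν x = 0) :
    ∀ x ∈ U, ∀ a, E a x = 0 := by
  intro x hx a
  classical
  -- ## basic differentiability facts
  have hLd : Differentiable ℝ L := hL.differentiable (by simp)
  have hgd : Differentiable ℝ g := hgsmooth.differentiable (by simp)
  obtain ⟨hjφmat, hdφ⟩ := gm_jac_smooth hU hφ
  obtain ⟨hjηmat, hdη⟩ := gm_jac_smooth hU hη
  have hjηe : ∀ (b ρ : Fin N), ContDiffOn ℝ (⊤ : ℕ∞) (fun x' => jac η x' b ρ) U :=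
    fun b ρ => contDiffOn_pi.mp (contDiffOn_pi.mp hjηmat b) ρ
  have hgηe : ∀ (b c : Fin N), ContDiffOn ℝ (⊤ : ℕ∞) (fun x' => g (η x') b c) U :=
    fun b c => contDiffOn_pi.mp (contDiffOn_pi.mp (hgsmooth.comp_contDiffOn hη) b) c
  have hGexp : ∀ (x' : Fin N → ℝ) (i j : Fin N),
      G x' i j = ∑ b, ∑ c, jac η x' b i * g (η x') b c * jac η x' c j := by
    intro x' i j
    rw [hG x']
    exact gm_tmul _ _ _ i j
  have hGe : ∀ i j : Fin N, ContDiffOn ℝ (⊤ : ℕ∞) (fun x' => G x' i j) U := by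
    intro i j
    refine ContDiffOn.congr ?_ (fun x' _ => hGexp x' i j)
    exact ContDiffOn.sum fun b _ => ContDiffOn.sum fun c _ =>
      ((hjηe b i).mul (hgηe b c)).mul (hjηe c j)
  have hGmat : ContDiffOn ℝ (⊤ : ℕ∞) G U :=
    contDiffOn_pi.mpr fun i => contDiffOn_pi.mpr fun j => hGe i j
  have hz : ContDiffOn ℝ (⊤ : ℕ∞) (fun x' => ((x', φ x', jac φ x', G x') : (Fin N → ℝ) × (Fin m → ℝ)
      × Matrix (Fin m) (Fin N) ℝ × Matrix (Fin N) (Fin N) ℝ)) U :=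
    (contDiffOn_id).prodMk (hφ.prodMk (hjφmat.prodMk hGmat))
  have hdL : ContDiff ℝ (⊤ : ℕ∞) (fderiv ℝ L) := hL.fderiv_right (by simp)
  have hPe : ∀ (M0 : Matrix (Fin N) (Fin N) ℝ), ContDiffOn ℝ (⊤ : ℕ∞)
      (fun x' => fderiv ℝ L (x', φ x', jac φ x', G x')
        ((0, 0, 0, M0) : (Fin N → ℝ) × (Fin m → ℝ) × Matrix (Fin m) (Fin N) ℝ
          × Matrix (Fin N) (Fin N) ℝ)) U := by
    intro M0
    exact (ContinuousLinearMap.apply ℝ ℝ ((0, 0, 0, M0) : (Fin N → ℝ) × (Fin m → ℝ)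
        × Matrix (Fin m) (Fin N) ℝ × Matrix (Fin N) (Fin N) ℝ)).contDiff.comp_contDiffOn
      (hdL.comp_contDiffOn hz)
  have hTe : ∀ ρ μ : Fin N, ContDiffOn ℝ (⊤ : ℕ∞) (fun x' => T ρ μ x') U := by
    intro ρ μ
    exact ContDiffOn.congr (contDiffOn_const.mul (hPe (Matrix.single ρ μ 1)))
      (fun x' _ => hT ρ μ x')
  have hce : ∀ σ : Fin N, ContDiffOn ℝ (⊤ : ℕ∞) (fun x' => ∑ b, g (η x') a b * jac η x' b σ) U :=
    fun σ => ContDiffOn.sum fun b _ => (hgηe a b).mul (hjηe b σ)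
  -- ## smoothness of Λ
  have hΛeq : Λ = fun p : (Fin N → ℝ) × (Fin m → ℝ) × Matrix (Fin m) (Fin N) ℝ × (Fin N → ℝ)
      × Matrix (Fin N) (Fin N) ℝ =>
      L (p.1, p.2.1, p.2.2.1, (p.2.2.2.2)ᵀ * g p.2.2.2.1 * p.2.2.2.2) := by
    funext p
    obtain ⟨x1, y1, v1, u1, w1⟩ := p
    exact hΛ x1 y1 v1 u1 w1
  have hu5 : ContDiff ℝ (⊤ : ℕ∞) (fun p : (Fin N → ℝ) × (Fin m → ℝ) × Matrix (Fin m) (Fin N) ℝ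
      × (Fin N → ℝ) × Matrix (Fin N) (Fin N) ℝ => p.2.2.2.1) :=
    contDiff_fst.comp (contDiff_snd.comp (contDiff_snd.comp contDiff_snd))
  have hw5 : ContDiff ℝ (⊤ : ℕ∞) (fun p : (Fin N → ℝ) × (Fin m → ℝ) × Matrix (Fin m) (Fin N) ℝ
      × (Fin N → ℝ) × Matrix (Fin N) (Fin N) ℝ => p.2.2.2.2) :=
    contDiff_snd.comp (contDiff_snd.comp (contDiff_snd.comp contDiff_snd))
  have hQentry : ∀ i j : Fin N, ContDiff ℝ (⊤ : ℕ∞) (fun p : (Fin N → ℝ) × (Fin m → ℝ)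
      × Matrix (Fin m) (Fin N) ℝ × (Fin N → ℝ) × Matrix (Fin N) (Fin N) ℝ =>
      ((p.2.2.2.2)ᵀ * g p.2.2.2.1 * p.2.2.2.2) i j) := by
    intro i j
    have hfun : (fun p : (Fin N → ℝ) × (Fin m → ℝ) × Matrix (Fin m) (Fin N) ℝ × (Fin N → ℝ)
        × Matrix (Fin N) (Fin N) ℝ => ((p.2.2.2.2)ᵀ * g p.2.2.2.1 * p.2.2.2.2) i j)
        = fun p : (Fin N → ℝ) × (Fin m → ℝ) × Matrix (Fin m) (Fin N) ℝ × (Fin N → ℝ)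
        × Matrix (Fin N) (Fin N) ℝ =>
          ∑ b, ∑ c, p.2.2.2.2 b i * g p.2.2.2.1 b c * p.2.2.2.2 c j :=
      funext fun p => gm_tmul _ _ _ i j
    rw [hfun]
    refine ContDiff.sum fun b _ => ContDiff.sum fun c _ => ContDiff.mul (ContDiff.mul ?_ ?_) ?_
    · exact (ContinuousLinearMap.proj i).contDiff.comp
        ((ContinuousLinearMap.proj b).contDiff.comp hw5)
    · exact (ContinuousLinearMap.proj c).contDiff.comp
        ((ContinuousLinearMap.proj b).contDiff.comp (hgsmooth.comp hu5))
    · exact (ContinuousLinearMap.proj j).contDiff.comp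
        ((ContinuousLinearMap.proj c).contDiff.comp hw5)
  have hQ : ContDiff ℝ (⊤ : ℕ∞) (fun p : (Fin N → ℝ) × (Fin m → ℝ) × Matrix (Fin m) (Fin N) ℝ
      × (Fin N → ℝ) × Matrix (Fin N) (Fin N) ℝ => (p.2.2.2.2)ᵀ * g p.2.2.2.1 * p.2.2.2.2) :=
    contDiff_pi.mpr fun i => contDiff_pi.mpr fun j => hQentry i j
  have hΛs : ContDiff ℝ (⊤ : ℕ∞) Λ := by
    rw [hΛeq]
    exact hL.comp (contDiff_fst.prodMk ((contDiff_fst.comp contDiff_snd).prodMk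
      ((contDiff_fst.comp (contDiff_snd.comp contDiff_snd)).prodMk hQ)))
  -- ## directional derivatives of Λ
  have dir_u : ∀ (x₁ : Fin N → ℝ) (y₁ : Fin m → ℝ) (v₁ : Matrix (Fin m) (Fin N) ℝ)
      (u₁ : Fin N → ℝ) (w₁ : Matrix (Fin N) (Fin N) ℝ),
      fderiv ℝ Λ (x₁, y₁, v₁, u₁, w₁) (0, 0, 0, (Pi.single a (1:ℝ) : Fin N → ℝ), 0)
        = fderiv ℝ L (x₁, y₁, v₁, w₁ᵀ * g u₁ * w₁)
            (0, 0, 0, w₁ᵀ * fderiv ℝ g u₁ ((Pi.single a (1:ℝ) : Fin N → ℝ)) * w₁) := by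
    intro x₁ y₁ v₁ u₁ w₁
    apply gm_fderiv_line (hΛs.differentiable (by simp) _)
    have heq : (fun t : ℝ => Λ ((x₁, y₁, v₁, u₁, w₁)
          + t • ((0, 0, 0, (Pi.single a (1:ℝ) : Fin N → ℝ), 0) : (Fin N → ℝ) × (Fin m → ℝ)
            × Matrix (Fin m) (Fin N) ℝ × (Fin N → ℝ) × Matrix (Fin N) (Fin N) ℝ)))
        = fun t : ℝ => L (x₁, y₁, v₁, w₁ᵀ * g (u₁ + t • (Pi.single a (1:ℝ) : Fin N → ℝ)) * w₁) := by
      funext t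
      rw [show ((x₁, y₁, v₁, u₁, w₁) + t • ((0, 0, 0, (Pi.single a (1:ℝ) : Fin N → ℝ), 0) : (Fin N → ℝ)
          × (Fin m → ℝ) × Matrix (Fin m) (Fin N) ℝ × (Fin N → ℝ)
          × Matrix (Fin N) (Fin N) ℝ))
          = (x₁, y₁, v₁, u₁ + t • (Pi.single a (1:ℝ) : Fin N → ℝ), w₁) from by
        simp [Prod.ext_iff]]
      exact hΛ _ _ _ _ _
    rw [heq]
    have hgline : HasDerivAt (fun t : ℝ => g (u₁ + t • (Pi.single a (1:ℝ) : Fin N → ℝ)))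
        (fderiv ℝ g u₁ ((Pi.single a (1:ℝ) : Fin N → ℝ))) 0 := gm_line_hasDerivAt (hgd u₁)
    have hij : ∀ b c : Fin N, HasDerivAt (fun t : ℝ => g (u₁ + t • (Pi.single a (1:ℝ) : Fin N → ℝ)) b c)
        (fderiv ℝ g u₁ ((Pi.single a (1:ℝ) : Fin N → ℝ)) b c) 0 :=
      fun b c => hasDerivAt_pi.mp (hasDerivAt_pi.mp hgline b) c
    have hmat : HasDerivAt (fun t : ℝ => w₁ᵀ * g (u₁ + t • (Pi.single a (1:ℝ) : Fin N → ℝ)) * w₁)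
        (w₁ᵀ * fderiv ℝ g u₁ ((Pi.single a (1:ℝ) : Fin N → ℝ)) * w₁) 0 := by
      apply gm_hasDerivAt_matrix
      intro i j
      have hfun : (fun t : ℝ => (w₁ᵀ * g (u₁ + t • (Pi.single a (1:ℝ) : Fin N → ℝ)) * w₁) i j)
          = fun t : ℝ => ∑ b, ∑ c, w₁ b i * g (u₁ + t • (Pi.single a (1:ℝ) : Fin N → ℝ)) b c * w₁ c j := by
        funext t
        exact gm_tmul _ _ _ i j
      have hval : (w₁ᵀ * fderiv ℝ g u₁ ((Pi.single a (1:ℝ) : Fin N → ℝ)) * w₁) i j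
          = ∑ b, ∑ c, w₁ b i * fderiv ℝ g u₁ ((Pi.single a (1:ℝ) : Fin N → ℝ)) b c * w₁ c j :=
        gm_tmul _ _ _ i j
      rw [hfun, hval]
      exact HasDerivAt.fun_sum fun b _ => HasDerivAt.fun_sum fun c _ =>
        ((hij b c).const_mul (w₁ b i)).mul_const (w₁ c j)
    have hγ : HasDerivAt (fun t : ℝ => (((x₁, y₁, v₁, w₁ᵀ * g (u₁ + t • (Pi.single a (1:ℝ) : Fin N → ℝ)) * w₁))
          : (Fin N → ℝ) × (Fin m → ℝ) × Matrix (Fin m) (Fin N) ℝ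
            × Matrix (Fin N) (Fin N) ℝ))
        ((0, 0, 0, w₁ᵀ * fderiv ℝ g u₁ ((Pi.single a (1:ℝ) : Fin N → ℝ)) * w₁)) 0 :=
      (hasDerivAt_const 0 x₁).prodMk ((hasDerivAt_const 0 y₁).prodMk
        ((hasDerivAt_const 0 v₁).prodMk hmat))
    have hcomp := (hLd ((x₁, y₁, v₁, w₁ᵀ * g (u₁ + (0:ℝ) • (Pi.single a (1:ℝ) : Fin N → ℝ))
        * w₁))).hasFDerivAt.comp_hasDerivAt 0 hγ
    simpa [Function.comp_def] using hcomp
  have dir_w : ∀ (x₁ : Fin N → ℝ) (y₁ : Fin m → ℝ) (v₁ : Matrix (Fin m) (Fin N) ℝ)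
      (u₁ : Fin N → ℝ) (w₁ : Matrix (Fin N) (Fin N) ℝ) (μ : Fin N),
      fderiv ℝ Λ (x₁, y₁, v₁, u₁, w₁) (0, 0, 0, 0, (Matrix.single a μ (1:ℝ)))
        = fderiv ℝ L (x₁, y₁, v₁, w₁ᵀ * g u₁ * w₁)
            (0, 0, 0, ((Matrix.single a μ (1:ℝ)))ᵀ * g u₁ * w₁
              + w₁ᵀ * g u₁ * (Matrix.single a μ (1:ℝ))) := by
    intro x₁ y₁ v₁ u₁ w₁ μ
    apply gm_fderiv_line (hΛs.differentiable (by simp) _)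
    have heq : (fun t : ℝ => Λ ((x₁, y₁, v₁, u₁, w₁)
          + t • ((0, 0, 0, 0, (Matrix.single a μ (1:ℝ))) : (Fin N → ℝ) × (Fin m → ℝ)
            × Matrix (Fin m) (Fin N) ℝ × (Fin N → ℝ) × Matrix (Fin N) (Fin N) ℝ)))
        = fun t : ℝ => L (x₁, y₁, v₁, (w₁ + t • (Matrix.single a μ (1:ℝ)))ᵀ * g u₁
            * (w₁ + t • (Matrix.single a μ (1:ℝ)))) := by
      funext t
      rw [show ((x₁, y₁, v₁, u₁, w₁) + t • ((0, 0, 0, 0, (Matrix.single a μ (1:ℝ)))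
          : (Fin N → ℝ) × (Fin m → ℝ) × Matrix (Fin m) (Fin N) ℝ × (Fin N → ℝ)
            × Matrix (Fin N) (Fin N) ℝ))
          = (x₁, y₁, v₁, u₁, w₁ + t • (Matrix.single a μ (1:ℝ))) from by
        simp [Prod.ext_iff]]
      exact hΛ _ _ _ _ _
    rw [heq]
    have haff : ∀ p q : Fin N, HasDerivAt
        (fun t : ℝ => w₁ p q + t * (Matrix.single a μ (1:ℝ)) p q)
        ((Matrix.single a μ (1:ℝ)) p q) 0 := by
      intro p q
      simpa using ((hasDerivAt_id (0:ℝ)).mul_const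
        ((Matrix.single a μ (1:ℝ)) p q)).const_add (w₁ p q)
    have hmat : HasDerivAt (fun t : ℝ => (w₁ + t • (Matrix.single a μ (1:ℝ)))ᵀ * g u₁
          * (w₁ + t • (Matrix.single a μ (1:ℝ))))
        (((Matrix.single a μ (1:ℝ)))ᵀ * g u₁ * w₁
          + w₁ᵀ * g u₁ * (Matrix.single a μ (1:ℝ))) 0 := by
      apply gm_hasDerivAt_matrix
      intro i j
      have hfun : (fun t : ℝ => ((w₁ + t • (Matrix.single a μ (1:ℝ)))ᵀ * g u₁
            * (w₁ + t • (Matrix.single a μ (1:ℝ)))) i j)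
          = fun t : ℝ => ∑ b, ∑ c, (w₁ b i + t * (Matrix.single a μ (1:ℝ)) b i)
              * g u₁ b c * (w₁ c j + t * (Matrix.single a μ (1:ℝ)) c j) := by
        funext t
        rw [gm_tmul]
        refine Finset.sum_congr rfl fun b _ => Finset.sum_congr rfl fun c _ => ?_
        simp [Matrix.add_apply, Matrix.smul_apply, Matrix.single, mul_ite]
      have hval : (((Matrix.single a μ (1:ℝ)))ᵀ * g u₁ * w₁
            + w₁ᵀ * g u₁ * (Matrix.single a μ (1:ℝ))) i j
          = ∑ b, ∑ c, ((Matrix.single a μ (1:ℝ)) b i * g u₁ b c * w₁ c j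
              + w₁ b i * g u₁ b c * (Matrix.single a μ (1:ℝ)) c j) := by
        rw [Matrix.add_apply, gm_tmul, gm_tmul]
        simp only [← Finset.sum_add_distrib]
      rw [hfun, hval]
      refine HasDerivAt.fun_sum fun b _ => HasDerivAt.fun_sum fun c _ => ?_
      have h3 := ((haff b i).mul_const (g u₁ b c)).mul (haff c j)
      have h4 : (Matrix.single a μ (1:ℝ)) b i * g u₁ b c * (w₁ c j + 0
            * (Matrix.single a μ (1:ℝ)) c j) + (w₁ b i + 0
            * (Matrix.single a μ (1:ℝ)) b i) * g u₁ b c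
            * (Matrix.single a μ (1:ℝ)) c j
          = (Matrix.single a μ (1:ℝ)) b i * g u₁ b c * w₁ c j
            + w₁ b i * g u₁ b c * (Matrix.single a μ (1:ℝ)) c j := by ring
      rw [← h4]
      exact h3
    have hγ : HasDerivAt (fun t : ℝ => (((x₁, y₁, v₁,
            (w₁ + t • (Matrix.single a μ (1:ℝ)))ᵀ * g u₁
              * (w₁ + t • (Matrix.single a μ (1:ℝ)))))
          : (Fin N → ℝ) × (Fin m → ℝ) × Matrix (Fin m) (Fin N) ℝ
            × Matrix (Fin N) (Fin N) ℝ))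
        ((0, 0, 0, ((Matrix.single a μ (1:ℝ)))ᵀ * g u₁ * w₁
          + w₁ᵀ * g u₁ * (Matrix.single a μ (1:ℝ)))) 0 :=
      (hasDerivAt_const 0 x₁).prodMk ((hasDerivAt_const 0 y₁).prodMk
        ((hasDerivAt_const 0 v₁).prodMk hmat))
    have hcomp := (hLd ((x₁, y₁, v₁, (w₁ + (0:ℝ) • (Matrix.single a μ (1:ℝ)))ᵀ * g u₁
        * (w₁ + (0:ℝ) • (Matrix.single a μ (1:ℝ)))))).hasFDerivAt.comp_hasDerivAt 0 hγ
    simpa [Function.comp_def] using hcomp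
  -- ## symmetry of T
  have hTsymm : ∀ (μ ν : Fin N) (x' : Fin N → ℝ), T μ ν x' = T ν μ x' := by
    intro μ ν x'
    rw [hT μ ν x', hT ν μ x', hLsymm]
  -- ## entry formulas for stdBasisMatrix products
  have hstd : ∀ (μ b q : Fin N), Matrix.single a μ (1:ℝ) b q
      = if a = b ∧ μ = q then 1 else 0 := fun μ b q => rfl
  have hstdL : ∀ (h' w' : Matrix (Fin N) (Fin N) ℝ) (μ ρ σ : Fin N),
      ((Matrix.single a μ (1:ℝ))ᵀ * h' * w') ρ σ
        = if ρ = μ then (∑ b, h' a b * w' b σ) else 0 := by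
    intro h' w' μ ρ σ
    rw [gm_tmul]
    by_cases hρ : ρ = μ
    · rw [if_pos hρ]
      have h5 : ∀ b c : Fin N, Matrix.single a μ (1:ℝ) b ρ * h' b c * w' c σ
          = (if a = b then (1:ℝ) else 0) * (h' b c * w' c σ) := by
        intro b c
        rw [hstd, if_congr (and_iff_left hρ.symm) rfl rfl]
        ring
      rw [Finset.sum_congr rfl fun b _ => Finset.sum_congr rfl fun c _ => h5 b c]
      rw [Finset.sum_eq_single a]
      · simp
      · intro b _ hba
        refine Finset.sum_eq_zero fun c _ => ?_
        rw [if_neg fun h => hba h.symm, zero_mul]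
      · intro h; exact absurd (Finset.mem_univ a) h
    · rw [if_neg hρ]
      refine Finset.sum_eq_zero fun b _ => Finset.sum_eq_zero fun c _ => ?_
      rw [hstd, if_neg fun h => hρ h.2.symm, zero_mul, zero_mul]
  have hstdR : ∀ (h' w' : Matrix (Fin N) (Fin N) ℝ) (μ ρ σ : Fin N),
      (w'ᵀ * h' * (Matrix.single a μ (1:ℝ))) ρ σ
        = if σ = μ then (∑ b, w' b ρ * h' b a) else 0 := by
    intro h' w' μ ρ σ
    rw [gm_tmul]
    by_cases hσ : σ = μ
    · rw [if_pos hσ]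
      refine Finset.sum_congr rfl fun b _ => ?_
      rw [Finset.sum_eq_single a]
      · rw [hstd, if_pos ⟨rfl, hσ.symm⟩, mul_one]
      · intro c _ hca
        rw [hstd, if_neg fun h => hca h.1.symm, mul_zero]
      · intro h; exact absurd (Finset.mem_univ a) h
    · rw [if_neg hσ]
      refine Finset.sum_eq_zero fun b _ => Finset.sum_eq_zero fun c _ => ?_
      rw [hstd, if_neg fun h => hσ h.2.symm, mul_zero]
  -- ## the w-direction formula at field points
  have hBform : ∀ (x' : Fin N → ℝ) (μ : Fin N),
      fderiv ℝ Λ (x', φ x', jac φ x', η x', jac η x')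
          (0, 0, 0, 0, Matrix.single a μ 1)
        = ∑ σ, (∑ b, g (η x') a b * jac η x' b σ) * T σ μ x' := by
    intro x' μ
    rw [dir_w x' (φ x') (jac φ x') (η x') (jac η x') μ]
    rw [show (jac η x')ᵀ * g (η x') * jac η x' = G x' from (hG x').symm]
    rw [gm_clm_expand]
    have step1 : ∀ ρ σ : Fin N,
        ((Matrix.single a μ (1:ℝ))ᵀ * g (η x') * jac η x'
          + (jac η x')ᵀ * g (η x') * (Matrix.single a μ (1:ℝ))) ρ σ
          * fderiv ℝ L (x', φ x', jac φ x', G x') (0, 0, 0, Matrix.single ρ σ 1)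
        = (if ρ = μ then (∑ b, g (η x') a b * jac η x' b σ) else 0)
            * fderiv ℝ L (x', φ x', jac φ x', G x') (0, 0, 0, Matrix.single ρ σ 1)
          + (if σ = μ then (∑ b, jac η x' b ρ * g (η x') b a) else 0)
            * fderiv ℝ L (x', φ x', jac φ x', G x') (0, 0, 0, Matrix.single ρ σ 1) := by
      intro ρ σ
      rw [Matrix.add_apply, hstdL, hstdR, add_mul]
    rw [Finset.sum_congr rfl fun ρ _ => Finset.sum_congr rfl fun σ _ => step1 ρ σ]
    rw [Finset.sum_congr rfl fun ρ (_ : ρ ∈ Finset.univ) => Finset.sum_add_distrib,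
      Finset.sum_add_distrib]
    have hS1 : (∑ ρ, ∑ σ, (if ρ = μ then (∑ b, g (η x') a b * jac η x' b σ) else 0)
          * fderiv ℝ L (x', φ x', jac φ x', G x') (0, 0, 0, Matrix.single ρ σ 1))
        = ∑ σ, (∑ b, g (η x') a b * jac η x' b σ)
            * fderiv ℝ L (x', φ x', jac φ x', G x') (0, 0, 0, Matrix.single σ μ 1) := by
      rw [Finset.sum_comm]
      refine Finset.sum_congr rfl fun σ _ => ?_
      simp only [ite_mul, zero_mul]
      rw [Finset.sum_ite_eq' Finset.univ μ]
      rw [if_pos (Finset.mem_univ μ)]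
      rw [hLsymm]
    have hS2 : (∑ ρ, ∑ σ, (if σ = μ then (∑ b, jac η x' b ρ * g (η x') b a) else 0)
          * fderiv ℝ L (x', φ x', jac φ x', G x') (0, 0, 0, Matrix.single ρ σ 1))
        = ∑ ρ, (∑ b, g (η x') a b * jac η x' b ρ)
            * fderiv ℝ L (x', φ x', jac φ x', G x') (0, 0, 0, Matrix.single ρ μ 1) := by
      refine Finset.sum_congr rfl fun ρ _ => ?_
      simp only [ite_mul, zero_mul]
      rw [Finset.sum_ite_eq' Finset.univ μ]
      rw [if_pos (Finset.mem_univ μ)]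
      congr 1
      refine Finset.sum_congr rfl fun b _ => ?_
      rw [(hgsymm (η x')).apply a b, mul_comm]
    rw [hS1, hS2, ← Finset.sum_add_distrib]
    refine Finset.sum_congr rfl fun σ _ => ?_
    rw [hT σ μ x']
    ring
  -- ## the u-direction formula at x
  have hAform : fderiv ℝ Λ (x, φ x, jac φ x, η x, jac η x) (0, 0, 0, Pi.single a 1, 0)
      = ∑ μ, ∑ ν, (1/2 * T μ ν x)
          * (∑ b, ∑ c, jac η x b μ * fderiv ℝ g (η x) (Pi.single a 1) b c * jac η x c ν) := by
    rw [dir_u x (φ x) (jac φ x) (η x) (jac η x)]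
    rw [show (jac η x)ᵀ * g (η x) * jac η x = G x from (hG x).symm]
    rw [gm_clm_expand]
    refine Finset.sum_congr rfl fun μ _ => Finset.sum_congr rfl fun ν _ => ?_
    rw [gm_tmul, hT μ ν x]
    ring
  -- ## chain rule for g-entries along η
  have hηdx : DifferentiableAt ℝ η x := gm_dAt hU hη hx
  have hgde : ∀ (q r : Fin N), DifferentiableAt ℝ (fun u => g u q r) (η x) := by
    intro q r
    have h1 := (hgd (η x)).hasFDerivAt
    exact ((hasFDerivAt_pi'.mp ((hasFDerivAt_pi'.mp h1) q)) r).differentiableAt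
  have hpdg : ∀ (q r μ : Fin N), pd (fun x' => g (η x') q r) μ x
      = ∑ d, fderiv ℝ g (η x) (Pi.single d 1) q r * jac η x d μ := by
    intro q r μ
    unfold pd
    have hcomp : fderiv ℝ (fun x' => g (η x') q r) x
        = (fderiv ℝ (fun u => g u q r) (η x)).comp (fderiv ℝ η x) :=
      fderiv_comp x (hgde q r) hηdx
    rw [hcomp, ContinuousLinearMap.comp_apply]
    rw [gm_fderiv_entry (hgd (η x)) q r]
    rw [gm_vec_decomp (fderiv ℝ η x (Pi.single μ 1)), map_sum]
    rw [Matrix.sum_apply]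
    refine Finset.sum_congr rfl fun d _ => ?_
    rw [(fderiv ℝ g (η x)).map_smul, Matrix.smul_apply, smul_eq_mul, mul_comm]
    rfl
  -- ## Schwarz symmetry for the second derivatives of η
  have hkS : ∀ (b ρ μ : Fin N), pd (fun x' => jac η x' b ρ) μ x
      = pd (fun x' => jac η x' b μ) ρ x := by
    intro b ρ μ
    have hsymm : IsSymmSndFDerivAt ℝ η x :=
      ContDiffAt.isSymmSndFDerivAt (hη.contDiffAt (hU.mem_nhds hx))
        (by rw [minSmoothness_of_isRCLikeNormedField]; exact WithTop.coe_le_coe.mpr le_top)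
    have hder : ∀ ρ' μ' : Fin N, pd (fun x' => jac η x' b ρ') μ' x
        = fderiv ℝ (fderiv ℝ η) x (Pi.single μ' 1) (Pi.single ρ' 1) b := by
      intro ρ' μ'
      unfold pd
      have hd2 : DifferentiableAt ℝ (fderiv ℝ η) x := gm_dAt hU hdη hx
      have hclm := (((ContinuousLinearMap.proj b : (Fin N → ℝ) →L[ℝ] ℝ).comp
          (ContinuousLinearMap.apply ℝ (Fin N → ℝ) (Pi.single ρ' (1:ℝ)))).hasFDerivAt.comp x
          hd2.hasFDerivAt)
      have h6 : fderiv ℝ (fun x' => ((ContinuousLinearMap.proj b : (Fin N → ℝ) →L[ℝ] ℝ).comp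
            (ContinuousLinearMap.apply ℝ (Fin N → ℝ) (Pi.single ρ' (1:ℝ))))
              (fderiv ℝ η x')) x
          = ((ContinuousLinearMap.proj b : (Fin N → ℝ) →L[ℝ] ℝ).comp
            (ContinuousLinearMap.apply ℝ (Fin N → ℝ) (Pi.single ρ' (1:ℝ)))).comp
              (fderiv ℝ (fderiv ℝ η) x) := hclm.fderiv
      rw [show (fun x' => jac η x' b ρ')
          = (fun x' => ((ContinuousLinearMap.proj b : (Fin N → ℝ) →L[ℝ] ℝ).comp
            (ContinuousLinearMap.apply ℝ (Fin N → ℝ) (Pi.single ρ' (1:ℝ))))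
              (fderiv ℝ η x')) from rfl]
      rw [h6]
      rfl
    rw [hder ρ μ, hder μ ρ, hsymm (Pi.single μ 1) (Pi.single ρ 1)]
  -- ## pd of the coefficient functions
  have hpdc : ∀ (σ μ : Fin N), pd (fun x' => ∑ b, g (η x') a b * jac η x' b σ) μ x
      = ∑ b, ((∑ d, fderiv ℝ g (η x) (Pi.single d 1) a b * jac η x d μ) * jac η x b σ
          + g (η x) a b * pd (fun x' => jac η x' b σ) μ x) := by
    intro σ μ
    rw [gm_pd_sum Finset.univ μ (fun b _ =>
      (gm_dAt hU (hgηe a b) hx).fun_mul (gm_dAt hU (hjηe b σ) hx))]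
    refine Finset.sum_congr rfl fun b _ => ?_
    rw [gm_pd_mul μ (gm_dAt hU (hgηe a b) hx) (gm_dAt hU (hjηe b σ) hx)]
    rw [hpdg a b μ]
  -- ## pd of the entries of G
  have hD3exp : ∀ (μ lam ν : Fin N), pd (fun x' => G x' lam ν) μ x
      = ∑ b, ∑ c, (pd (fun x' => jac η x' b lam) μ x * g (η x) b c * jac η x c ν
          + jac η x b lam * (∑ d, fderiv ℝ g (η x) (Pi.single d 1) b c * jac η x d μ)
            * jac η x c ν
          + jac η x b lam * g (η x) b c * pd (fun x' => jac η x' c ν) μ x) := by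
    intro μ lam ν
    rw [show (fun x' => G x' lam ν)
        = fun x' => ∑ b, ∑ c, jac η x' b lam * g (η x') b c * jac η x' c ν from
      funext fun x' => hGexp x' lam ν]
    rw [gm_pd_sum Finset.univ μ (fun b _ => DifferentiableAt.fun_sum fun c _ =>
      ((gm_dAt hU (hjηe b lam) hx).fun_mul (gm_dAt hU (hgηe b c) hx)).fun_mul
        (gm_dAt hU (hjηe c ν) hx))]
    refine Finset.sum_congr rfl fun b _ => ?_
    rw [gm_pd_sum Finset.univ μ (fun c _ =>
      ((gm_dAt hU (hjηe b lam) hx).fun_mul (gm_dAt hU (hgηe b c) hx)).fun_mul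
        (gm_dAt hU (hjηe c ν) hx))]
    refine Finset.sum_congr rfl fun c _ => ?_
    rw [gm_pd_mul μ ((gm_dAt hU (hjηe b lam) hx).fun_mul (gm_dAt hU (hgηe b c) hx))
      (gm_dAt hU (hjηe c ν) hx)]
    rw [gm_pd_mul μ (gm_dAt hU (hjηe b lam) hx) (gm_dAt hU (hgηe b c) hx)]
    rw [hpdg b c μ]
    ring
  -- ## divergence rearrangement
  have hdiv : ∀ σ : Fin N, (∑ μ, pd (fun x' => T σ μ x') μ x)
      = - ∑ μ, ∑ ν, Γ σ μ ν x * T μ ν x := by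
    intro σ
    have h1 := hcons x hx σ
    have h2 : (∑ μ, pd (fun x' => T σ μ x') μ x) = ∑ μ, pd (fun x' => T μ σ x') μ x :=
      Finset.sum_congr rfl fun μ _ => by
        rw [show (fun x' => T σ μ x') = fun x' => T μ σ x' from
          funext fun x' => hTsymm σ μ x']
    rw [h2]
    linarith [h1]
  -- ## matrix inverse contraction
  have hmatinv : g (η x) * jac η x * (G x)⁻¹ = ((jac η x)⁻¹)ᵀ := by
    rw [hG x, Matrix.mul_inv_rev, Matrix.mul_inv_rev]
    rw [← mul_assoc (g (η x) * jac η x) ((jac η x)⁻¹) _]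
    rw [mul_assoc (g (η x)) (jac η x) ((jac η x)⁻¹)]
    rw [Matrix.mul_nonsing_inv _ (hηjac x hx), mul_one]
    rw [← mul_assoc, Matrix.mul_nonsing_inv _ (hginv (η x)), one_mul]
    exact (Matrix.transpose_nonsing_inv _).symm
  have hcinv : ∀ lam : Fin N,
      (∑ σ, (∑ b, g (η x) a b * jac η x b σ) * (G x)⁻¹ σ lam)
        = (jac η x)⁻¹ lam a := by
    intro lam
    have h1 : ∀ σ : Fin N, (∑ b, g (η x) a b * jac η x b σ) = (g (η x) * jac η x) a σ :=
      fun σ => (Matrix.mul_apply).symm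
    calc (∑ σ, (∑ b, g (η x) a b * jac η x b σ) * (G x)⁻¹ σ lam)
        = ∑ σ, (g (η x) * jac η x) a σ * (G x)⁻¹ σ lam :=
          Finset.sum_congr rfl fun σ _ => by rw [h1 σ]
      _ = (g (η x) * jac η x * (G x)⁻¹) a lam := (Matrix.mul_apply).symm
      _ = ((jac η x)⁻¹)ᵀ a lam := by rw [hmatinv]
      _ = (jac η x)⁻¹ lam a := Matrix.transpose_apply _ _ _
  -- ## Γ contraction
  have hΓc : ∀ μ ν : Fin N,
      (∑ σ, (∑ b, g (η x) a b * jac η x b σ) * Γ σ μ ν x)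
        = (1/2) * ∑ lam, (jac η x)⁻¹ lam a *
            (pd (fun x' => G x' lam ν) μ x + pd (fun x' => G x' lam μ) ν x
              - pd (fun x' => G x' μ ν) lam x) := by
    intro μ ν
    calc (∑ σ, (∑ b, g (η x) a b * jac η x b σ) * Γ σ μ ν x)
        = ∑ σ, (∑ b, g (η x) a b * jac η x b σ) * ((1/2) * ∑ lam, (G x)⁻¹ σ lam *
            (pd (fun x' => G x' lam ν) μ x + pd (fun x' => G x' lam μ) ν x
              - pd (fun x' => G x' μ ν) lam x)) :=
          Finset.sum_congr rfl fun σ _ => by rw [hΓ σ μ ν x]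
      _ = (1/2) * ∑ lam, (∑ σ, (∑ b, g (η x) a b * jac η x b σ) * (G x)⁻¹ σ lam) *
            (pd (fun x' => G x' lam ν) μ x + pd (fun x' => G x' lam μ) ν x
              - pd (fun x' => G x' μ ν) lam x) :=
          gm_swap _ _ _
      _ = (1/2) * ∑ lam, (jac η x)⁻¹ lam a *
            (pd (fun x' => G x' lam ν) μ x + pd (fun x' => G x' lam μ) ν x
              - pd (fun x' => G x' μ ν) lam x) := by
          refine congrArg _ (Finset.sum_congr rfl fun lam _ => ?_)
          rw [hcinv lam]
  -- ## pd of the Λ-w-derivative terms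
  have hpdB : ∀ μ : Fin N,
      pd (fun x' => fderiv ℝ Λ (x', φ x', jac φ x', η x', jac η x')
          (0, 0, 0, 0, Matrix.single a μ 1)) μ x
      = ∑ σ, (pd (fun x' => ∑ b, g (η x') a b * jac η x' b σ) μ x * T σ μ x
          + (∑ b, g (η x) a b * jac η x b σ) * pd (fun x' => T σ μ x') μ x) := by
    intro μ
    rw [show (fun x' => fderiv ℝ Λ (x', φ x', jac φ x', η x', jac η x')
        (0, 0, 0, 0, Matrix.single a μ 1))
        = fun x' => ∑ σ, (∑ b, g (η x') a b * jac η x' b σ) * T σ μ x' from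
      funext fun x' => hBform x' μ]
    rw [gm_pd_sum Finset.univ μ (fun σ _ =>
      (gm_dAt hU (hce σ) hx).fun_mul (gm_dAt hU (hTe σ μ) hx))]
    exact Finset.sum_congr rfl fun σ _ =>
      gm_pd_mul μ (gm_dAt hU (hce σ) hx) (gm_dAt hU (hTe σ μ) hx)
  -- ## final assembly
  rw [hE a x, hAform, Finset.sum_congr rfl fun μ (_ : μ ∈ Finset.univ) => hpdB μ]
  simp only [Finset.sum_add_distrib]
  have hsecond : (∑ μ, ∑ σ, (∑ b, g (η x) a b * jac η x b σ)
        * pd (fun x' => T σ μ x') μ x)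
      = - ∑ σ, (∑ b, g (η x) a b * jac η x b σ) * (∑ μ, ∑ ν, Γ σ μ ν x * T μ ν x) := by
    calc (∑ μ, ∑ σ, (∑ b, g (η x) a b * jac η x b σ) * pd (fun x' => T σ μ x') μ x)
        = ∑ σ, ∑ μ, (∑ b, g (η x) a b * jac η x b σ) * pd (fun x' => T σ μ x') μ x :=
          Finset.sum_comm
      _ = ∑ σ, (∑ b, g (η x) a b * jac η x b σ) * (∑ μ, pd (fun x' => T σ μ x') μ x) :=
          Finset.sum_congr rfl fun σ _ => (Finset.mul_sum _ _ _).symm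
      _ = ∑ σ, (∑ b, g (η x) a b * jac η x b σ) * (- ∑ μ, ∑ ν, Γ σ μ ν x * T μ ν x) :=
          Finset.sum_congr rfl fun σ _ => by rw [hdiv σ]
      _ = - ∑ σ, (∑ b, g (η x) a b * jac η x b σ) * (∑ μ, ∑ ν, Γ σ μ ν x * T μ ν x) := by
          simp only [mul_neg, Finset.sum_neg_distrib]
  rw [hsecond]
  have hthird : (∑ σ, (∑ b, g (η x) a b * jac η x b σ) * (∑ μ, ∑ ν, Γ σ μ ν x * T μ ν x))
      = ∑ μ, ∑ ν, T μ ν x * ((1/2) * ∑ lam, (jac η x)⁻¹ lam a *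
          (pd (fun x' => G x' lam ν) μ x + pd (fun x' => G x' lam μ) ν x
            - pd (fun x' => G x' μ ν) lam x)) := by
    have h1 : (∑ σ, (∑ b, g (η x) a b * jac η x b σ) * (∑ μ, ∑ ν, Γ σ μ ν x * T μ ν x))
        = ∑ μ, ∑ ν, T μ ν x * (∑ σ, (∑ b, g (η x) a b * jac η x b σ) * Γ σ μ ν x) := by
      simp only [Finset.mul_sum]
      rw [Finset.sum_comm]
      refine Finset.sum_congr rfl fun μ _ => ?_
      rw [Finset.sum_comm]
      refine Finset.sum_congr rfl fun ν _ => ?_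
      exact Finset.sum_congr rfl fun σ _ => by ring
    rw [h1]
    refine Finset.sum_congr rfl fun μ _ => Finset.sum_congr rfl fun ν _ => ?_
    rw [hΓc μ ν]
  rw [hthird]
  have hB1 : (∑ μ, ∑ σ, pd (fun x' => ∑ b, g (η x') a b * jac η x' b σ) μ x * T σ μ x)
      = ∑ μ, ∑ σ, (∑ b, ((∑ d, fderiv ℝ g (η x) (Pi.single d 1) a b * jac η x d μ)
          * jac η x b σ + g (η x) a b * pd (fun x' => jac η x' b σ) μ x)) * T σ μ x :=
    Finset.sum_congr rfl fun μ _ => Finset.sum_congr rfl fun σ _ => by rw [hpdc σ μ]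
  rw [hB1]
  have halg := gm_algebra a (jac η x) ((jac η x)⁻¹) (g (η x))
    (Matrix.of fun μ ν => T μ ν x)
    (fun b c d => fderiv ℝ g (η x) (Pi.single d 1) b c)
    (fun b ρ μ => pd (fun x' => jac η x' b ρ) μ x)
    (fun μ lam ν => pd (fun x' => G x' lam ν) μ x)
    (fun b c => (hgsymm (η x)).apply c b)
    hkS
    (fun μ ν => hTsymm μ ν x)
    (fun b c => by
      rw [← Matrix.mul_apply, Matrix.mul_nonsing_inv _ (hηjac x hx), Matrix.one_apply])
    (fun μ lam ν => hD3exp μ lam ν)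
  simp only [Matrix.of_apply] at halg
  linarith [halg]
end

section
/- Fix integers N ≥ 1 and m ≥ 1 and an open set U ⊆ ℝ^N. Let g : ℝ^N → Matrix N N ℝ be smooth with symmetric invertible values (entries g_{ab}), let η : U → ℝ^N be smooth with Dη(x) invertible for every x ∈ U, and let G(x) := Dη(x)ᵀ g(η(x)) Dη(x) be the pulled-back metric. Let L : ℝ^N × ℝ^m × Matrix m N ℝ × Matrix N N ℝ → ℝ be smooth, written L(x, y, v, G), with ∂L/∂G_{μν} = ∂L/∂G_{νμ} everywhere, let φ : U → ℝ^m be smooth, and define Λ(x, y, v, u, w) := L(x, y, v, wᵀ g(u) w). Let C^A{}_ν and C^{Aμ}{}_ν be smooth real-valued functions on U (for A = 1,…,m and μ,ν = 1,…,N; the lift coefficients of an index ≤ 1 theory). Writing all partial derivatives of L evaluated at (x, φ(x), Dφ(x), G(x)) and all partial derivatives of Λ evaluated at (x, φ(x), Dφ(x), η(x), Dη(x)), define 𝔗^μ{}_ν := L δ^μ{}_ν − Σ_A (∂L/∂v^A{}_μ) φ^A{}_{,ν} + Σ_A (∂L/∂v^A{}_μ) C^A{}_ν + Σ_{A,ρ}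 ∂_ρ[ (∂L/∂v^A{}_ρ) C^{Aμ}{}_ν ] and 𝔗̃^μ{}_ν := Λ δ^μ{}_ν − Σ_A (∂Λ/∂v^A{}_μ) φ^A{}_{,ν} + Σ_A (∂Λ/∂v^A{}_μ) C^A{}_ν + Σ_{A,ρ} ∂_ρ[ (∂Λ/∂v^A{}_ρ) C^{Aμ}{}_ν ] − Σ_a (∂Λ/∂w^a{}_μ) η^a{}_{,ν}. Then for every x ∈ U and all indices μ, ν: 𝔗̃^μ{}_ν(x) = 𝔗^μ{}_ν(x) − 2 Σ_ρ (∂L/∂G_{μρ})(x, φ(x), Dφ(x), G(x)) · G_{ρν}(x). -/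
open Matrix BigOperators

section SemAux

variable {k l n : Type*} [Fintype k] [Fintype l] [Fintype n]

lemma sem_entry_abs_le (M : Matrix k l ℝ) (i : k) (j : l) : ‖M i j‖ ≤ ‖M‖ :=
  (norm_le_pi_norm (M i) j).trans (norm_le_pi_norm M i)

lemma sem_isBBM_mul :
    IsBoundedBilinearMap ℝ (fun p : Matrix k l ℝ × Matrix l n ℝ => p.1 * p.2) := by
  refine ⟨fun M M' N => Matrix.add_mul M M' N, fun c M N => Matrix.smul_mul c M N,
    fun M N N' => Matrix.mul_add M N N', fun c M N => Matrix.mul_smul M c N,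
    ⟨(Fintype.card l : ℝ) + 1, by positivity, fun M N => ?_⟩⟩
  refine (pi_norm_le_iff_of_nonneg (by positivity)).2 fun i => ?_
  rw [pi_norm_le_iff_of_nonneg (by positivity)]
  intro j
  calc ‖(M * N) i j‖ = |∑ x, M i x * N x j| := by rw [Matrix.mul_apply]; rfl
    _ ≤ ∑ x, |M i x * N x j| := Finset.abs_sum_le_sum_abs _ _
    _ ≤ ∑ _x : l, ‖M‖ * ‖N‖ := Finset.sum_le_sum fun x _ => by
        rw [abs_mul]
        exact mul_le_mul (sem_entry_abs_le M i x) (sem_entry_abs_le N x j) (abs_nonneg _)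
          (norm_nonneg _)
    _ = (Fintype.card l : ℝ) * (‖M‖ * ‖N‖) := by
        rw [Finset.sum_const, Finset.card_univ, nsmul_eq_mul]
    _ ≤ ((Fintype.card l : ℝ) + 1) * ‖M‖ * ‖N‖ := by nlinarith [norm_nonneg M, norm_nonneg N]

noncomputable def semTranspose (k l : Type*) [Fintype k] [Fintype l] :
    Matrix k l ℝ →L[ℝ] Matrix l k ℝ :=
  LinearMap.toContinuousLinearMap (Matrix.transposeLinearEquiv k l ℝ ℝ).toLinearMap

noncomputable def semMulRight (A : Matrix l n ℝ) : Matrix k l ℝ →L[ℝ] Matrix k n ℝ :=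
  LinearMap.toContinuousLinearMap
    { toFun := fun M => M * A
      map_add' := fun M M' => Matrix.add_mul M M' A
      map_smul' := fun c M => Matrix.smul_mul c M A }

end SemAux

section SemLem

variable {N m : ℕ}
  (g : (Fin N → ℝ) → Matrix (Fin N) (Fin N) ℝ)
  (L : (Fin N → ℝ) × (Fin m → ℝ) × Matrix (Fin m) (Fin N) ℝ × Matrix (Fin N) (Fin N) ℝ → ℝ)
  (Λ : (Fin N → ℝ) × (Fin m → ℝ) × Matrix (Fin m) (Fin N) ℝ × (Fin N → ℝ)
      × Matrix (Fin N) (Fin N) ℝ → ℝ)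

lemma semΛ_contDiff (hg : ContDiff ℝ (⊤ : ℕ∞) g) (hL : ContDiff ℝ (⊤ : ℕ∞) L)
    (hΛ : ∀ x y v u w, Λ (x, y, v, u, w) = L (x, y, v, wᵀ * g u * w)) :
    ContDiff ℝ (⊤ : ℕ∞) Λ := by
  have hfun : Λ = fun p => L (p.1, p.2.1, p.2.2.1, p.2.2.2.2ᵀ * g p.2.2.2.1 * p.2.2.2.2) :=
    funext fun ⟨x, y, v, u, w⟩ => hΛ x y v u w
  rw [hfun]
  have h4 : ContDiff ℝ (⊤ : ℕ∞) (fun p : (Fin N → ℝ) × (Fin m → ℝ) × Matrix (Fin m) (Fin N) ℝ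
      × (Fin N → ℝ) × Matrix (Fin N) (Fin N) ℝ => p.2.2.2.1) :=
    contDiff_fst.comp (contDiff_snd.comp (contDiff_snd.comp contDiff_snd))
  have h5 : ContDiff ℝ (⊤ : ℕ∞) (fun p : (Fin N → ℝ) × (Fin m → ℝ) × Matrix (Fin m) (Fin N) ℝ
      × (Fin N → ℝ) × Matrix (Fin N) (Fin N) ℝ => p.2.2.2.2) :=
    contDiff_snd.comp (contDiff_snd.comp (contDiff_snd.comp contDiff_snd))
  have hmul : ContDiff ℝ (⊤ : ℕ∞) (fun q : Matrix (Fin N) (Fin N) ℝ × Matrix (Fin N) (Fin N) ℝ =>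
      q.1 * q.2) := sem_isBBM_mul.contDiff
  refine hL.comp (contDiff_fst.prodMk ((contDiff_fst.comp contDiff_snd).prodMk
    (((contDiff_fst.comp (contDiff_snd.comp contDiff_snd))).prodMk ?_)))
  exact hmul.comp ((hmul.comp
    ((((semTranspose (Fin N) (Fin N)).contDiff).comp h5).prodMk (hg.comp h4))).prodMk h5)

lemma semA (hg : ContDiff ℝ (⊤ : ℕ∞) g) (hL : ContDiff ℝ (⊤ : ℕ∞) L)
    (hΛ : ∀ x y v u w, Λ (x, y, v, u, w) = L (x, y, v, wᵀ * g u * w))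
    (x : Fin N → ℝ) (y : Fin m → ℝ) (v vdot : Matrix (Fin m) (Fin N) ℝ)
    (u : Fin N → ℝ) (w : Matrix (Fin N) (Fin N) ℝ) :
    fderiv ℝ Λ (x, y, v, u, w) (0, 0, vdot, 0, 0)
      = fderiv ℝ L (x, y, v, wᵀ * g u * w) (0, 0, vdot, 0) := by
  have hΛc := semΛ_contDiff g L Λ hg hL hΛ
  have hι : HasFDerivAt (fun v' : Matrix (Fin m) (Fin N) ℝ => (x, y, v', u, w))
      ((0 : Matrix (Fin m) (Fin N) ℝ →L[ℝ] (Fin N → ℝ)).prod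
        ((0 : Matrix (Fin m) (Fin N) ℝ →L[ℝ] (Fin m → ℝ)).prod
          ((ContinuousLinearMap.id ℝ (Matrix (Fin m) (Fin N) ℝ)).prod
            ((0 : Matrix (Fin m) (Fin N) ℝ →L[ℝ] (Fin N → ℝ)).prod
              (0 : Matrix (Fin m) (Fin N) ℝ →L[ℝ] Matrix (Fin N) (Fin N) ℝ))))) v :=
    (hasFDerivAt_const x v).prodMk ((hasFDerivAt_const y v).prodMk ((hasFDerivAt_id v).prodMk
      ((hasFDerivAt_const u v).prodMk (hasFDerivAt_const w v))))
  have hι' : HasFDerivAt (fun v' : Matrix (Fin m) (Fin N) ℝ => (x, y, v', wᵀ * g u * w))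
      ((0 : Matrix (Fin m) (Fin N) ℝ →L[ℝ] (Fin N → ℝ)).prod
        ((0 : Matrix (Fin m) (Fin N) ℝ →L[ℝ] (Fin m → ℝ)).prod
          ((ContinuousLinearMap.id ℝ (Matrix (Fin m) (Fin N) ℝ)).prod
            (0 : Matrix (Fin m) (Fin N) ℝ →L[ℝ] Matrix (Fin N) (Fin N) ℝ)))) v :=
    (hasFDerivAt_const x v).prodMk ((hasFDerivAt_const y v).prodMk ((hasFDerivAt_id v).prodMk
      (hasFDerivAt_const (wᵀ * g u * w) v)))
  have h1 := (((hΛc.differentiable (by simp)) (x, y, v, u, w)).hasFDerivAt.comp v hι).fderiv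
  have h2 := (((hL.differentiable (by simp)) (x, y, v, wᵀ * g u * w)).hasFDerivAt.comp v
    hι').fderiv
  have heq : (Λ ∘ fun v' : Matrix (Fin m) (Fin N) ℝ => (x, y, v', u, w))
      = (L ∘ fun v' : Matrix (Fin m) (Fin N) ℝ => (x, y, v', wᵀ * g u * w)) :=
    funext fun v' => hΛ x y v' u w
  have h3 : (fderiv ℝ Λ (x, y, v, u, w)).comp
        ((0 : Matrix (Fin m) (Fin N) ℝ →L[ℝ] (Fin N → ℝ)).prod
        ((0 : Matrix (Fin m) (Fin N) ℝ →L[ℝ] (Fin m → ℝ)).prod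
          ((ContinuousLinearMap.id ℝ (Matrix (Fin m) (Fin N) ℝ)).prod
            ((0 : Matrix (Fin m) (Fin N) ℝ →L[ℝ] (Fin N → ℝ)).prod
              (0 : Matrix (Fin m) (Fin N) ℝ →L[ℝ] Matrix (Fin N) (Fin N) ℝ)))))
      = (fderiv ℝ L (x, y, v, wᵀ * g u * w)).comp
        ((0 : Matrix (Fin m) (Fin N) ℝ →L[ℝ] (Fin N → ℝ)).prod
        ((0 : Matrix (Fin m) (Fin N) ℝ →L[ℝ] (Fin m → ℝ)).prod
          ((ContinuousLinearMap.id ℝ (Matrix (Fin m) (Fin N) ℝ)).prod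
            (0 : Matrix (Fin m) (Fin N) ℝ →L[ℝ] Matrix (Fin N) (Fin N) ℝ)))) := by
    rw [← h1, ← h2, heq]
  exact congrFun (congrArg DFunLike.coe h3) vdot

lemma semB (hg : ContDiff ℝ (⊤ : ℕ∞) g) (hL : ContDiff ℝ (⊤ : ℕ∞) L)
    (hΛ : ∀ x y v u w, Λ (x, y, v, u, w) = L (x, y, v, wᵀ * g u * w))
    (x : Fin N → ℝ) (y : Fin m → ℝ) (v : Matrix (Fin m) (Fin N) ℝ)
    (u : Fin N → ℝ) (w wdot : Matrix (Fin N) (Fin N) ℝ) :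
    fderiv ℝ Λ (x, y, v, u, w) (0, 0, 0, 0, wdot)
      = fderiv ℝ L (x, y, v, wᵀ * g u * w) (0, 0, 0, wᵀ * g u * wdot + wdotᵀ * g u * w) := by
  have hΛc := semΛ_contDiff g L Λ hg hL hΛ
  set A := g u with hA
  set ℓ : Matrix (Fin N) (Fin N) ℝ →L[ℝ] Matrix (Fin N) (Fin N) ℝ × Matrix (Fin N) (Fin N) ℝ :=
    ((semMulRight A).comp (semTranspose (Fin N) (Fin N))).prod
      (ContinuousLinearMap.id ℝ (Matrix (Fin N) (Fin N) ℝ)) with hℓ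
  have hℓd : HasFDerivAt (fun w' : Matrix (Fin N) (Fin N) ℝ => (w'ᵀ * A, w')) ℓ w :=
    ℓ.hasFDerivAt
  have hquad := HasFDerivAt.comp (f := fun w' : Matrix (Fin N) (Fin N) ℝ => (w'ᵀ * A, w'))
    w (sem_isBBM_mul.hasFDerivAt (wᵀ * A, w)) hℓd
  have hι : HasFDerivAt (fun w' : Matrix (Fin N) (Fin N) ℝ => (x, y, v, u, w'))
      ((0 : Matrix (Fin N) (Fin N) ℝ →L[ℝ] (Fin N → ℝ)).prod
        ((0 : Matrix (Fin N) (Fin N) ℝ →L[ℝ] (Fin m → ℝ)).prod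
          ((0 : Matrix (Fin N) (Fin N) ℝ →L[ℝ] Matrix (Fin m) (Fin N) ℝ).prod
            ((0 : Matrix (Fin N) (Fin N) ℝ →L[ℝ] (Fin N → ℝ)).prod
              (ContinuousLinearMap.id ℝ (Matrix (Fin N) (Fin N) ℝ)))))) w :=
    (hasFDerivAt_const x w).prodMk ((hasFDerivAt_const y w).prodMk ((hasFDerivAt_const v w).prodMk
      ((hasFDerivAt_const u w).prodMk (hasFDerivAt_id w))))
  have hι' := (hasFDerivAt_const x w).prodMk ((hasFDerivAt_const y w).prodMk
    ((hasFDerivAt_const v w).prodMk hquad))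
  have h1 := (((hΛc.differentiable (by simp)) (x, y, v, u, w)).hasFDerivAt.comp w hι).fderiv
  have h2 := (((hL.differentiable (by simp)) (x, y, v, wᵀ * A * w)).hasFDerivAt.comp w hι').fderiv
  have heq : (Λ ∘ fun w' : Matrix (Fin N) (Fin N) ℝ => (x, y, v, u, w'))
      = (fun w' : Matrix (Fin N) (Fin N) ℝ => L (x, y, v, w'ᵀ * A * w')) :=
    funext fun w' => hΛ x y v u w'
  have h2' : fderiv ℝ (fun w' : Matrix (Fin N) (Fin N) ℝ => L (x, y, v, w'ᵀ * A * w')) w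
      = ((fderiv ℝ L (x, y, v, wᵀ * A * w)).comp
          (((0 : Matrix (Fin N) (Fin N) ℝ →L[ℝ] (Fin N → ℝ)).prod
            ((0 : Matrix (Fin N) (Fin N) ℝ →L[ℝ] (Fin m → ℝ)).prod
              ((0 : Matrix (Fin N) (Fin N) ℝ →L[ℝ] Matrix (Fin m) (Fin N) ℝ).prod
                ((sem_isBBM_mul.deriv (wᵀ * A, w)).comp ℓ)))))) := h2
  have h3 := h1.symm.trans ((congrArg (fun f => fderiv ℝ f w) heq).trans h2')
  exact congrFun (congrArg DFunLike.coe h3) wdot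

lemma sem_exp1 {n : Type*} [Fintype n] [DecidableEq n] (B : Matrix n n ℝ) (a μ : n) :
    B * Matrix.single a μ 1 = ∑ ρ, B ρ a • Matrix.single ρ μ 1 := by
  ext i j
  rw [Matrix.sum_apply]
  simp only [Matrix.mul_apply, Matrix.single, Matrix.smul_apply, Matrix.of_apply,
    mul_ite, mul_one, mul_zero, smul_eq_mul, ite_and]
  by_cases h : μ = j <;> simp [h, Finset.sum_ite_eq, Finset.sum_ite_eq']

lemma sem_exp2 {n : Type*} [Fintype n] [DecidableEq n] (B : Matrix n n ℝ) (a μ : n) :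
    (Matrix.single a μ 1)ᵀ * B = ∑ σ, B a σ • Matrix.single μ σ 1 := by
  ext i j
  rw [Matrix.sum_apply]
  simp only [Matrix.mul_apply, Matrix.transpose_apply, Matrix.single, Matrix.smul_apply,
    Matrix.of_apply, ite_mul, one_mul, zero_mul, smul_eq_mul, mul_ite, mul_one, mul_zero, ite_and]
  by_cases h : μ = i <;> simp [h, Finset.sum_ite_eq, Finset.sum_ite_eq']

/-- Proposition of the paper: the SEM tensor densities of the original
and parametrized theories are related by `𝔗̃^μ{}_ν = 𝔗^μ{}_ν − 2 (∂L/∂G_{μρ}) G_{ρν}`. -/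
theorem sem_tensor_original_vs_parametrized
    {N m : ℕ} (hN : 1 ≤ N) (hm : 1 ≤ m)
    (U : Set (Fin N → ℝ)) (hU : IsOpen U)
    -- the fiber metric g, smooth with symmetric invertible values
    (g : (Fin N → ℝ) → Matrix (Fin N) (Fin N) ℝ) (hgsmooth : ContDiff ℝ (⊤ : ℕ∞) g)
    (hgsymm : ∀ u, (g u).IsSymm) (hginv : ∀ u, IsUnit (g u).det)
    -- the covariance field η, smooth on U with invertible Jacobian
    (η : (Fin N → ℝ) → (Fin N → ℝ)) (hη : ContDiffOn ℝ (⊤ : ℕ∞) η U)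
    (hηjac : ∀ x ∈ U, IsUnit (jac η x).det)
    -- the pulled-back metric G = η*g
    (G : (Fin N → ℝ) → Matrix (Fin N) (Fin N) ℝ)
    (hG : ∀ x, G x = (jac η x)ᵀ * g (η x) * jac η x)
    -- the Lagrangian L(x, y, v, G), smooth with symmetric gradient in G
    (L : (Fin N → ℝ) × (Fin m → ℝ) × Matrix (Fin m) (Fin N) ℝ × Matrix (Fin N) (Fin N) ℝ → ℝ)
    (hL : ContDiff ℝ (⊤ : ℕ∞) L)
    (hLsymm : ∀ p μ ν, fderiv ℝ L p (0, 0, 0, Matrix.single μ ν 1)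
      = fderiv ℝ L p (0, 0, 0, Matrix.single ν μ 1))
    -- the matter fields φ, smooth on U
    (φ : (Fin N → ℝ) → (Fin m → ℝ)) (hφ : ContDiffOn ℝ (⊤ : ℕ∞) φ U)
    -- the parametrized Lagrangian Λ(x, y, v, u, w) := L(x, y, v, wᵀ g(u) w)
    (Λ : (Fin N → ℝ) × (Fin m → ℝ) × Matrix (Fin m) (Fin N) ℝ × (Fin N → ℝ)
      × Matrix (Fin N) (Fin N) ℝ → ℝ)
    (hΛ : ∀ x y v u w, Λ (x, y, v, u, w) = L (x, y, v, wᵀ * g u * w))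
    -- the lift coefficients C^A{}_ν and C^{Aμ}{}_ν, smooth on U
    (CA : Fin m → Fin N → (Fin N → ℝ) → ℝ) (hCA : ∀ A ν, ContDiffOn ℝ (⊤ : ℕ∞) (CA A ν) U)
    (CAμ : Fin m → Fin N → Fin N → (Fin N → ℝ) → ℝ)
    (hCAμ : ∀ A μ ν, ContDiffOn ℝ (⊤ : ℕ∞) (CAμ A μ ν) U)
    -- the SEM tensor density 𝔗^μ{}_ν of the original theory
    (Tmix : Fin N → Fin N → (Fin N → ℝ) → ℝ)
    (hTmix : ∀ μ ν x, Tmix μ ν x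
      = L (x, φ x, jac φ x, G x) * (if μ = ν then (1:ℝ) else 0)
        - (∑ A, fderiv ℝ L (x, φ x, jac φ x, G x)
            (0, 0, Matrix.single A μ 1, 0) * jac φ x A ν)
        + (∑ A, fderiv ℝ L (x, φ x, jac φ x, G x)
            (0, 0, Matrix.single A μ 1, 0) * CA A ν x)
        + ∑ A, ∑ ρ, pd (fun x' => fderiv ℝ L (x', φ x', jac φ x', G x')
            (0, 0, Matrix.single A ρ 1, 0) * CAμ A μ ν x') ρ x)
    -- the SEM tensor density 𝔗̃^μ{}_ν of the parametrized theory
    (Ttil : Fin N → Fin N → (Fin N → ℝ) → ℝ)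
    (hTtil : ∀ μ ν x, Ttil μ ν x
      = Λ (x, φ x, jac φ x, η x, jac η x) * (if μ = ν then (1:ℝ) else 0)
        - (∑ A, fderiv ℝ Λ (x, φ x, jac φ x, η x, jac η x)
            (0, 0, Matrix.single A μ 1, 0, 0) * jac φ x A ν)
        + (∑ A, fderiv ℝ Λ (x, φ x, jac φ x, η x, jac η x)
            (0, 0, Matrix.single A μ 1, 0, 0) * CA A ν x)
        + (∑ A, ∑ ρ, pd (fun x' => fderiv ℝ Λ (x', φ x', jac φ x', η x', jac η x')
            (0, 0, Matrix.single A ρ 1, 0, 0) * CAμ A μ ν x') ρ x)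
        - ∑ a, fderiv ℝ Λ (x, φ x, jac φ x, η x, jac η x)
            (0, 0, 0, 0, Matrix.single a μ 1) * jac η x a ν)
    :
    ∀ x ∈ U, ∀ μ ν, Ttil μ ν x
      = Tmix μ ν x - 2 * ∑ ρ, fderiv ℝ L (x, φ x, jac φ x, G x)
          (0, 0, 0, Matrix.single μ ρ 1) * G x ρ ν := by
  intro x hx μ ν
  rw [hTtil μ ν x, hTmix μ ν x]
  have e1 : Λ (x, φ x, jac φ x, η x, jac η x) = L (x, φ x, jac φ x, G x) := by
    rw [hΛ, ← hG]
  have e2 : ∀ (x' : Fin N → ℝ) (B : Fin m) (ρ : Fin N),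
      fderiv ℝ Λ (x', φ x', jac φ x', η x', jac η x')
          (0, 0, Matrix.single B ρ 1, 0, 0)
        = fderiv ℝ L (x', φ x', jac φ x', G x')
          (0, 0, Matrix.single B ρ 1, 0) := by
    intro x' B ρ
    rw [semA g L Λ hgsmooth hL hΛ x' (φ x') (jac φ x') (Matrix.single B ρ 1)
      (η x') (jac η x'), ← hG x']
  have key : (∑ a, fderiv ℝ Λ (x, φ x, jac φ x, η x, jac η x)
        (0, 0, 0, 0, Matrix.single a μ 1) * jac η x a ν)
      = 2 * ∑ ρ, fderiv ℝ L (x, φ x, jac φ x, G x)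
          (0, 0, 0, Matrix.single μ ρ 1) * G x ρ ν := by
    have hGx : G x = (jac η x)ᵀ * g (η x) * jac η x := hG x
    set w := jac η x with hw
    set A := g (η x) with hA2
    set P : (Fin N → ℝ) × (Fin m → ℝ) × Matrix (Fin m) (Fin N) ℝ × Matrix (Fin N) (Fin N) ℝ :=
      (x, φ x, jac φ x, G x) with hP
    set T : Matrix (Fin N) (Fin N) ℝ →L[ℝ] ℝ :=
      (fderiv ℝ L P).comp
        ((0 : Matrix (Fin N) (Fin N) ℝ →L[ℝ] (Fin N → ℝ)).prod
          ((0 : Matrix (Fin N) (Fin N) ℝ →L[ℝ] (Fin m → ℝ)).prod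
            ((0 : Matrix (Fin N) (Fin N) ℝ →L[ℝ] Matrix (Fin m) (Fin N) ℝ).prod
              (ContinuousLinearMap.id ℝ (Matrix (Fin N) (Fin N) ℝ))))) with hT
    have hTapp : ∀ M : Matrix (Fin N) (Fin N) ℝ, fderiv ℝ L P (0, 0, 0, M) = T M :=
      fun _ => rfl
    have hTsymm : ∀ ρ σ : Fin N,
        T (Matrix.single ρ σ 1) = T (Matrix.single σ ρ 1) := by
      intro ρ σ
      rw [← hTapp, ← hTapp]
      exact hLsymm P ρ σ
    have step1 : ∀ a : Fin N,
        fderiv ℝ Λ (x, φ x, jac φ x, η x, jac η x) (0, 0, 0, 0, Matrix.single a μ 1)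
          = (∑ ρ, (wᵀ * A) ρ a * T (Matrix.single ρ μ 1))
            + ∑ σ, (A * w) a σ * T (Matrix.single μ σ 1) := by
      intro a
      rw [semB g L Λ hgsmooth hL hΛ x (φ x) (jac φ x) (η x) w (Matrix.single a μ 1),
        ← hGx, hTapp, map_add]
      congr 1
      · rw [sem_exp1 (wᵀ * A) a μ, map_sum]
        exact Finset.sum_congr rfl fun ρ _ => by rw [_root_.map_smul, smul_eq_mul]
      · rw [Matrix.mul_assoc, sem_exp2 (A * w) a μ, map_sum]
        exact Finset.sum_congr rfl fun σ _ => by rw [_root_.map_smul, smul_eq_mul]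
    have hS1 : ∑ a, ∑ ρ, (wᵀ * A) ρ a * T (Matrix.single ρ μ 1) * w a ν
        = ∑ ρ, T (Matrix.single μ ρ 1) * G x ρ ν := by
      rw [Finset.sum_comm]
      refine Finset.sum_congr rfl fun ρ _ => ?_
      have h5 : ∑ a, (wᵀ * A) ρ a * T (Matrix.single ρ μ 1) * w a ν
          = T (Matrix.single ρ μ 1) * (wᵀ * A * w) ρ ν := by
        rw [Matrix.mul_apply, Finset.mul_sum]
        exact Finset.sum_congr rfl fun a _ => by ring
      rw [h5, ← hGx, hTsymm ρ μ]
    have hS2 : ∑ a, ∑ σ, (A * w) a σ * T (Matrix.single μ σ 1) * w a ν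
        = ∑ σ, T (Matrix.single μ σ 1) * G x σ ν := by
      rw [Finset.sum_comm]
      refine Finset.sum_congr rfl fun σ _ => ?_
      have h6 : ∑ a, (A * w) a σ * T (Matrix.single μ σ 1) * w a ν
          = T (Matrix.single μ σ 1) * ((A * w)ᵀ * w) σ ν := by
        rw [Matrix.mul_apply, Finset.mul_sum]
        exact Finset.sum_congr rfl fun a _ => by rw [Matrix.transpose_apply]; ring
      have h7 : (A * w)ᵀ * w = G x := by
        rw [Matrix.transpose_mul, (hgsymm (η x)).eq, ← hGx]
      rw [h6, h7]
    calc ∑ a, fderiv ℝ Λ (x, φ x, jac φ x, η x, jac η x)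
          (0, 0, 0, 0, Matrix.single a μ 1) * w a ν
        = ∑ a, (((∑ ρ, (wᵀ * A) ρ a * T (Matrix.single ρ μ 1))
            + ∑ σ, (A * w) a σ * T (Matrix.single μ σ 1)) * w a ν) :=
          Finset.sum_congr rfl fun a _ => by rw [step1 a]
      _ = (∑ a, ∑ ρ, (wᵀ * A) ρ a * T (Matrix.single ρ μ 1) * w a ν)
          + ∑ a, ∑ σ, (A * w) a σ * T (Matrix.single μ σ 1) * w a ν := by
          rw [← Finset.sum_add_distrib]
          exact Finset.sum_congr rfl fun a _ => by
            rw [add_mul, Finset.sum_mul, Finset.sum_mul]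
      _ = (∑ ρ, T (Matrix.single μ ρ 1) * G x ρ ν)
          + ∑ σ, T (Matrix.single μ σ 1) * G x σ ν := by rw [hS1, hS2]
      _ = 2 * ∑ ρ, T (Matrix.single μ ρ 1) * G x ρ ν := (two_mul _).symm
      _ = 2 * ∑ ρ, fderiv ℝ L P (0, 0, 0, Matrix.single μ ρ 1) * G x ρ ν := by
          simp only [hTapp]
  simp only [e1, e2]
  rw [key]
end SemLem
end

section
/- Fix integers N ≥ 1 and m ≥ 1 and an open set U ⊆ ℝ^N. Let g : ℝ^N → Matrix N N ℝ be smooth with symmetric invertible values, let η : U → ℝ^N be smooth with Dη(x) invertible for every x ∈ U, and let G(x) := Dη(x)ᵀ g(η(x)) Dη(x). Let L : ℝ^N × ℝ^m × Matrix m N ℝ × Matrix N N ℝ → ℝ be smooth, written L(x, y, v, G), with ∂L/∂G_{μν} = ∂L/∂G_{νμ} everywhere, let φ : U → ℝ^m be smooth, and define Λ(x, y, v, u, w) := L(x, y, v, wᵀ g(u) w). Let C^A{}_ν and C^{Aμ}{}_ν be smooth real-valued functions on U. With all partial derivatives of L evaluated at (x, φ(x), Dφ(x), G(x)) and those of Λ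 at (x, φ(x), Dφ(x), η(x), Dη(x)), define 𝔗^μ{}_ν := L δ^μ{}_ν − Σ_A (∂L/∂v^A{}_μ) φ^A{}_{,ν} + Σ_A (∂L/∂v^A{}_μ) C^A{}_ν + Σ_{A,ρ} ∂_ρ[ (∂L/∂v^A{}_ρ) C^{Aμ}{}_ν ] and 𝔗̃^μ{}_ν := Λ δ^μ{}_ν − Σ_A (∂Λ/∂v^A{}_μ) φ^A{}_{,ν} + Σ_A (∂Λ/∂v^A{}_μ) C^A{}_ν + Σ_{A,ρ} ∂_ρ[ (∂Λ/∂v^A{}_ρ) C^{Aμ}{}_ν ] − Σ_a (∂Λ/∂w^a{}_μ) η^a{}_{,ν}. Assume the Hilbert formula holds on shell: 𝔗^μ{}_ν(x) = 2 Σ_ρ (∂L/∂G_{μρ})(x, φ(x), Dφ(x), G(x)) · G_{ρν}(x) for every x ∈ U and all μ, ν. Then 𝔗̃^μ{}_ν(x) = 0 for every x ∈ U and all μ, ν: the SEM tensor density of the fully covariant, fully dynamic parametrized theory vanishes. -/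
open Matrix BigOperators

lemma aux_fderiv_dir {E : Type*} [NormedAddCommGroup E] [NormedSpace ℝ E]
    (f : E → ℝ) (p d : E) (hf : DifferentiableAt ℝ f p) (r : ℝ)
    (h : HasDerivAt (fun t : ℝ => f (p + t • d)) r 0) :
    fderiv ℝ f p d = r := by
  have hc : HasDerivAt (fun t : ℝ => p + t • d) d 0 := by
    simpa using ((hasDerivAt_id (0:ℝ)).smul_const d).const_add p
  have hf' : HasFDerivAt f (fderiv ℝ f p) (p + (0:ℝ) • d) := by
    simpa using hf.hasFDerivAt
  exact (hf'.comp_hasDerivAt 0 hc).unique h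

lemma aux_quad_contDiff {N : ℕ} (g : (Fin N → ℝ) → Matrix (Fin N) (Fin N) ℝ)
    (hg : ContDiff ℝ (⊤ : ℕ∞) g) :
    ContDiff ℝ (⊤ : ℕ∞) (fun p : (Fin N → ℝ) × Matrix (Fin N) (Fin N) ℝ => p.2ᵀ * g p.1 * p.2) := by
  apply contDiff_pi.mpr; intro i
  apply contDiff_pi.mpr; intro j
  have h : (fun p : (Fin N → ℝ) × Matrix (Fin N) (Fin N) ℝ => (p.2ᵀ * g p.1 * p.2) i j)
      = fun p => ∑ l, (∑ k, p.2 k i * g p.1 k l) * p.2 l j := by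
    funext p; simp [Matrix.mul_apply, Matrix.transpose_apply]
  rw [h]
  apply ContDiff.sum; intro l _
  apply ContDiff.mul
  · apply ContDiff.sum; intro k _
    exact (contDiff_pi.mp (contDiff_pi.mp contDiff_snd k) i).mul
      (contDiff_pi.mp (contDiff_pi.mp (hg.comp contDiff_fst) k) l)
  · exact contDiff_pi.mp (contDiff_pi.mp contDiff_snd l) j

lemma aux_sum_identity {N m : ℕ}
    (ℓ : ((Fin N → ℝ) × (Fin m → ℝ) × Matrix (Fin m) (Fin N) ℝ × Matrix (Fin N) (Fin N) ℝ)
      →L[ℝ] ℝ)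
    (hℓsymm : ∀ μ ν : Fin N, ℓ (0, 0, 0, Matrix.single μ ν 1)
      = ℓ (0, 0, 0, Matrix.single ν μ 1))
    (g0 W : Matrix (Fin N) (Fin N) ℝ) (hg0 : g0.IsSymm) (μ ν : Fin N) :
    ∑ a, ℓ (0, 0, 0, (Matrix.single a μ 1)ᵀ * g0 * W
        + Wᵀ * g0 * Matrix.single a μ 1) * W a ν
      = 2 * ∑ ρ, ℓ (0, 0, 0, Matrix.single μ ρ 1) * (Wᵀ * g0 * W) ρ ν := by
  classical
  set K := Wᵀ * g0 * W with hK
  have hKsymm : ∀ i j, K i j = K j i := by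
    intro i j
    have h : Kᵀ = K := by
      simp [hK, Matrix.transpose_mul, Matrix.transpose_transpose, hg0.eq, Matrix.mul_assoc]
    have := congrFun (congrFun h i) j
    simpa [Matrix.transpose_apply] using this.symm
  set inc : Matrix (Fin N) (Fin N) ℝ →L[ℝ]
      ((Fin N → ℝ) × (Fin m → ℝ) × Matrix (Fin m) (Fin N) ℝ × Matrix (Fin N) (Fin N) ℝ) :=
    (ContinuousLinearMap.inr ℝ (Fin N → ℝ)
        ((Fin m → ℝ) × Matrix (Fin m) (Fin N) ℝ × Matrix (Fin N) (Fin N) ℝ)).comp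
      ((ContinuousLinearMap.inr ℝ (Fin m → ℝ)
          (Matrix (Fin m) (Fin N) ℝ × Matrix (Fin N) (Fin N) ℝ)).comp
        (ContinuousLinearMap.inr ℝ (Matrix (Fin m) (Fin N) ℝ) (Matrix (Fin N) (Fin N) ℝ)))
  set ℓ₄ := ℓ.comp inc with hℓ₄
  have h4 : ∀ X : Matrix (Fin N) (Fin N) ℝ, ℓ (0, 0, 0, X) = ℓ₄ X := fun X => rfl
  simp only [h4]
  set f : Matrix (Fin N) (Fin N) ℝ →ₗ[ℝ] Matrix (Fin N) (Fin N) ℝ :=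
    { toFun := fun E => Eᵀ * g0 * W + Wᵀ * g0 * E
      map_add' := by
        intro E1 E2
        simp only [Matrix.transpose_add, Matrix.add_mul, Matrix.mul_add]
        abel
      map_smul' := by
        intro c E
        simp only [Matrix.transpose_smul, Matrix.smul_mul, Matrix.mul_smul, smul_add,
          RingHom.id_apply] } with hf
  have hfap : ∀ E, (Matrix.single (E : Fin N) μ (1:ℝ))ᵀ * g0 * W
      + Wᵀ * g0 * Matrix.single E μ 1 = f (Matrix.single E μ 1) := fun _ => rfl
  simp only [hfap]
  have step1 : ∀ a : Fin N, ℓ₄ (f (Matrix.single a μ 1)) * W a ν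
      = ℓ₄ (f (W a ν • Matrix.single a μ 1)) := by
    intro a
    rw [f.map_smul, ℓ₄.map_smul, smul_eq_mul, mul_comm]
  simp only [step1, ← map_sum]
  have hS : ∑ a, W a ν • Matrix.single a μ (1:ℝ) = W * Matrix.single ν μ 1 := by
    ext b c
    simp [Matrix.sum_apply, Matrix.mul_apply, Matrix.single, mul_ite, ite_and]
  rw [hS]
  have hT : (Matrix.single ν μ (1:ℝ))ᵀ = Matrix.single μ ν 1 := by
    ext b c; simp [Matrix.single, Matrix.transpose_apply, and_comm]
  have hfW : f (W * Matrix.single ν μ 1)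
      = Matrix.single μ ν 1 * K + K * Matrix.single ν μ 1 := by
    show (W * Matrix.single ν μ 1)ᵀ * g0 * W
        + Wᵀ * g0 * (W * Matrix.single ν μ 1) = _
    rw [Matrix.transpose_mul, hT, hK]
    simp only [Matrix.mul_assoc]
  rw [hfW, map_add]
  have hdec1 : Matrix.single μ ν (1:ℝ) * K
      = ∑ ρ, K ν ρ • Matrix.single μ ρ 1 := by
    ext b c
    simp [Matrix.sum_apply, Matrix.mul_apply, Matrix.single, ite_and]
  have hdec2 : K * Matrix.single ν μ (1:ℝ)
      = ∑ ρ, K ρ ν • Matrix.single ρ μ 1 := by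
    ext b c
    simp [Matrix.sum_apply, Matrix.mul_apply, Matrix.single, ite_and]
  rw [hdec1, hdec2, map_sum, map_sum]
  simp only [ℓ₄.map_smul, smul_eq_mul]
  have hsymm4 : ∀ ρ, ℓ₄ (Matrix.single ρ μ (1:ℝ))
      = ℓ₄ (Matrix.single μ ρ 1) := by
    intro ρ; rw [← h4, ← h4]; exact hℓsymm ρ μ
  rw [two_mul]
  congr 1
  · exact Finset.sum_congr rfl fun ρ _ => by rw [hKsymm ν ρ, mul_comm]
  · exact Finset.sum_congr rfl fun ρ _ => by rw [hsymm4 ρ, mul_comm]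

/-- if the Hilbert formula holds on shell,
`𝔗^μ{}_ν = 2 (∂L/∂G_{μρ}) G_{ρν}`, then the SEM tensor density of the fully covariant,
fully dynamic parametrized theory vanishes: `𝔗̃^μ{}_ν = 0`. -/
theorem sem_tensor_parametrized_vanishes
    {N m : ℕ} (hN : 1 ≤ N) (hm : 1 ≤ m)
    (U : Set (Fin N → ℝ)) (hU : IsOpen U)
    -- the fiber metric g, smooth with symmetric invertible values
    (g : (Fin N → ℝ) → Matrix (Fin N) (Fin N) ℝ) (hgsmooth : ContDiff ℝ (⊤ : ℕ∞) g)
    (hgsymm : ∀ u, (g u).IsSymm) (hginv : ∀ u, IsUnit (g u).det)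
    -- the covariance field η, smooth on U with invertible Jacobian
    (η : (Fin N → ℝ) → (Fin N → ℝ)) (hη : ContDiffOn ℝ (⊤ : ℕ∞) η U)
    (hηjac : ∀ x ∈ U, IsUnit (jac η x).det)
    -- the pulled-back metric G = η*g
    (G : (Fin N → ℝ) → Matrix (Fin N) (Fin N) ℝ)
    (hG : ∀ x, G x = (jac η x)ᵀ * g (η x) * jac η x)
    -- the Lagrangian L(x, y, v, G), smooth with symmetric gradient in G
    (L : (Fin N → ℝ) × (Fin m → ℝ) × Matrix (Fin m) (Fin N) ℝ × Matrix (Fin N) (Fin N) ℝ → ℝ)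
    (hL : ContDiff ℝ (⊤ : ℕ∞) L)
    (hLsymm : ∀ p μ ν, fderiv ℝ L p (0, 0, 0, Matrix.single μ ν 1)
      = fderiv ℝ L p (0, 0, 0, Matrix.single ν μ 1))
    -- the matter fields φ, smooth on U
    (φ : (Fin N → ℝ) → (Fin m → ℝ)) (hφ : ContDiffOn ℝ (⊤ : ℕ∞) φ U)
    -- the parametrized Lagrangian Λ(x, y, v, u, w) := L(x, y, v, wᵀ g(u) w)
    (Λ : (Fin N → ℝ) × (Fin m → ℝ) × Matrix (Fin m) (Fin N) ℝ × (Fin N → ℝ)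
      × Matrix (Fin N) (Fin N) ℝ → ℝ)
    (hΛ : ∀ x y v u w, Λ (x, y, v, u, w) = L (x, y, v, wᵀ * g u * w))
    -- the lift coefficients C^A{}_ν and C^{Aμ}{}_ν, smooth on U
    (CA : Fin m → Fin N → (Fin N → ℝ) → ℝ) (hCA : ∀ A ν, ContDiffOn ℝ (⊤ : ℕ∞) (CA A ν) U)
    (CAμ : Fin m → Fin N → Fin N → (Fin N → ℝ) → ℝ)
    (hCAμ : ∀ A μ ν, ContDiffOn ℝ (⊤ : ℕ∞) (CAμ A μ ν) U)
    -- the SEM tensor density 𝔗^μ{}_ν of the original theory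
    (Tmix : Fin N → Fin N → (Fin N → ℝ) → ℝ)
    (hTmix : ∀ μ ν x, Tmix μ ν x
      = L (x, φ x, jac φ x, G x) * (if μ = ν then (1:ℝ) else 0)
        - (∑ A, fderiv ℝ L (x, φ x, jac φ x, G x)
            (0, 0, Matrix.single A μ 1, 0) * jac φ x A ν)
        + (∑ A, fderiv ℝ L (x, φ x, jac φ x, G x)
            (0, 0, Matrix.single A μ 1, 0) * CA A ν x)
        + ∑ A, ∑ ρ, pd (fun x' => fderiv ℝ L (x', φ x', jac φ x', G x')
            (0, 0, Matrix.single A ρ 1, 0) * CAμ A μ ν x') ρ x)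
    -- the SEM tensor density 𝔗̃^μ{}_ν of the parametrized theory
    (Ttil : Fin N → Fin N → (Fin N → ℝ) → ℝ)
    (hTtil : ∀ μ ν x, Ttil μ ν x
      = Λ (x, φ x, jac φ x, η x, jac η x) * (if μ = ν then (1:ℝ) else 0)
        - (∑ A, fderiv ℝ Λ (x, φ x, jac φ x, η x, jac η x)
            (0, 0, Matrix.single A μ 1, 0, 0) * jac φ x A ν)
        + (∑ A, fderiv ℝ Λ (x, φ x, jac φ x, η x, jac η x)
            (0, 0, Matrix.single A μ 1, 0, 0) * CA A ν x)
        + (∑ A, ∑ ρ, pd (fun x' => fderiv ℝ Λ (x', φ x', jac φ x', η x', jac η x')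
            (0, 0, Matrix.single A ρ 1, 0, 0) * CAμ A μ ν x') ρ x)
        - ∑ a, fderiv ℝ Λ (x, φ x, jac φ x, η x, jac η x)
            (0, 0, 0, 0, Matrix.single a μ 1) * jac η x a ν)
    -- the Hilbert formula on shell
    (hHilbert : ∀ x ∈ U, ∀ μ ν, Tmix μ ν x
      = 2 * ∑ ρ, fderiv ℝ L (x, φ x, jac φ x, G x)
          (0, 0, 0, Matrix.single μ ρ 1) * G x ρ ν) :
    ∀ x ∈ U, ∀ μ ν, Ttil μ ν x = 0  := by
  intro x hx μ ν
  have hΛs : ContDiff ℝ (⊤ : ℕ∞) Λ := by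
    have hΛeq : Λ = fun p => L (p.1, p.2.1, p.2.2.1, p.2.2.2.2ᵀ * g p.2.2.2.1 * p.2.2.2.2) := by
      funext p; obtain ⟨x', y, v, u, w⟩ := p; exact hΛ x' y v u w
    rw [hΛeq]
    apply hL.comp
    exact contDiff_fst.prodMk (contDiff_snd.fst.prodMk (contDiff_snd.snd.fst.prodMk
      ((aux_quad_contDiff g hgsmooth).comp
        (contDiff_snd.snd.snd.fst.prodMk contDiff_snd.snd.snd.snd))))
  have hval : ∀ x', Λ (x', φ x', jac φ x', η x', jac η x')
      = L (x', φ x', jac φ x', G x') := by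
    intro x'; rw [hΛ, ← hG]
  -- v-slot derivatives of Λ agree with those of L
  have hA : ∀ (x' : Fin N → ℝ) (A : Fin m) (ρ : Fin N),
      fderiv ℝ Λ (x', φ x', jac φ x', η x', jac η x')
          (0, 0, Matrix.single A ρ 1, 0, 0)
        = fderiv ℝ L (x', φ x', jac φ x', G x')
          (0, 0, Matrix.single A ρ 1, 0) := by
    intro x' A ρ
    set E := Matrix.single A ρ (1:ℝ) with hE
    apply aux_fderiv_dir _ _ _ (hΛs.differentiable (by simp) _)
    have hfun : (fun t : ℝ => Λ ((x', φ x', jac φ x', η x', jac η x')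
          + t • ((0:Fin N → ℝ), (0:Fin m → ℝ), E, (0:Fin N → ℝ),
            (0:Matrix (Fin N) (Fin N) ℝ))))
        = fun t => L (x', φ x', jac φ x' + t • E, G x') := by
      funext t
      simp only [Prod.smul_mk, smul_zero, Prod.mk_add_mk, add_zero]
      rw [hΛ, ← hG]
    rw [hfun]
    have haff : HasDerivAt (fun t : ℝ => jac φ x' + t • E) E 0 := by
      simpa using ((hasDerivAt_id (0:ℝ)).smul_const E).const_add (jac φ x')
    have hc : HasDerivAt (fun t : ℝ => ((x', φ x', jac φ x' + t • E, G x') :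
        (Fin N → ℝ) × (Fin m → ℝ) × Matrix (Fin m) (Fin N) ℝ × Matrix (Fin N) (Fin N) ℝ))
        ((0, 0, E, 0)) 0 :=
      (hasDerivAt_const (0:ℝ) x').prodMk ((hasDerivAt_const (0:ℝ) (φ x')).prodMk
        (haff.prodMk (hasDerivAt_const (0:ℝ) (G x'))))
    have hfd : HasFDerivAt L (fderiv ℝ L (x', φ x', jac φ x', G x'))
        (x', φ x', jac φ x' + (0:ℝ) • E, G x') := by
      simpa using ((hL.differentiable (by simp)) _).hasFDerivAt
    exact hfd.comp_hasDerivAt 0 hc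
  -- w-slot derivatives of Λ
  have hB : ∀ a : Fin N,
      fderiv ℝ Λ (x, φ x, jac φ x, η x, jac η x)
          (0, 0, 0, 0, Matrix.single a μ 1)
        = fderiv ℝ L (x, φ x, jac φ x, G x)
          (0, 0, 0, (Matrix.single a μ 1)ᵀ * g (η x) * jac η x
            + (jac η x)ᵀ * g (η x) * Matrix.single a μ 1) := by
    intro a
    set E := Matrix.single a μ (1:ℝ) with hE
    set W := jac η x with hW
    set g0 := g (η x) with hg0
    set K := Wᵀ * g0 * W with hKdef
    have hGK : G x = K := hG x
    set D := Eᵀ * g0 * W + Wᵀ * g0 * E with hD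
    set D2 := Eᵀ * g0 * E with hD2
    apply aux_fderiv_dir _ _ _ (hΛs.differentiable (by simp) _)
    have hfun : (fun t : ℝ => Λ ((x, φ x, jac φ x, η x, W)
          + t • ((0:Fin N → ℝ), (0:Fin m → ℝ), (0:Matrix (Fin m) (Fin N) ℝ),
            (0:Fin N → ℝ), E)))
        = fun t => L (x, φ x, jac φ x, K + t • D + (t*t) • D2) := by
      funext t
      simp only [Prod.smul_mk, smul_zero, Prod.mk_add_mk, add_zero]
      rw [hΛ]
      congr 1
      simp only [Prod.mk.injEq, true_and]
      simp only [hKdef, hD, hD2, hg0, Matrix.transpose_add, Matrix.transpose_smul,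
        Matrix.add_mul, Matrix.mul_add, Matrix.smul_mul, Matrix.mul_smul, smul_smul, smul_add]
      abel
    rw [hfun]
    have hM : HasDerivAt (fun t : ℝ => K + t • D + (t*t) • D2) D 0 := by
      have h1 : HasDerivAt (fun t : ℝ => t • D) D 0 := by
        simpa using (hasDerivAt_id (0:ℝ)).smul_const D
      have h2 : HasDerivAt (fun t : ℝ => (t*t) • D2) ((0:ℝ) • D2) 0 := by
        simpa using ((hasDerivAt_id (0:ℝ)).mul (hasDerivAt_id (0:ℝ))).smul_const D2
      have h3 := ((hasDerivAt_const (0:ℝ) K).add h1).add h2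
      rw [zero_add, zero_smul, add_zero] at h3
      exact h3
    have hc : HasDerivAt (fun t : ℝ => ((x, φ x, jac φ x, K + t • D + (t*t) • D2) :
        (Fin N → ℝ) × (Fin m → ℝ) × Matrix (Fin m) (Fin N) ℝ × Matrix (Fin N) (Fin N) ℝ))
        ((0, 0, 0, D)) 0 :=
      (hasDerivAt_const (0:ℝ) x).prodMk ((hasDerivAt_const (0:ℝ) (φ x)).prodMk
        ((hasDerivAt_const (0:ℝ) (jac φ x)).prodMk hM))
    have hfd : HasFDerivAt L (fderiv ℝ L (x, φ x, jac φ x, G x))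
        (x, φ x, jac φ x, K + (0:ℝ) • D + ((0:ℝ)*0) • D2) := by
      rw [hGK]
      simpa using ((hL.differentiable (by simp)) _).hasFDerivAt
    exact hfd.comp_hasDerivAt 0 hc
  -- the w-sum equals the Hilbert expression, hence Tmix on shell
  have hwsum : ∑ a, fderiv ℝ Λ (x, φ x, jac φ x, η x, jac η x)
        (0, 0, 0, 0, Matrix.single a μ 1) * jac η x a ν = Tmix μ ν x := by
    simp only [hB]
    rw [hHilbert x hx μ ν]
    have := aux_sum_identity (fderiv ℝ L (x, φ x, jac φ x, G x))
      (fun μ' ν' => hLsymm (x, φ x, jac φ x, G x) μ' ν')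
      (g (η x)) (jac η x) (hgsymm (η x)) μ ν
    rw [this]
    rw [← hG x]
  rw [hTtil]
  simp only [hval, hA]
  rw [← hTmix μ ν x, hwsum, sub_self]
end

section
/- Let A : ℝ⁴ → ℝ⁴ be smooth (the components A_μ of an electromagnetic potential 1-form), and let G : ℝ⁴ → Matrix 4 4 ℝ be smooth with symmetric invertible values of negative determinant. Define F_{μν}(x) := ∂_μ A_ν(x) − ∂_ν A_μ(x) and the electromagnetic Lagrangian L[A, G](x) := −¼ Σ_{μ,ν,α,β} (G(x)⁻¹)^{μα} (G(x)⁻¹)^{νβ} F_{αβ}(x) F_{μν}(x) · √(−det G(x)). Let σ : ℝ⁴ → ℝ⁴ be a C^∞ diffeomorphism with det Dσ(x) > 0 for all x. Define the push-forwards A' and G' by A'_μ(σ(x)) := Σ_α A_α(x) (Dσ(x)⁻¹)^α{}_μ and G'(σ(x)) := (Dσ(x)⁻¹)ᵀ G(x) (Dσ(x)⁻¹). Then for every x ∈ ℝ⁴: L[A', G'](σ(x)) · det Dσ(x) = L[A, G](x). -/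
open Matrix BigOperators

/-- The field strength `F_{μν} = ∂_μ A_ν − ∂_ν A_μ` of a potential `A`. -/
noncomputable def Fstr (A : (Fin 4 → ℝ) → (Fin 4 → ℝ)) (μ ν : Fin 4) (x : Fin 4 → ℝ) : ℝ :=
  pd (fun x' => A x' ν) μ x - pd (fun x' => A x' μ) ν x

/-- The electromagnetic Lagrangian density
`L[A, G] = −¼ G^{μα} G^{νβ} F_{αβ} F_{μν} √(−det G)`. -/
noncomputable def emLag (A : (Fin 4 → ℝ) → (Fin 4 → ℝ))
    (G : (Fin 4 → ℝ) → Matrix (Fin 4) (Fin 4) ℝ) (x : Fin 4 → ℝ) : ℝ :=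
  -(1/4) * (∑ μ, ∑ ν, ∑ α, ∑ β,
      (G x)⁻¹ μ α * (G x)⁻¹ ν β * Fstr A α β x * Fstr A μ ν x) *
    Real.sqrt (-(G x).det)

lemma clm_apply_sum {N : ℕ} {E : Type*} [NormedAddCommGroup E] [NormedSpace ℝ E]
    (L : (Fin N → ℝ) →L[ℝ] E) (v : Fin N → ℝ) :
    L v = ∑ β, v β • L (Pi.single β 1) := by
  have h : v = ∑ β, v β • (Pi.single β 1 : Fin N → ℝ) := by
    ext i
    simp [Pi.single_apply, Finset.sum_apply]
  conv_lhs => rw [h]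
  simp [map_sum]

lemma fderiv_component {N M : ℕ} (f : (Fin N → ℝ) → (Fin M → ℝ)) (x : Fin N → ℝ)
    (hf : DifferentiableAt ℝ f x) (a : Fin M) :
    fderiv ℝ (fun z => f z a) x = (ContinuousLinearMap.proj a).comp (fderiv ℝ f x) := by
  have h := fderiv_comp x ((ContinuousLinearMap.proj a :
      (Fin M → ℝ) →L[ℝ] ℝ)).differentiableAt hf
  rw [ContinuousLinearMap.fderiv] at h
  exact h

lemma jac_apply_pd {N M : ℕ} (f : (Fin N → ℝ) → (Fin M → ℝ)) (x : Fin N → ℝ)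
    (hf : DifferentiableAt ℝ f x) (a : Fin M) (μ : Fin N) :
    jac f x a μ = pd (fun z => f z a) μ x := by
  simp [jac, pd, fderiv_component f x hf a]

lemma pd_comp {N M : ℕ} (f : (Fin M → ℝ) → ℝ) (g : (Fin N → ℝ) → (Fin M → ℝ))
    (x : Fin N → ℝ) (μ : Fin N) (hf : DifferentiableAt ℝ f (g x))
    (hg : DifferentiableAt ℝ g x) :
    pd (fun z => f (g z)) μ x = ∑ β, pd f β (g x) * pd (fun z => g z β) μ x := by
  have h : pd (fun z => f (g z)) μ x
      = fderiv ℝ f (g x) (fderiv ℝ g x (Pi.single μ 1)) := by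
    have := fderiv_comp x hf hg
    simp only [pd]
    rw [show (fun z => f (g z)) = f ∘ g from rfl, this]
    rfl
  rw [h, clm_apply_sum (fderiv ℝ f (g x)) (fderiv ℝ g x (Pi.single μ 1))]
  refine Finset.sum_congr rfl fun β _ => ?_
  rw [smul_eq_mul, mul_comm]
  congr 1
  rw [pd, fderiv_component g x hg β]
  rfl

lemma pd_mul {N : ℕ} (f g : (Fin N → ℝ) → ℝ) (x : Fin N → ℝ) (μ : Fin N)
    (hf : DifferentiableAt ℝ f x) (hg : DifferentiableAt ℝ g x) :
    pd (fun z => f z * g z) μ x = pd f μ x * g x + f x * pd g μ x := by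
  simp [pd, fderiv_fun_mul hf hg]
  ring

lemma pd_sum {N : ℕ} {ι : Type*} (s : Finset ι) (f : ι → (Fin N → ℝ) → ℝ)
    (x : Fin N → ℝ) (μ : Fin N) (hf : ∀ i ∈ s, DifferentiableAt ℝ (f i) x) :
    pd (fun z => ∑ i ∈ s, f i z) μ x = ∑ i ∈ s, pd (f i) μ x := by
  simp [pd, fderiv_fun_sum hf]

lemma pd_pd_symm {N : ℕ} (f : (Fin N → ℝ) → ℝ) (hf : ContDiff ℝ (⊤ : ℕ∞) f)
    (x : Fin N → ℝ) (μ ν : Fin N) :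
    pd (fun z => pd f ν z) μ x = pd (fun z => pd f μ z) ν x := by
  have hsymm : IsSymmSndFDerivAt ℝ f x := (hf.contDiffAt).isSymmSndFDerivAt (by
    rw [minSmoothness_of_isRCLikeNormedField]; exact WithTop.coe_le_coe.mpr le_top)
  have hdf : ContDiff ℝ (⊤ : ℕ∞) (fderiv ℝ f) := hf.fderiv_right (by exact_mod_cast le_top)
  have key : ∀ (v w : Fin N → ℝ),
      fderiv ℝ (fun z => fderiv ℝ f z v) x w = fderiv ℝ (fderiv ℝ f) x w v := by
    intro v w
    have h := fderiv_clm_apply (hdf.differentiable (by simp) x)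
      (differentiableAt_const v)
    simp only [fderiv_const_apply] at h
    rw [show (fun z => fderiv ℝ f z v) = (fun z => (fderiv ℝ f z) ((fun _ => v) z)) from rfl, h]
    simp
  simp only [pd]
  rw [key, key]
  exact hsymm _ _

lemma jac_comp {N M K : ℕ} (g : (Fin M → ℝ) → (Fin K → ℝ)) (f : (Fin N → ℝ) → (Fin M → ℝ))
    (x : Fin N → ℝ) (hg : DifferentiableAt ℝ g (f x)) (hf : DifferentiableAt ℝ f x) :
    jac (fun z => g (f z)) x = jac g (f x) * jac f x := by
  ext a μ
  have h : fderiv ℝ (fun z => g (f z)) x = (fderiv ℝ g (f x)).comp (fderiv ℝ f x) :=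
    fderiv_comp x hg hf
  simp only [jac, Matrix.of_apply, Matrix.mul_apply, h, ContinuousLinearMap.comp_apply]
  rw [clm_apply_sum (fderiv ℝ g (f x)) (fderiv ℝ f x (Pi.single μ 1))]
  simp [Finset.sum_apply, mul_comm]

lemma jac_id {N : ℕ} (x : Fin N → ℝ) : jac (fun z : Fin N → ℝ => z) x = 1 := by
  ext a μ
  simp [jac, fderiv_id', Matrix.one_apply, Pi.single_apply, eq_comm]

lemma quad_eq_trace {n : ℕ} (M F : Matrix (Fin n) (Fin n) ℝ) :
    (∑ μ, ∑ ν, ∑ α, ∑ β, M μ α * M ν β * F α β * F μ ν)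
      = Matrix.trace (M * F * Mᵀ * Fᵀ) := by
  simp only [Matrix.trace, Matrix.diag_apply, Matrix.mul_apply, Matrix.transpose_apply,
    Finset.sum_mul]
  refine Finset.sum_congr rfl fun μ _ => Finset.sum_congr rfl fun ν _ => ?_
  rw [Finset.sum_comm]
  exact Finset.sum_congr rfl fun β _ => Finset.sum_congr rfl fun α _ => by ring

lemma comp_smooth {N M : ℕ} (f : (Fin N → ℝ) → (Fin M → ℝ)) (hf : ContDiff ℝ (⊤ : ℕ∞) f)
    (a : Fin M) : ContDiff ℝ (⊤ : ℕ∞) (fun z => f z a) :=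
  (ContinuousLinearMap.proj a : (Fin M → ℝ) →L[ℝ] ℝ).contDiff.comp hf

lemma pd_smooth {N : ℕ} (f : (Fin N → ℝ) → ℝ) (hf : ContDiff ℝ (⊤ : ℕ∞) f) (ν : Fin N) :
    ContDiff ℝ (⊤ : ℕ∞) (fun z => pd f ν z) := by
  exact (hf.fderiv_right (by exact_mod_cast le_top)).clm_apply contDiff_const
/-- covariance of the electromagnetic Lagrangian, eqn. (2) of the paper:
for a diffeomorphism `σ` with positive Jacobian determinant, with the potential pushed
forward as a 1-form and the metric pushed forward as a covariant 2-tensor,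
`L[A', G'](σ(x)) · det Dσ(x) = L[A, G](x)`. -/
theorem em_lagrangian_covariance
    (A : (Fin 4 → ℝ) → (Fin 4 → ℝ)) (hA : ContDiff ℝ (⊤ : ℕ∞) A)
    (G : (Fin 4 → ℝ) → Matrix (Fin 4) (Fin 4) ℝ) (hGsmooth : ContDiff ℝ (⊤ : ℕ∞) G)
    (hGsymm : ∀ x, (G x).IsSymm) (hGdet : ∀ x, (G x).det < 0)
    -- a C^∞ diffeomorphism σ of ℝ⁴ with positive Jacobian determinant
    (σ σinv : (Fin 4 → ℝ) → (Fin 4 → ℝ))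
    (hσ : ContDiff ℝ (⊤ : ℕ∞) σ) (hσinv : ContDiff ℝ (⊤ : ℕ∞) σinv)
    (hσl : ∀ x, σinv (σ x) = x) (hσr : ∀ x', σ (σinv x') = x')
    (hσdet : ∀ x, 0 < (jac σ x).det)
    -- the push-forward potential A' and metric G'
    (A' : (Fin 4 → ℝ) → (Fin 4 → ℝ))
    (hA' : ∀ x μ, A' (σ x) μ = ∑ α, A x α * (jac σ x)⁻¹ α μ)
    (G' : (Fin 4 → ℝ) → Matrix (Fin 4) (Fin 4) ℝ)
    (hG' : ∀ x, G' (σ x) = ((jac σ x)⁻¹)ᵀ * G x * (jac σ x)⁻¹) :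
    ∀ x, emLag A' G' (σ x) * (jac σ x).det = emLag A G x := by
  intro x
  have hAd : Differentiable ℝ A := hA.differentiable (by simp)
  have hσd : Differentiable ℝ σ := hσ.differentiable (by simp)
  have hσinvd : Differentiable ℝ σinv := hσinv.differentiable (by simp)
  have hAc : ∀ a, ContDiff ℝ (⊤ : ℕ∞) (fun z => A z a) := fun a => comp_smooth A hA a
  have hsc : ∀ a, ContDiff ℝ (⊤ : ℕ∞) (fun z => σinv z a) := fun a => comp_smooth σinv hσinv a
  have hpdc : ∀ a ν, ContDiff ℝ (⊤ : ℕ∞) (fun z => pd (fun z' => σinv z' a) ν z) :=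
    fun a ν => pd_smooth _ (hsc a) ν
  -- the Jacobian of σinv is the inverse Jacobian of σ
  have hJ1 : ∀ z, jac σinv (σ z) * jac σ z = 1 := by
    intro z
    have h := jac_comp σinv σ z (hσinvd _) (hσd _)
    have h2 : (fun w => σinv (σ w)) = fun w : Fin 4 → ℝ => w := funext hσl
    rw [h2, jac_id] at h
    exact h.symm
  have hJinv : ∀ z, (jac σ z)⁻¹ = jac σinv (σ z) := fun z => Matrix.inv_eq_left_inv (hJ1 z)
  -- the push-forward potential as a function
  have hA'fun : ∀ ν, (fun y => A' y ν)
      = fun y => ∑ a, A (σinv y) a * pd (fun z => σinv z a) ν y := by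
    intro ν; funext y
    have hy : σ (σinv y) = y := hσr y
    have h := hA' (σinv y) ν
    rw [hy] at h
    rw [h, hJinv (σinv y), hy]
    exact Finset.sum_congr rfl fun a _ => by rw [jac_apply_pd σinv y (hσinvd y) a ν]
  -- the partial derivatives of the push-forward potential
  have hpdA' : ∀ (μ ν : Fin 4) (y : Fin 4 → ℝ),
      pd (fun z => A' z ν) μ y
        = ∑ a, ((∑ b, pd (fun w => A w a) b (σinv y) * pd (fun z => σinv z b) μ y)
              * pd (fun z => σinv z a) ν y
            + A (σinv y) a * pd (fun z => pd (fun z' => σinv z' a) ν z) μ y) := by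
    intro μ ν y
    have hd1 : ∀ a, DifferentiableAt ℝ (fun z => A (σinv z) a) y :=
      fun a => (((hAc a).comp hσinv).differentiable (by simp)) y
    have hd2 : ∀ a, DifferentiableAt ℝ (fun z => pd (fun z' => σinv z' a) ν z) y :=
      fun a => ((hpdc a ν).differentiable (by simp)) y
    calc pd (fun z => A' z ν) μ y
        = pd (fun z => ∑ a, A (σinv z) a * pd (fun z' => σinv z' a) ν z) μ y := by
          rw [hA'fun ν]
      _ = ∑ a, pd (fun z => A (σinv z) a * pd (fun z' => σinv z' a) ν z) μ y :=
          pd_sum _ _ y μ (fun a _ => (hd1 a).mul (hd2 a))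
      _ = ∑ a, (pd (fun z => A (σinv z) a) μ y * pd (fun z' => σinv z' a) ν y
            + A (σinv y) a * pd (fun z => pd (fun z' => σinv z' a) ν z) μ y) :=
          Finset.sum_congr rfl fun a _ => pd_mul _ _ y μ (hd1 a) (hd2 a)
      _ = ∑ a, ((∑ b, pd (fun w => A w a) b (σinv y) * pd (fun z => σinv z b) μ y)
              * pd (fun z => σinv z a) ν y
            + A (σinv y) a * pd (fun z => pd (fun z' => σinv z' a) ν z) μ y) := by
          refine Finset.sum_congr rfl fun a _ => ?_
          have hc : pd (fun z => A (σinv z) a) μ y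
              = ∑ b, pd (fun w => A w a) b (σinv y) * pd (fun z => σinv z b) μ y :=
            pd_comp (fun w => A w a) σinv y μ ((hAc a).differentiable (by simp) (σinv y))
              (hσinvd y)
          rw [hc]
  -- transformation of the field strength
  have hF' : ∀ μ ν, Fstr A' μ ν (σ x)
      = ∑ a, ∑ b, jac σinv (σ x) a μ * jac σinv (σ x) b ν * Fstr A a b x := by
    intro μ ν
    have hswap : ∀ a, pd (fun z => pd (fun z' => σinv z' a) ν z) μ (σ x)
        = pd (fun z => pd (fun z' => σinv z' a) μ z) ν (σ x) :=
      fun a => pd_pd_symm _ (hsc a) (σ x) μ ν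
    have hjp : ∀ (b : Fin 4) (κ : Fin 4),
        pd (fun z => σinv z b) κ (σ x) = jac σinv (σ x) b κ :=
      fun b κ => (jac_apply_pd σinv (σ x) (hσinvd (σ x)) b κ).symm
    have hxx : σinv (σ x) = x := hσl x
    rw [show Fstr A' μ ν (σ x)
        = pd (fun z => A' z ν) μ (σ x) - pd (fun z => A' z μ) ν (σ x) from rfl]
    rw [hpdA' μ ν (σ x), hpdA' ν μ (σ x)]
    simp only [hswap, hjp, hxx]
    rw [← Finset.sum_sub_distrib]
    have : ∀ a, ((∑ b, pd (fun w => A w a) b x * jac σinv (σ x) b μ) * jac σinv (σ x) a ν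
          + A x a * pd (fun z => pd (fun z' => σinv z' a) μ z) ν (σ x))
        - ((∑ b, pd (fun w => A w a) b x * jac σinv (σ x) b ν) * jac σinv (σ x) a μ
          + A x a * pd (fun z => pd (fun z' => σinv z' a) μ z) ν (σ x))
        = ∑ b, (pd (fun w => A w a) b x * jac σinv (σ x) b μ * jac σinv (σ x) a ν
            - pd (fun w => A w a) b x * jac σinv (σ x) b ν * jac σinv (σ x) a μ) := by
      intro a
      rw [Finset.sum_sub_distrib, ← Finset.sum_mul, ← Finset.sum_mul]
      ring
    rw [Finset.sum_congr rfl fun a _ => this a]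
    rw [show (∑ a, ∑ b, jac σinv (σ x) a μ * jac σinv (σ x) b ν * Fstr A a b x)
        = ∑ a, ∑ b, (jac σinv (σ x) a μ * jac σinv (σ x) b ν * pd (fun w => A w b) a x
            - jac σinv (σ x) a μ * jac σinv (σ x) b ν * pd (fun w => A w a) b x) from
      Finset.sum_congr rfl fun a _ => Finset.sum_congr rfl fun b _ => by
        rw [show Fstr A a b x
          = pd (fun w => A w b) a x - pd (fun w => A w a) b x from rfl]; ring]
    simp only [Finset.sum_sub_distrib]
    congr 1
    · rw [Finset.sum_comm]
      exact Finset.sum_congr rfl fun a _ => Finset.sum_congr rfl fun b _ => by ring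
    · exact Finset.sum_congr rfl fun a _ => Finset.sum_congr rfl fun b _ => by ring
  -- matrix bookkeeping
  set J := jac σ x with hJdef
  set Jinv := jac σinv (σ x) with hJinvdef
  have hJL : Jinv * J = 1 := hJ1 x
  have hJR : J * Jinv = 1 := by
    have := mul_eq_one_comm.mp hJL
    exact this
  have hJinv' : J⁻¹ = Jinv := hJinv x
  have hJinvinv : Jinv⁻¹ = J := Matrix.inv_eq_right_inv hJL
  set Fm : Matrix (Fin 4) (Fin 4) ℝ := Matrix.of (fun μ ν => Fstr A μ ν x) with hFm
  set Fm' : Matrix (Fin 4) (Fin 4) ℝ := Matrix.of (fun μ ν => Fstr A' μ ν (σ x)) with hFm'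
  have hFmat : Fm' = Jinvᵀ * Fm * Jinv := by
    ext μ ν
    rw [hFm', Matrix.of_apply, hF' μ ν]
    simp only [Matrix.mul_apply, Matrix.transpose_apply, Finset.sum_mul, hFm,
      Matrix.of_apply]
    rw [Finset.sum_comm]
    exact Finset.sum_congr rfl fun a _ => Finset.sum_congr rfl fun b _ => by ring
  set Mm : Matrix (Fin 4) (Fin 4) ℝ := (G x)⁻¹ with hMm
  have hM' : (G' (σ x))⁻¹ = J * Mm * Jᵀ := by
    rw [hG' x, hJinv']
    rw [Matrix.mul_inv_rev, Matrix.mul_inv_rev]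
    rw [hJinvinv, ← Matrix.transpose_nonsing_inv, hJinvinv]
    rw [Matrix.mul_assoc]
  -- trace invariance
  have htrace : Matrix.trace ((G' (σ x))⁻¹ * Fm' * ((G' (σ x))⁻¹)ᵀ * Fm'ᵀ)
      = Matrix.trace (Mm * Fm * Mmᵀ * Fmᵀ) := by
    rw [hM', hFmat]
    have h1 : Jᵀ * Jinvᵀ = 1 := by rw [← Matrix.transpose_mul, hJL, Matrix.transpose_one]
    have c1 : ∀ X : Matrix (Fin 4) (Fin 4) ℝ, Jᵀ * (Jinvᵀ * X) = X := fun X => by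
      rw [← Matrix.mul_assoc, h1, Matrix.one_mul]
    have c2 : ∀ X : Matrix (Fin 4) (Fin 4) ℝ, Jinv * (J * X) = X := fun X => by
      rw [← Matrix.mul_assoc, hJL, Matrix.one_mul]
    simp only [Matrix.transpose_mul, Matrix.transpose_transpose]
    simp only [Matrix.mul_assoc]
    rw [c1, c2, c1]
    rw [Matrix.trace_mul_comm]
    simp only [Matrix.mul_assoc]
    rw [hJL, Matrix.mul_one]
  -- the scalar contraction is invariant
  have hsum : (∑ μ, ∑ ν, ∑ α, ∑ β,
        (G' (σ x))⁻¹ μ α * (G' (σ x))⁻¹ ν β * Fstr A' α β (σ x) * Fstr A' μ ν (σ x))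
      = ∑ μ, ∑ ν, ∑ α, ∑ β,
        (G x)⁻¹ μ α * (G x)⁻¹ ν β * Fstr A α β x * Fstr A μ ν x := by
    have e1 : (∑ μ, ∑ ν, ∑ α, ∑ β,
        (G' (σ x))⁻¹ μ α * (G' (σ x))⁻¹ ν β * Fstr A' α β (σ x) * Fstr A' μ ν (σ x))
        = ∑ μ, ∑ ν, ∑ α, ∑ β,
        (G' (σ x))⁻¹ μ α * (G' (σ x))⁻¹ ν β * Fm' α β * Fm' μ ν := rfl
    have e2 : (∑ μ, ∑ ν, ∑ α, ∑ β,
        (G x)⁻¹ μ α * (G x)⁻¹ ν β * Fstr A α β x * Fstr A μ ν x)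
        = ∑ μ, ∑ ν, ∑ α, ∑ β, Mm μ α * Mm ν β * Fm α β * Fm μ ν := rfl
    rw [e1, e2, quad_eq_trace, quad_eq_trace, htrace]
  -- determinant transformation
  have hdJ : (0:ℝ) < J.det := hσdet x
  have hdJne : J.det ≠ 0 := ne_of_gt hdJ
  have hdetJinv : Jinv.det = J.det⁻¹ := by
    have h := congrArg Matrix.det hJL
    rw [Matrix.det_mul, Matrix.det_one] at h
    field_simp at h ⊢
    linarith [h]
  have hdetG' : (G' (σ x)).det = J.det⁻¹ * J.det⁻¹ * (G x).det := by
    rw [hG' x, Matrix.det_mul, Matrix.det_mul, Matrix.det_transpose, hJinv',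
      hdetJinv]
    ring
  have hsqrt : Real.sqrt (-(G' (σ x)).det) = J.det⁻¹ * Real.sqrt (-(G x).det) := by
    rw [hdetG']
    rw [show -(J.det⁻¹ * J.det⁻¹ * (G x).det) = J.det⁻¹ * (J.det⁻¹ * -(G x).det) by ring]
    rw [Real.sqrt_mul (by positivity), Real.sqrt_mul (by positivity)]
    rw [← mul_assoc, Real.mul_self_sqrt (by positivity)]
  -- put everything together
  rw [show emLag A' G' (σ x) = -(1/4) * (∑ μ, ∑ ν, ∑ α, ∑ β,
        (G' (σ x))⁻¹ μ α * (G' (σ x))⁻¹ ν β * Fstr A' α β (σ x) * Fstr A' μ ν (σ x)) *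
      Real.sqrt (-(G' (σ x)).det) from rfl]
  rw [hsum, hsqrt]
  rw [show emLag A G x = -(1/4) * (∑ μ, ∑ ν, ∑ α, ∑ β,
        (G x)⁻¹ μ α * (G x)⁻¹ ν β * Fstr A α β x * Fstr A μ ν x) *
      Real.sqrt (-(G x).det) from rfl]
  field_simp
end

section
/- Let F be a real antisymmetric 4×4 matrix, and on the open set of invertible real 4×4 matrices G with det G < 0 define L(G) := −¼ Σ_{μ,ν,α,β} (G⁻¹)^{μα} (G⁻¹)^{νβ} F_{αβ} F_{μν} · √(−det G). Then L is differentiable at every symmetric invertible G with det G < 0, its gradient there is symmetric, and for all indices μ, ν: 2 Σ_ρ (∂L/∂G_{μρ})(G) · G_{ρν} = −( ¼ δ^μ{}_ν Σ_{α,β} F_{αβ} F^{αβ} + Σ_α F^{αμ} F_{να} ) · √(−det G), where indices are raised with G⁻¹: F^{αβ} := Σ_{γ,δ} (G⁻¹)^{αγ} (G⁻¹)^{βδ} F_{γδ}. -/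
open Matrix BigOperators

/-!
Write `Y = G⁻¹`, so that `F^{αβ} = (Y F Yᵀ)^{αβ}` and `L(G) = -¼ tr(Y F Yᵀ Fᵀ) √(-det G)`.
Jacobi's formula gives `d √(-det G) = ½ √(-det G) tr(Y dG)` and the inverse has derivative
`dY = -Y dG Y`; as `F` is antisymmetric the bilinear form `tr(Y F Zᵀ Fᵀ)` is symmetric, so
`dL = tr(M dG)` with `M = -(√(-det G)/8) (F_{αβ}F^{αβ} Y + 4 Y F Yᵀ F Y)`.
For symmetric `G` the matrix `M` is symmetric, and
`M G = -(√(-det G)/8) (F_{αβ}F^{αβ} 1 + 4 Y F Yᵀ F)`, whose entries give the SEM tensor density.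
-/

theorem Matrix.mul_mul_transpose_apply {m n R : Type*} [Fintype n] [CommSemiring R]
    (A : Matrix m n R) (F : Matrix n n R) (B : Matrix m n R) (i j : m) :
    (A * F * Bᵀ) i j = ∑ k, ∑ l, A i k * B j l * F k l := by
  simp only [mul_apply, transpose_apply, Finset.sum_mul]
  rw [Finset.sum_comm]
  refine Finset.sum_congr rfl fun k _ => Finset.sum_congr rfl fun l _ => by ring

theorem MulEquiv.map_ringInverse {M N : Type*} [MonoidWithZero M] [MonoidWithZero N]
    (f : M ≃* N) (x : M) : f (Ring.inverse x) = Ring.inverse (f x) := by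
  by_cases hx : IsUnit x
  · obtain ⟨u, rfl⟩ := hx
    rw [Ring.inverse_unit]
    change f ↑u⁻¹ = Ring.inverse (Units.map f.toMonoidHom u : N)
    rw [Ring.inverse_unit, Units.coe_map_inv]
    rfl
  · rw [Ring.inverse_non_unit x hx, Ring.inverse_non_unit _ ((MulEquiv.isUnit_map f).not.mpr hx),
      map_zero]

namespace Matrix

variable {n : Type*} [Fintype n] [DecidableEq n]

noncomputable def traceMulCLM (M : Matrix n n ℝ) : Matrix n n ℝ →L[ℝ] ℝ :=
  (traceLinearMap n ℝ ℝ ∘ₗ LinearMap.mulLeft ℝ M).toContinuousLinearMap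

@[simp] theorem traceMulCLM_apply (M H : Matrix n n ℝ) : traceMulCLM M H = trace (M * H) := rfl

theorem differentiable_det : Differentiable ℝ (det : Matrix n n ℝ → ℝ) := by
  rw [show (det : Matrix n n ℝ → ℝ)
      = fun A => ∑ σ : Equiv.Perm n, Equiv.Perm.sign σ • ∏ i, A (σ i) i from funext det_apply]
  fun_prop

theorem det_add_smul_single (A : Matrix n n ℝ) (i j : n) (t : ℝ) :
    det (A + t • single i j 1) = det A + t * adjugate A j i := by
  have hrow : A + t • single i j 1 = A.updateRow i (A i + t • Pi.single j 1) := by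
    ext a b
    rcases eq_or_ne a i with rfl | h
    · simp [single_apply, Pi.single_apply, eq_comm]
    · simp [h, h.symm, updateRow_ne]
  rw [hrow, det_updateRow_add, updateRow_eq_self, det_updateRow_smul, adjugate_apply]

theorem fderiv_det_apply_single (A : Matrix n n ℝ) (i j : n) :
    fderiv ℝ det A (single i j 1) = adjugate A j i := by
  have hline : HasDerivAt (fun t : ℝ => A + t • single i j 1) (single i j 1) 0 := by
    simpa using ((hasDerivAt_id (0 : ℝ)).smul_const (single i j (1 : ℝ))).const_add A
  have h1 := (differentiable_det A).hasFDerivAt.comp_hasDerivAt_of_eq (0 : ℝ) hline (by simp)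
  have h2 : HasDerivAt (fun t : ℝ => det (A + t • single i j 1)) (adjugate A j i) 0 := by
    simp_rw [det_add_smul_single]
    simpa using ((hasDerivAt_id (0 : ℝ)).mul_const (adjugate A j i)).const_add (det A)
  exact h1.unique h2

/-- Jacobi's formula. -/
theorem hasFDerivAt_det (A : Matrix n n ℝ) : HasFDerivAt det (traceMulCLM (adjugate A)) A := by
  refine (differentiable_det A).hasFDerivAt.congr_fderiv ?_
  ext H : 1
  conv_lhs => rw [matrix_eq_sum_single H]
  have hsingle : ∀ i j, single i j (H i j) = H i j • single i j 1 := by simp [smul_single]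
  simp only [map_sum, hsingle, map_smul, fderiv_det_apply_single, smul_eq_mul, traceMulCLM_apply,
    trace, diag, mul_apply]
  rw [Finset.sum_comm]
  simp only [mul_comm]

theorem adjugate_eq_det_smul_inv {A : Matrix n n ℝ} (hA : A.det ≠ 0) :
    adjugate A = A.det • A⁻¹ := by
  rw [inv_def, Ring.inverse_eq_inv', smul_smul, mul_inv_cancel₀ hA, one_smul]

theorem hasFDerivAt_sqrt_neg_det {A : Matrix n n ℝ} (hA : A.det < 0) :
    HasFDerivAt (fun K : Matrix n n ℝ => √(-K.det)) ((√(-A.det) / 2) • traceMulCLM A⁻¹) A := by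
  refine ((hasFDerivAt_det A).neg.sqrt (by simpa using hA.ne)).congr_fderiv ?_
  ext H : 1
  simp only [_root_.smul_apply, _root_.neg_apply, Pi.neg_apply, traceMulCLM_apply,
    adjugate_eq_det_smul_inv hA.ne, smul_mul, trace_smul, smul_eq_mul]
  set s := √(-A.det)
  have hs : 0 < s := Real.sqrt_pos.mpr (neg_pos.mpr hA)
  have hdet : A.det = -s ^ 2 := by simp [s, Real.sq_sqrt (neg_pos.mpr hA).le]
  rw [hdet]
  field_simp

/-- The sup norm on matrices is not submultiplicative, so the derivative of `Ring.inverse` in a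
complete normed algebra is transported from the operators on `EuclideanSpace ℝ n`. -/
theorem hasFDerivAt_inv {A : Matrix n n ℝ} (hA : IsUnit A.det) :
    HasFDerivAt (fun K : Matrix n n ℝ => K⁻¹)
      (-(LinearMap.mulLeftRight ℝ (A⁻¹, A⁻¹)).toContinuousLinearMap) A := by
  let Φ : Matrix n n ℝ ≃L[ℝ] (EuclideanSpace ℝ n →L[ℝ] EuclideanSpace ℝ n) :=
    (toEuclideanCLM (n := n) (𝕜 := ℝ)).toAlgEquiv.toLinearEquiv.toContinuousLinearEquiv
  have hΦmul : ∀ K K', Φ (K * K') = Φ K * Φ K' := map_mul (toEuclideanCLM (n := n) (𝕜 := ℝ))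
  have hΦinv : ∀ K, Ring.inverse (Φ K) = Φ K⁻¹ := fun K => by
    rw [nonsing_inv_eq_ringInverse]
    exact ((toEuclideanCLM (n := n) (𝕜 := ℝ)).toMulEquiv.map_ringInverse K).symm
  have hu : IsUnit (Φ A) :=
    ((isUnit_iff_isUnit_det A).mpr hA).map (toEuclideanCLM (n := n) (𝕜 := ℝ))
  have hinv : (fun K : Matrix n n ℝ => K⁻¹) = Φ.symm ∘ Ring.inverse ∘ Φ := by
    funext K
    simp [hΦinv]
  rw [hinv]
  refine ((Φ.symm.hasFDerivAt.comp _ (hasFDerivAt_ringInverse hu.unit)).comp A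
    Φ.hasFDerivAt).congr_fderiv ?_
  ext H : 1
  simp [← Ring.inverse_of_isUnit hu, hΦinv, ← hΦmul]

end Matrix

section ElectromagneticLagrangian

variable {n : Type*} [Fintype n] [DecidableEq n]

/-- `emPairing F G⁻¹ G⁻¹ = F_{αβ} F^{αβ}`, with `F^{αβ} = (G⁻¹ F G⁻¹ᵀ)^{αβ}`. -/
noncomputable def emPairing (F : Matrix n n ℝ) : Matrix n n ℝ →L[ℝ] Matrix n n ℝ →L[ℝ] ℝ :=
  LinearMap.toContinuousBilinearMap <| LinearMap.mk₂ ℝ (fun Y Z => trace (Y * F * Zᵀ * Fᵀ))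
    (fun _ _ _ => by simp [add_mul]) (fun _ _ _ => by simp)
    (fun _ _ _ => by simp [mul_add, add_mul]) (fun _ _ _ => by simp)

@[simp] theorem emPairing_apply (F Y Z : Matrix n n ℝ) :
    emPairing F Y Z = trace (Y * F * Zᵀ * Fᵀ) := rfl

theorem emPairing_comm {F : Matrix n n ℝ} (hF : Fᵀ = -F) (Y Z : Matrix n n ℝ) :
    emPairing F Y Z = emPairing F Z Y := by
  rw [emPairing_apply, emPairing_apply, ← trace_transpose]
  simp only [transpose_mul, transpose_transpose, hF, Matrix.mul_assoc]
  rw [trace_mul_comm]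
  simp [hF, Matrix.mul_assoc]

noncomputable def emLagrangian (F K : Matrix n n ℝ) : ℝ :=
  -(1 / 4) * emPairing F K⁻¹ K⁻¹ * √(-K.det)

noncomputable def emGradient (F G : Matrix n n ℝ) : Matrix n n ℝ :=
  -(√(-G.det) / 8) • (emPairing F G⁻¹ G⁻¹ • G⁻¹ + (4 : ℝ) • (G⁻¹ * F * G⁻¹ᵀ * F * G⁻¹))

theorem hasFDerivAt_emLagrangian {F G : Matrix n n ℝ} (hF : Fᵀ = -F) (hG : G.det < 0) :
    HasFDerivAt (emLagrangian F) (traceMulCLM (emGradient F G)) G := by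
  have hinv := hasFDerivAt_inv hG.ne.isUnit
  have hpair := (emPairing F).hasFDerivAt_of_bilinear hinv hinv
  have hL : emLagrangian F = fun K => -(1 / 4) * (emPairing F K⁻¹ K⁻¹ * √(-K.det)) :=
    funext fun K => mul_assoc _ _ _
  rw [hL]
  refine ((hpair.mul (hasFDerivAt_sqrt_neg_det hG)).const_mul (-(1 / 4))).congr_fderiv ?_
  ext H : 1
  have hsandwich : emPairing F (G⁻¹ * H * G⁻¹) G⁻¹ = -trace (G⁻¹ * F * G⁻¹ᵀ * F * G⁻¹ * H) := by
    rw [emPairing_apply, hF, Matrix.mul_neg, trace_neg, neg_inj,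
      show G⁻¹ * H * G⁻¹ * F * G⁻¹ᵀ * F = (G⁻¹ * H) * (G⁻¹ * F * G⁻¹ᵀ * F) by
        simp only [Matrix.mul_assoc], trace_mul_comm]
    simp only [Matrix.mul_assoc]
  simp only [_root_.smul_apply, _root_.add_apply, _root_.neg_apply, smul_eq_mul, traceMulCLM_apply,
    ContinuousLinearMap.precompR_apply, ContinuousLinearMap.precompL_apply,
    ContinuousLinearMap.compL_apply, ContinuousLinearMap.comp_apply,
    LinearMap.coe_toContinuousLinearMap', LinearMap.mulLeftRight_apply, map_neg,
    emPairing_comm hF G⁻¹ (G⁻¹ * H * G⁻¹), hsandwich, emGradient]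
  simp only [smul_mul, add_mul, trace_add, trace_smul, smul_eq_mul]
  ring

theorem emGradient_transpose {F G : Matrix n n ℝ} (hF : Fᵀ = -F) (hG : G.IsSymm) :
    (emGradient F G)ᵀ = emGradient F G := by
  have hY : G⁻¹ᵀ = G⁻¹ := by rw [transpose_nonsing_inv, hG.eq]
  simp [emGradient, transpose_mul, hY, hF, Matrix.mul_assoc]

theorem emGradient_mul_self {F G : Matrix n n ℝ} (hG : IsUnit G.det) :
    emGradient F G * G
      = -(√(-G.det) / 8) • (emPairing F G⁻¹ G⁻¹ • 1 + (4 : ℝ) • (G⁻¹ * F * G⁻¹ᵀ * F)) := by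
  simp [emGradient, add_mul, Matrix.mul_assoc, nonsing_inv_mul G hG]

theorem emPairing_apply_eq_sum (F Y Z : Matrix n n ℝ) :
    emPairing F Y Z = ∑ α, ∑ β, (Y * F * Zᵀ) α β * F α β := by
  simp [← sum_hadamard_eq, hadamard_apply]

end ElectromagneticLagrangian

/-- SEM tensor density of the electromagnetic field: for the
electromagnetic Lagrangian `L(G) = −¼ G^{μα} G^{νβ} F_{αβ} F_{μν} √(−det G)` with a fixed
antisymmetric `F`, at every symmetric `G` with `det G < 0`, `L` is differentiable with
symmetric gradient and
`2 (∂L/∂G_{μρ}) G_{ρν} = −(¼ δ^μ{}_ν F_{αβ}F^{αβ} + F^{αμ}F_{να}) √(−det G)`. -/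
theorem em_sem_tensor_density
    (F : Matrix (Fin 4) (Fin 4) ℝ) (hF : Fᵀ = -F)
    (L : Matrix (Fin 4) (Fin 4) ℝ → ℝ)
    (hL : ∀ G : Matrix (Fin 4) (Fin 4) ℝ, L G
      = -(1/4) * (∑ μ, ∑ ν, ∑ α, ∑ β, G⁻¹ μ α * G⁻¹ ν β * F α β * F μ ν) *
          Real.sqrt (-G.det))
    (G : Matrix (Fin 4) (Fin 4) ℝ) (hGsymm : G.IsSymm) (hGdet : G.det < 0)
    -- the raised field strength F^{αβ} := (G⁻¹)^{αγ} (G⁻¹)^{βδ} F_{γδ}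
    (Fup : Fin 4 → Fin 4 → ℝ)
    (hFup : ∀ α β, Fup α β = ∑ γ, ∑ δ, G⁻¹ α γ * G⁻¹ β δ * F γ δ) :
    DifferentiableAt ℝ L G ∧
      (∀ μ ν, fderiv ℝ L G (Matrix.single μ ν 1)
        = fderiv ℝ L G (Matrix.single ν μ 1)) ∧
      (∀ μ ν, 2 * ∑ ρ, fderiv ℝ L G (Matrix.single μ ρ 1) * G ρ ν
        = -((1/4) * (if μ = ν then (1:ℝ) else 0) * (∑ α, ∑ β, F α β * Fup α β)
            + ∑ α, Fup α μ * F ν α) * Real.sqrt (-G.det)) := by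
  have hLeq : L = emLagrangian F := funext fun K => by
    simp only [hL, emLagrangian, emPairing_apply_eq_sum, mul_mul_transpose_apply, Finset.sum_mul]
  have hD := hLeq ▸ hasFDerivAt_emLagrangian hF hGdet
  have hpartial : ∀ μ ρ, fderiv ℝ L G (single μ ρ 1) = emGradient F G μ ρ := fun μ ρ => by
    rw [hD.fderiv, traceMulCLM_apply, trace_mul_single, ← transpose_apply (emGradient F G),
      emGradient_transpose hF hGsymm]
    simp
  have hFupY : ∀ α β, Fup α β = (G⁻¹ * F * G⁻¹ᵀ) α β := by simp [hFup, mul_mul_transpose_apply]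
  refine ⟨hD.differentiableAt, fun μ ν => ?_, fun μ ν => ?_⟩
  · rw [hpartial, hpartial, ← transpose_apply (emGradient F G), emGradient_transpose hF hGsymm]
  · have h := congrFun (congrFun (emGradient_mul_self (F := F) hGdet.ne.isUnit) μ) ν
    have hinvariant : ∑ α, ∑ β, F α β * Fup α β = emPairing F G⁻¹ G⁻¹ := by
      simp only [emPairing_apply_eq_sum, hFupY, mul_comm (F _ _)]
    have hraised : (G⁻¹ * F * G⁻¹ᵀ)ᵀ = -(G⁻¹ * F * G⁻¹ᵀ) := by
      simp [transpose_mul, hF, Matrix.mul_assoc]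
    have hcontract : ∑ α, Fup α μ * F ν α = (G⁻¹ * F * G⁻¹ᵀ * F) μ ν := by
      rw [mul_apply]
      refine Finset.sum_congr rfl fun α _ => ?_
      rw [hFupY, ← transpose_apply (G⁻¹ * F * G⁻¹ᵀ), hraised, ← transpose_apply F, hF]
      simp
    simp only [hpartial, ← mul_apply, h, hinvariant, hcontract, Matrix.smul_apply,
      Matrix.add_apply, one_apply, smul_eq_mul]
    ring
end

section
/- Fix integers N ≥ 1 and m ≥ 1 and an open set U ⊆ ℝ^N. Let g : ℝ^N → Matrix N N ℝ be smooth with symmetric invertible values, let η : U → ℝ^N be smooth with Dη(x) invertible for every x ∈ U, and let G(x) := Dη(x)ᵀ g(η(x)) Dη(x). Let L : ℝ^N × ℝ^m × Matrix m N ℝ × Matrix N N ℝ → ℝ be smooth, written L(x, y, v, G), let φ : U → ℝ^m be smooth, and define Λ(x, y, v, u, w) := L(x, y, v, wᵀ g(u) w). Then for every x ∈ U and every index A, the Euler–Lagrange expression for φ^A computed from the parametrized Lagrangian equals that computed from the original Lagrangian along G: (∂Λ/∂y^A)(x, φ(x), Dφ(x), η(x), Dη(x)) − Σ_μ ∂_μ[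 x ↦ (∂Λ/∂v^A{}_μ)(x, φ(x), Dφ(x), η(x), Dη(x)) ] = (∂L/∂y^A)(x, φ(x), Dφ(x), G(x)) − Σ_μ ∂_μ[ x ↦ (∂L/∂v^A{}_μ)(x, φ(x), Dφ(x), G(x)) ]. -/
open Matrix BigOperators

lemma mul_diff {N : ℕ} (g : (Fin N → ℝ) → Matrix (Fin N) (Fin N) ℝ) (hg : ContDiff ℝ (⊤ : ℕ∞) g) :
    Differentiable ℝ (fun p : (Fin N → ℝ) × Matrix (Fin N) (Fin N) ℝ => p.2ᵀ * g p.1 * p.2) := by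
  have hgd : ∀ l k, Differentiable ℝ (fun u => g u l k) := fun l k =>
    differentiable_pi.mp (differentiable_pi.mp (hg.differentiable (by simp)) l) k
  have hw : ∀ l i, Differentiable ℝ
      (fun p : (Fin N → ℝ) × Matrix (Fin N) (Fin N) ℝ => p.2 l i) := fun l i =>
    differentiable_pi.mp (differentiable_pi.mp differentiable_snd l) i
  apply differentiable_pi.mpr; intro i
  apply differentiable_pi.mpr; intro j
  have : (fun p : (Fin N → ℝ) × Matrix (Fin N) (Fin N) ℝ => (p.2ᵀ * g p.1 * p.2) i j)
      = fun p => ∑ k, (∑ l, p.2 l i * g p.1 l k) * p.2 k j := by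
    funext p; simp [Matrix.mul_apply, Matrix.transpose_apply]
  rw [this]
  exact Differentiable.fun_sum fun k _ =>
    (Differentiable.fun_sum fun l _ => (hw l i).mul ((hgd l k).comp differentiable_fst)).mul (hw k j)

lemma key_lemma {N m : ℕ}
    (g : (Fin N → ℝ) → Matrix (Fin N) (Fin N) ℝ) (hg : ContDiff ℝ (⊤ : ℕ∞) g)
    (L : (Fin N → ℝ) × (Fin m → ℝ) × Matrix (Fin m) (Fin N) ℝ × Matrix (Fin N) (Fin N) ℝ → ℝ)
    (hL : ContDiff ℝ (⊤ : ℕ∞) L)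
    (Λ : (Fin N → ℝ) × (Fin m → ℝ) × Matrix (Fin m) (Fin N) ℝ × (Fin N → ℝ)
      × Matrix (Fin N) (Fin N) ℝ → ℝ)
    (hΛ : ∀ x y v u w, Λ (x, y, v, u, w) = L (x, y, v, wᵀ * g u * w))
    (x : Fin N → ℝ) (y : Fin m → ℝ) (v : Matrix (Fin m) (Fin N) ℝ)
    (u : Fin N → ℝ) (w : Matrix (Fin N) (Fin N) ℝ)
    (a : Fin m → ℝ) (b : Matrix (Fin m) (Fin N) ℝ) :
    fderiv ℝ Λ (x, y, v, u, w) (0, a, b, 0, 0)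
      = fderiv ℝ L (x, y, v, wᵀ * g u * w) (0, a, b, 0) := by
  have hΛeq : Λ = fun p => L (p.1, p.2.1, p.2.2.1, p.2.2.2.2ᵀ * g p.2.2.2.1 * p.2.2.2.2) := by
    funext p
    obtain ⟨x, y, v, u, w⟩ := p
    exact hΛ x y v u w
  have hproj : Differentiable ℝ (fun p : (Fin N → ℝ) × (Fin m → ℝ)
      × Matrix (Fin m) (Fin N) ℝ × (Fin N → ℝ) × Matrix (Fin N) (Fin N) ℝ => p.2.2.2) :=
    differentiable_snd.comp (differentiable_snd.comp differentiable_snd)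
  have h4 : Differentiable ℝ (fun p : (Fin N → ℝ) × (Fin m → ℝ)
      × Matrix (Fin m) (Fin N) ℝ × (Fin N → ℝ) × Matrix (Fin N) (Fin N) ℝ =>
      p.2.2.2.2ᵀ * g p.2.2.2.1 * p.2.2.2.2) :=
    (mul_diff g hg).comp hproj
  have hp1 : Differentiable ℝ (fun p : (Fin N → ℝ) × (Fin m → ℝ)
      × Matrix (Fin m) (Fin N) ℝ × (Fin N → ℝ) × Matrix (Fin N) (Fin N) ℝ => p.1) :=
    differentiable_fst
  have hp2 : Differentiable ℝ (fun p : (Fin N → ℝ) × (Fin m → ℝ)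
      × Matrix (Fin m) (Fin N) ℝ × (Fin N → ℝ) × Matrix (Fin N) (Fin N) ℝ => p.2.1) :=
    differentiable_fst.comp differentiable_snd
  have hp3 : Differentiable ℝ (fun p : (Fin N → ℝ) × (Fin m → ℝ)
      × Matrix (Fin m) (Fin N) ℝ × (Fin N → ℝ) × Matrix (Fin N) (Fin N) ℝ => p.2.2.1) :=
    differentiable_fst.comp (differentiable_snd.comp differentiable_snd)
  have hΛdiff : Differentiable ℝ Λ := by
    rw [hΛeq]
    exact (hL.differentiable (by simp)).comp (hp1.prodMk (hp2.prodMk (hp3.prodMk h4)))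
  let J : ((Fin N → ℝ) × (Fin m → ℝ) × Matrix (Fin m) (Fin N) ℝ) →L[ℝ]
      (Fin N → ℝ) × (Fin m → ℝ) × Matrix (Fin m) (Fin N) ℝ × (Fin N → ℝ)
      × Matrix (Fin N) (Fin N) ℝ :=
    LinearMap.toContinuousLinearMap
      { toFun := fun t => (t.1, t.2.1, t.2.2, 0, 0)
        map_add' := by intro s t; simp [Prod.ext_iff]
        map_smul' := by intro c t; simp [Prod.ext_iff] }
  let J' : ((Fin N → ℝ) × (Fin m → ℝ) × Matrix (Fin m) (Fin N) ℝ) →L[ℝ]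
      (Fin N → ℝ) × (Fin m → ℝ) × Matrix (Fin m) (Fin N) ℝ × Matrix (Fin N) (Fin N) ℝ :=
    LinearMap.toContinuousLinearMap
      { toFun := fun t => (t.1, t.2.1, t.2.2, 0)
        map_add' := by intro s t; simp [Prod.ext_iff]
        map_smul' := by intro c t; simp [Prod.ext_iff] }
  have hj : HasFDerivAt (fun t : (Fin N → ℝ) × (Fin m → ℝ) × Matrix (Fin m) (Fin N) ℝ =>
      ((t.1, t.2.1, t.2.2, u, w) : (Fin N → ℝ) × (Fin m → ℝ) × Matrix (Fin m) (Fin N) ℝ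
      × (Fin N → ℝ) × Matrix (Fin N) (Fin N) ℝ)) J (x, y, v) := by
    have h0 := (J.hasFDerivAt (x := (x, y, v))).add_const
      ((0, 0, 0, u, w) : (Fin N → ℝ) × (Fin m → ℝ) × Matrix (Fin m) (Fin N) ℝ × (Fin N → ℝ)
      × Matrix (Fin N) (Fin N) ℝ)
    refine h0.congr_of_eventuallyEq (Filter.Eventually.of_forall fun t => ?_)
    simp [J, Prod.ext_iff]
  have hj' : HasFDerivAt (fun t : (Fin N → ℝ) × (Fin m → ℝ) × Matrix (Fin m) (Fin N) ℝ =>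
      ((t.1, t.2.1, t.2.2, wᵀ * g u * w) : (Fin N → ℝ) × (Fin m → ℝ)
      × Matrix (Fin m) (Fin N) ℝ × Matrix (Fin N) (Fin N) ℝ)) J' (x, y, v) := by
    have h0 := (J'.hasFDerivAt (x := (x, y, v))).add_const
      ((0, 0, 0, wᵀ * g u * w) : (Fin N → ℝ) × (Fin m → ℝ) × Matrix (Fin m) (Fin N) ℝ
      × Matrix (Fin N) (Fin N) ℝ)
    refine h0.congr_of_eventuallyEq (Filter.Eventually.of_forall fun t => ?_)
    simp [J', Prod.ext_iff]
  have h1 : HasFDerivAt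
      (fun t : (Fin N → ℝ) × (Fin m → ℝ) × Matrix (Fin m) (Fin N) ℝ =>
        Λ (t.1, t.2.1, t.2.2, u, w))
      ((fderiv ℝ Λ (x, y, v, u, w)).comp J) (x, y, v) :=
    ((hΛdiff (x, y, v, u, w)).hasFDerivAt).comp (x, y, v) hj
  have h2 : HasFDerivAt
      (fun t : (Fin N → ℝ) × (Fin m → ℝ) × Matrix (Fin m) (Fin N) ℝ =>
        L (t.1, t.2.1, t.2.2, wᵀ * g u * w))
      ((fderiv ℝ L (x, y, v, wᵀ * g u * w)).comp J') (x, y, v) :=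
    (((hL.differentiable (by simp)) (x, y, v, wᵀ * g u * w)).hasFDerivAt).comp (x, y, v) hj'
  have heqfun : (fun t : (Fin N → ℝ) × (Fin m → ℝ) × Matrix (Fin m) (Fin N) ℝ =>
      Λ (t.1, t.2.1, t.2.2, u, w))
      = fun t => L (t.1, t.2.1, t.2.2, wᵀ * g u * w) := by
    funext t; exact hΛ _ _ _ _ _
  rw [heqfun] at h1
  have heq := h1.unique h2
  have happ := congrFun (congrArg (fun T : ((Fin N → ℝ) × (Fin m → ℝ)
      × Matrix (Fin m) (Fin N) ℝ) →L[ℝ] ℝ => (T : _ → ℝ)) heq) (0, a, b)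
  simpa [J, J', Prod.ext_iff] using happ

/-- the Euler–Lagrange expressions for the matter fields `φ^A` computed
from the parametrized Lagrangian `Λ(x, y, v, u, w) := L(x, y, v, wᵀ g(u) w)` coincide with
those computed from the original Lagrangian `L` along `G = η*g`; the parametrized system is
physically equivalent to the original one. -/
theorem matter_euler_lagrange_unchanged
    {N m : ℕ} (hN : 1 ≤ N) (hm : 1 ≤ m)
    (U : Set (Fin N → ℝ)) (hU : IsOpen U)
    -- the fiber metric g, smooth with symmetric invertible values
    (g : (Fin N → ℝ) → Matrix (Fin N) (Fin N) ℝ) (hgsmooth : ContDiff ℝ (⊤ : ℕ∞) g)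
    (hgsymm : ∀ u, (g u).IsSymm) (hginv : ∀ u, IsUnit (g u).det)
    -- the covariance field η, smooth on U with invertible Jacobian
    (η : (Fin N → ℝ) → (Fin N → ℝ)) (hη : ContDiffOn ℝ (⊤ : ℕ∞) η U)
    (hηjac : ∀ x ∈ U, IsUnit (jac η x).det)
    -- the pulled-back metric G = η*g
    (G : (Fin N → ℝ) → Matrix (Fin N) (Fin N) ℝ)
    (hG : ∀ x, G x = (jac η x)ᵀ * g (η x) * jac η x)
    -- the Lagrangian L(x, y, v, G), smooth
    (L : (Fin N → ℝ) × (Fin m → ℝ) × Matrix (Fin m) (Fin N) ℝ × Matrix (Fin N) (Fin N) ℝ → ℝ)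
    (hL : ContDiff ℝ (⊤ : ℕ∞) L)
    -- the matter fields φ, smooth on U
    (φ : (Fin N → ℝ) → (Fin m → ℝ)) (hφ : ContDiffOn ℝ (⊤ : ℕ∞) φ U)
    -- the parametrized Lagrangian Λ(x, y, v, u, w) := L(x, y, v, wᵀ g(u) w)
    (Λ : (Fin N → ℝ) × (Fin m → ℝ) × Matrix (Fin m) (Fin N) ℝ × (Fin N → ℝ)
      × Matrix (Fin N) (Fin N) ℝ → ℝ)
    (hΛ : ∀ x y v u w, Λ (x, y, v, u, w) = L (x, y, v, wᵀ * g u * w)) :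
    ∀ x ∈ U, ∀ A,
      fderiv ℝ Λ (x, φ x, jac φ x, η x, jac η x) (0, Pi.single A 1, 0, 0, 0)
        - ∑ μ, pd (fun x' => fderiv ℝ Λ (x', φ x', jac φ x', η x', jac η x')
            (0, 0, Matrix.single A μ 1, 0, 0)) μ x
      = fderiv ℝ L (x, φ x, jac φ x, G x) (0, Pi.single A 1, 0, 0)
        - ∑ μ, pd (fun x' => fderiv ℝ L (x', φ x', jac φ x', G x')
            (0, 0, Matrix.single A μ 1, 0)) μ x := by
  intro x hx A
  have hfun : ∀ μ, (fun x' => fderiv ℝ Λ (x', φ x', jac φ x', η x', jac η x')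
        (0, 0, Matrix.single A μ 1, 0, 0))
      = fun x' => fderiv ℝ L (x', φ x', jac φ x', G x')
        (0, 0, Matrix.single A μ 1, 0) := by
    intro μ; funext x'
    rw [hG x']
    exact key_lemma g hgsmooth L hL Λ hΛ x' (φ x') (jac φ x') (η x') (jac η x') 0
      (Matrix.single A μ 1)
  have h1 := key_lemma g hgsmooth L hL Λ hΛ x (φ x) (jac φ x) (η x) (jac η x)
    (Pi.single A 1) 0
  rw [← hG x] at h1
  rw [h1]
  congr 1
  exact Finset.sum_congr rfl fun μ _ => by rw [hfun μ]
end
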